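/- arXiv:2007.13539 — 8 statements merged into one kernel-verified Lean document; each statement's English description precedes it below -/
import Mathlib

section
/- Let γ : ℝ → ℂ be 2π-periodic and continuously differentiable with deriv γ t ≠ 0 for all t, let φ̃ : ℝ → ℂ be continuous and 2π-periodic, let P be a polynomial with complex coefficients, and let n ≥ 1. Then for every z ∈ ℂ with z ∉ γ(ℝ), (n!/(2πi)) ∫₀^{2π} φ̃(t)·γ'(t)/(γ(t) − z)^{n+1} dt = (n!/(2πi)) ∫₀^{2π} (φ̃(t) − P(γ(t)))·γ'(t)/(γ(t) − z)^{n+1} dt + w(z)·P^{(n)}(z), where P^{(n)} denotes the n-th derivative of the polynomial P and w(z) := (1/(2πi)) ∫₀^{2π} γ'(t)/(γ(t) − z) dt. (Equation (2.12) of the paper: the regularized representation of the n-th derivative of the Cauchy integral operator, with the winding factor w(z) replacing the indicator function 1_Ω(z).) -/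
open intervalIntegral Real

/-- Integral of `γ' ⬝ (γ - z)^m` over a period vanishes when `m ≠ -1`. -/
lemma zpow_period_integral_zero
    (γ : ℝ → ℂ) (hper : Function.Periodic γ (2 * π))
    (hγ : ContDiff ℝ 1 γ) (z : ℂ) (hgz : ∀ t, γ t - z ≠ 0)
    (m : ℤ) (hm : m ≠ -1) :
    (∫ t in (0:ℝ)..(2 * π), deriv γ t * (γ t - z) ^ m) = 0 := by
  have hγ' : Continuous (deriv γ) := hγ.continuous_deriv le_rfl
  have hγc : Continuous γ := hγ.continuous
  have hm1 : (m : ℂ) + 1 ≠ 0 := by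
    intro h
    apply hm
    have : ((m + 1 : ℤ) : ℂ) = 0 := by push_cast; linear_combination h
    have := Int.cast_injective (α := ℂ) (this.trans (Int.cast_zero).symm)
    omega
  set F : ℝ → ℂ := fun t => (γ t - z) ^ (m + 1) / ((m : ℂ) + 1) with hF
  have hderiv : ∀ t ∈ Set.uIcc (0:ℝ) (2 * π),
      HasDerivAt F (deriv γ t * (γ t - z) ^ m) t := by
    intro t _
    have hγd : HasDerivAt γ (deriv γ t) t :=
      ((hγ.differentiable one_ne_zero) t).hasDerivAt
    have hγd' : HasDerivAt (fun s => γ s - z) (deriv γ t) t := hγd.sub_const z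
    have hz1 : HasDerivAt (fun w : ℂ => w ^ (m + 1))
        (((m : ℂ) + 1) * (γ t - z) ^ m) (γ t - z) := by
      have := hasDerivAt_zpow (m + 1) (γ t - z) (Or.inl (hgz t))
      simpa [add_sub_cancel_right] using this
    have := (hz1.comp t hγd').div_const ((m : ℂ) + 1)
    have h2 : ((m : ℂ) + 1) * (γ t - z) ^ m * deriv γ t / ((m : ℂ) + 1)
        = deriv γ t * (γ t - z) ^ m := by
      field_simp
    simpa [hF, h2] using this
  have hint : IntervalIntegrable (fun t => deriv γ t * (γ t - z) ^ m)
      MeasureTheory.volume 0 (2 * π) :=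
    (hγ'.mul ((hγc.sub continuous_const).zpow₀ m (fun t => Or.inl (hgz t)))).intervalIntegrable _ _
  have := intervalIntegral.integral_eq_sub_of_hasDerivAt hderiv hint
  rw [this]
  have hp : γ (2 * π) = γ 0 := by simpa using hper 0
  simp [hF, hp]

/-- **Regularized representation of the n-th derivative of the Cauchy integral operator**
(equation (2.12) of the paper), with the winding factor
`w z = (1/(2πi)) ∫₀^{2π} γ'(t)/(γ(t) − z) dt` replacing the indicator `1_Ω(z)`. -/
theorem cauchy_operator_deriv_regularized
    (γ : ℝ → ℂ) (hper : Function.Periodic γ (2 * π))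
    (hγ : ContDiff ℝ 1 γ) (hreg : ∀ t : ℝ, deriv γ t ≠ 0)
    (φ : ℝ → ℂ) (hφc : Continuous φ) (hφper : Function.Periodic φ (2 * π))
    (P : Polynomial ℂ) (n : ℕ) (hn : 1 ≤ n) (z : ℂ) (hz : z ∉ Set.range γ) :
    ((n.factorial : ℂ) / (2 * (π : ℂ) * Complex.I)) *
        ∫ t in (0:ℝ)..(2 * π), φ t * deriv γ t / (γ t - z) ^ (n + 1)
      = ((n.factorial : ℂ) / (2 * (π : ℂ) * Complex.I)) *
          (∫ t in (0:ℝ)..(2 * π), (φ t - P.eval (γ t)) * deriv γ t / (γ t - z) ^ (n + 1))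
        + ((1 / (2 * (π : ℂ) * Complex.I)) *
            ∫ t in (0:ℝ)..(2 * π), deriv γ t / (γ t - z)) *
          (Polynomial.derivative^[n] P).eval z := by
  have hgz : ∀ t, γ t - z ≠ 0 := by
    intro t h
    exact hz ⟨t, by linear_combination h⟩
  have hγ' : Continuous (deriv γ) := hγ.continuous_deriv le_rfl
  have hγc : Continuous γ := hγ.continuous
  have hpowne : ∀ t, (γ t - z) ^ (n + 1) ≠ 0 := fun t => pow_ne_zero _ (hgz t)
  -- integrability of the main pieces
  have hintφ : IntervalIntegrable (fun t => φ t * deriv γ t / (γ t - z) ^ (n + 1))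
      MeasureTheory.volume 0 (2 * π) :=
    ((hφc.mul hγ').div ((hγc.sub continuous_const).pow _) hpowne).intervalIntegrable _ _
  have hintP : IntervalIntegrable (fun t => P.eval (γ t) * deriv γ t / (γ t - z) ^ (n + 1))
      MeasureTheory.volume 0 (2 * π) :=
    (((P.continuous_aeval.comp hγc).mul hγ').div
      ((hγc.sub continuous_const).pow _) hpowne).intervalIntegrable _ _
  -- Taylor expansion of P about z
  set N := max (P.natDegree + 1) (n + 1) with hN
  set c : ℕ → ℂ := fun k => (Polynomial.taylor z P).coeff k with hc
  have htaylor : ∀ w : ℂ, P.eval w = ∑ k ∈ Finset.range N, c k * (w - z) ^ k := by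
    intro w
    have h1 : (Polynomial.taylor z P).eval (w - z) = P.eval w := by
      rw [Polynomial.taylor_eval]; ring_nf
    have hdeg : (Polynomial.taylor z P).natDegree < N := by
      calc (Polynomial.taylor z P).natDegree = P.natDegree := Polynomial.natDegree_taylor P z
        _ < N := lt_of_lt_of_le (Nat.lt_succ_self _) (le_max_left _ _)
    rw [← h1, Polynomial.eval_eq_sum_range' hdeg]
  -- the integral of the P-part
  have key : (∫ t in (0:ℝ)..(2 * π), P.eval (γ t) * deriv γ t / (γ t - z) ^ (n + 1))
      = c n * ∫ t in (0:ℝ)..(2 * π), deriv γ t / (γ t - z) := by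
    have hrw : ∀ t : ℝ, P.eval (γ t) * deriv γ t / (γ t - z) ^ (n + 1)
        = ∑ k ∈ Finset.range N, c k * (deriv γ t * (γ t - z) ^ ((k : ℤ) - (n + 1))) := by
      intro t
      rw [htaylor (γ t), Finset.sum_mul, Finset.sum_div]
      refine Finset.sum_congr rfl fun k _ => ?_
      rw [show ((k : ℤ) - (n + 1)) = (k : ℤ) - ((n + 1 : ℕ) : ℤ) by push_cast; ring,
        zpow_sub₀ (hgz t), zpow_natCast, zpow_natCast]
      field_simp
    rw [intervalIntegral.integral_congr (fun t _ => hrw t)]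
    rw [intervalIntegral.integral_finset_sum]
    · have hzero : ∀ k ∈ Finset.range N, k ≠ n →
          (∫ t in (0:ℝ)..(2 * π), c k * (deriv γ t * (γ t - z) ^ ((k : ℤ) - (n + 1)))) = 0 := by
        intro k _ hk
        rw [intervalIntegral.integral_const_mul,
          zpow_period_integral_zero γ hper hγ z hgz _ (by omega)]
        ring
      rw [Finset.sum_eq_single_of_mem n (Finset.mem_range.mpr (lt_of_lt_of_le (Nat.lt_succ_self n) (le_max_right _ _))) hzero]
      rw [intervalIntegral.integral_const_mul]
      congr 1
      refine intervalIntegral.integral_congr fun t _ => ?_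
      have : ((n : ℤ) - (n + 1)) = -1 := by ring
      rw [this, zpow_neg_one]
      field_simp
    · intro k _
      exact (continuous_const.mul (hγ'.mul
        ((hγc.sub continuous_const).zpow₀ _ (fun t => Or.inl (hgz t))))).intervalIntegrable _ _
  -- relate c n to the n-th derivative
  have hcn : (n.factorial : ℂ) * c n = (Polynomial.derivative^[n] P).eval z := by
    have h1 := congrFun (Polynomial.factorial_smul_hasseDeriv (R := ℂ) n) P
    have h2 : c n = (Polynomial.hasseDeriv n P).eval z := Polynomial.taylor_coeff z P n
    rw [h2, ← h1]
    simp [Polynomial.eval_smul, nsmul_eq_mul, mul_comm]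
  -- split the difference integral
  have hsplit : (∫ t in (0:ℝ)..(2 * π), (φ t - P.eval (γ t)) * deriv γ t / (γ t - z) ^ (n + 1))
      = (∫ t in (0:ℝ)..(2 * π), φ t * deriv γ t / (γ t - z) ^ (n + 1))
        - ∫ t in (0:ℝ)..(2 * π), P.eval (γ t) * deriv γ t / (γ t - z) ^ (n + 1) := by
    rw [← intervalIntegral.integral_sub hintφ hintP]
    refine intervalIntegral.integral_congr fun t _ => ?_
    ring
  rw [hsplit, key]
  have hπI : (2 * (π : ℂ) * Complex.I) ≠ 0 :=
    mul_ne_zero (mul_ne_zero two_ne_zero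
      (Complex.ofReal_ne_zero.mpr Real.pi_ne_zero)) Complex.I_ne_zero
  field_simp
  linear_combination (∫ t in (0:ℝ)..(2 * π), deriv γ t / (γ t - z)) * hcn
end

section
/- Let N ≥ 0 be a natural number, t₀ ∈ ℝ, and let γ : ℝ → ℂ and φ̃ : ℝ → ℂ be N-times continuously differentiable in a neighborhood of t₀ with deriv γ t₀ ≠ 0, and set z₀ = γ(t₀). Then there exist unique coefficients c₀, c₁, …, c_N ∈ ℂ such that the polynomial P(z) = Σ_{j=0}^{N} (c_j/j!)·(z − z₀)^j satisfies the interpolation conditions iteratedDeriv m (fun τ => φ̃(τ) − P(γ(τ))) t₀ = 0 for all m = 0, 1, …, N. (Existence and uniqueness of the N-th order density interpolant, Section 2 of the paper.) -/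
open Real

open Topology Filter

lemma to_open {n : ℕ} {f : ℝ → ℂ} {x : ℝ} (h : ContDiffAt ℝ n f x) :
    ∃ t : Set ℝ, IsOpen t ∧ x ∈ t ∧ ContDiffOn ℝ n f t := by
  obtain ⟨u, hu, hfu⟩ := h.contDiffOn le_rfl (by simp)
  obtain ⟨t, hts, ho, hx⟩ := mem_nhds_iff.mp hu
  exact ⟨t, ho, hx, hfu.mono hts⟩

lemma itdw_open {n : ℕ} {f : ℝ → ℂ} {s : Set ℝ} (hs : IsOpen s) {x : ℝ} (hx : x ∈ s) :
    iteratedDerivWithin n f s x = iteratedDeriv n f x := by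
  rw [iteratedDerivWithin_eq_iteratedFDerivWithin, iteratedFDerivWithin_of_isOpen n hs hx,
    iteratedDeriv_eq_iteratedFDeriv]

lemma contDiffAt_deriv' {m : ℕ} {u : ℝ → ℂ} {x : ℝ} (h : ContDiffAt ℝ (m+1) u x) :
    ContDiffAt ℝ m (deriv u) x := by
  obtain ⟨t, ho, hx, hct⟩ := to_open (by exact_mod_cast h)
  have := hct.deriv_of_isOpen ho (le_refl ((m : WithTop ℕ∞)+1))
  exact this.contDiffAt (ho.mem_nhds hx)

lemma hasDerivAt_pow_comp {g : ℝ → ℂ} {y : ℝ} (h : DifferentiableAt ℝ g y) (k : ℕ) :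
    HasDerivAt (fun t => g t ^ k) ((k : ℂ) * g y ^ (k - 1) * deriv g y) y := by
  have := HasDerivAt.comp (h₂ := fun z : ℂ => z ^ k) (x := y)
    (hasDerivAt_pow k (g y)) h.hasDerivAt
  simpa [Function.comp_def] using this

lemma itd_add {n : ℕ} {f g : ℝ → ℂ} {x : ℝ} (hf : ContDiffAt ℝ n f x)
    (hg : ContDiffAt ℝ n g x) :
    iteratedDeriv n (fun t => f t + g t) x = iteratedDeriv n f x + iteratedDeriv n g x := by
  obtain ⟨t, ho, hx, hft⟩ := to_open hf
  obtain ⟨s, so, hxs, hgs⟩ := to_open hg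
  have hu : IsOpen (t ∩ s) := ho.inter so
  have hxu : x ∈ t ∩ s := ⟨hx, hxs⟩
  rw [← itdw_open hu hxu, ← itdw_open hu hxu (f := f), ← itdw_open hu hxu (f := g)]
  exact iteratedDerivWithin_add hxu hu.uniqueDiffOn
    (hft.mono Set.inter_subset_left x hxu) (hgs.mono Set.inter_subset_right x hxu)

lemma itd_const_mul {n : ℕ} (c : ℂ) {f : ℝ → ℂ} {x : ℝ} (hf : ContDiffAt ℝ n f x) :
    iteratedDeriv n (fun t => c * f t) x = c * iteratedDeriv n f x := by
  obtain ⟨t, ho, hx, hft⟩ := to_open hf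
  rw [← itdw_open ho hx, ← itdw_open ho hx (f := f)]
  simpa [smul_eq_mul] using
    iteratedDerivWithin_const_smul (R := ℂ) hx ho.uniqueDiffOn c hft

lemma itd_sub {n : ℕ} {f g : ℝ → ℂ} {x : ℝ} (hf : ContDiffAt ℝ n f x)
    (hg : ContDiffAt ℝ n g x) :
    iteratedDeriv n (fun t => f t - g t) x = iteratedDeriv n f x - iteratedDeriv n g x := by
  obtain ⟨t, ho, hx, hft⟩ := to_open hf
  obtain ⟨s, so, hxs, hgs⟩ := to_open hg
  have hu : IsOpen (t ∩ s) := ho.inter so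
  have hxu : x ∈ t ∩ s := ⟨hx, hxs⟩
  rw [← itdw_open hu hxu, ← itdw_open hu hxu (f := f), ← itdw_open hu hxu (f := g)]
  exact iteratedDerivWithin_sub hxu hu.uniqueDiffOn
    (hft.mono Set.inter_subset_left x hxu) (hgs.mono Set.inter_subset_right x hxu)

lemma itd_sum {n : ℕ} {ι : Type*} (s : Finset ι) (f : ι → ℝ → ℂ) {x : ℝ}
    (h : ∀ i ∈ s, ContDiffAt ℝ n (f i) x) :
    iteratedDeriv n (fun t => ∑ i ∈ s, f i t) x = ∑ i ∈ s, iteratedDeriv n (f i) x := by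
  classical
  induction s using Finset.induction_on with
  | empty =>
    simp only [Finset.sum_empty]
    induction n with
    | zero => simp [iteratedDeriv_zero]
    | succ n ihn => rw [iteratedDeriv_succ']; simpa [deriv_const'] using ihn
  | insert a s' hns ih =>
    have hsum : ContDiffAt ℝ n (fun t => ∑ i ∈ s', f i t) x := by
      apply ContDiffAt.sum
      intro i hi; exact h i (Finset.mem_insert_of_mem hi)
    rw [Finset.sum_insert hns]
    simp_rw [Finset.sum_insert hns]
    rw [itd_add (h a (Finset.mem_insert_self a s')) hsum, ih (fun i hi => h i (Finset.mem_insert_of_mem hi))]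

/-- Key vanishing lemma. -/
lemma key_vanish {g : ℝ → ℂ} {x : ℝ} (hgx : g x = 0) :
    ∀ (m : ℕ) (u : ℝ → ℂ) (k : ℕ), ContDiffAt ℝ m g x → ContDiffAt ℝ m u x → m ≤ k →
      (m < k ∨ u x = 0) → iteratedDeriv m (fun t => u t * g t ^ k) x = 0 := by
  intro m
  induction m with
  | zero =>
    intro u k _ _ _ hor
    rcases hor with hk | hu
    · simp [iteratedDeriv_zero, hgx, zero_pow (Nat.pos_iff_ne_zero.mp hk)]
    · simp [iteratedDeriv_zero, hu]
  | succ m IH =>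
    intro u k hg hu hk hor
    have hk1 : 1 ≤ k := le_trans (Nat.succ_le_succ (Nat.zero_le m)) hk
    -- eventual differentiability
    have hge : ∀ᶠ y in 𝓝 x, DifferentiableAt ℝ g y := by
      filter_upwards [hg.eventually (by simp)] with y hy
      exact hy.differentiableAt (by simp)
    have hue : ∀ᶠ y in 𝓝 x, DifferentiableAt ℝ u y := by
      filter_upwards [hu.eventually (by simp)] with y hy
      exact hy.differentiableAt (by simp)
    have hder : (deriv fun t => u t * g t ^ k) =ᶠ[𝓝 x]
        fun t => deriv u t * g t ^ k + ((k : ℂ) * u t * deriv g t) * g t ^ (k - 1) := by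
      filter_upwards [hge, hue] with y hgy huy
      rw [deriv_fun_mul huy ((hasDerivAt_pow_comp hgy k).differentiableAt),
        (hasDerivAt_pow_comp hgy k).deriv]
      ring
    rw [iteratedDeriv_succ', hder.iteratedDeriv_eq m]
    have hgm : ContDiffAt ℝ m g x := hg.of_le (by exact_mod_cast Nat.le_succ m)
    have hum : ContDiffAt ℝ m u x := hu.of_le (by exact_mod_cast Nat.le_succ m)
    have hu' : ContDiffAt ℝ m (deriv u) x := contDiffAt_deriv' hu
    have hg' : ContDiffAt ℝ m (deriv g) x := contDiffAt_deriv' hg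
    have t1 : ContDiffAt ℝ m (fun t => deriv u t * g t ^ k) x := hu'.mul (hgm.pow k)
    have t2 : ContDiffAt ℝ m (fun t => ((k : ℂ) * u t * deriv g t) * g t ^ (k - 1)) x :=
      ((contDiffAt_const.mul hum).mul hg').mul (hgm.pow (k - 1))
    rw [itd_add t1 t2]
    have e1 : iteratedDeriv m (fun t => deriv u t * g t ^ k) x = 0 :=
      IH (deriv u) k hgm hu' (le_trans (Nat.le_succ m) hk) (Or.inl (lt_of_lt_of_le (Nat.lt_succ_self m) hk))
    have e2' : iteratedDeriv m (fun t => ((k : ℂ) * u t * deriv g t) * g t ^ (k - 1)) x = 0 := by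
      apply IH _ (k - 1) hgm ((contDiffAt_const.mul hum).mul hg')
      · omega
      · rcases hor with hlt | hux
        · left; omega
        · right; simp [hux]
    rw [e1, e2', add_zero]

/-- Diagonal lemma. -/
lemma diag_val {g : ℝ → ℂ} {x : ℝ} (hgx : g x = 0) :
    ∀ m : ℕ, ContDiffAt ℝ m g x →
      iteratedDeriv m (fun t => g t ^ m) x = (m.factorial : ℂ) * (deriv g x) ^ m := by
  intro m
  induction m with
  | zero => simp [iteratedDeriv_zero]
  | succ m IH =>
    intro hg
    have hge : ∀ᶠ y in 𝓝 x, DifferentiableAt ℝ g y := by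
      filter_upwards [hg.eventually (by simp)] with y hy
      exact hy.differentiableAt (by simp)
    have hgm : ContDiffAt ℝ m g x := hg.of_le (by exact_mod_cast Nat.le_succ m)
    have hg' : ContDiffAt ℝ m (deriv g) x := contDiffAt_deriv' hg
    have hder : (deriv fun t => g t ^ (m+1)) =ᶠ[𝓝 x]
        fun t => ((m+1 : ℕ) : ℂ) * deriv g x * g t ^ m
          + (((m+1 : ℕ) : ℂ) * (deriv g t - deriv g x)) * g t ^ m := by
      filter_upwards [hge] with y hgy
      rw [(hasDerivAt_pow_comp hgy (m+1)).deriv]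
      push_cast
      ring
    rw [iteratedDeriv_succ', hder.iteratedDeriv_eq m]
    have t1 : ContDiffAt ℝ m (fun t => ((m+1 : ℕ) : ℂ) * deriv g x * g t ^ m) x :=
      contDiffAt_const.mul (hgm.pow m)
    have t2 : ContDiffAt ℝ m
        (fun t => (((m+1 : ℕ) : ℂ) * (deriv g t - deriv g x)) * g t ^ m) x :=
      (contDiffAt_const.mul (hg'.sub contDiffAt_const)).mul (hgm.pow m)
    rw [itd_add t1 t2]
    have e2 : iteratedDeriv m
        (fun t => (((m+1 : ℕ) : ℂ) * (deriv g t - deriv g x)) * g t ^ m) x = 0 := by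
      apply key_vanish hgx m _ m hgm (contDiffAt_const.mul (hg'.sub contDiffAt_const)) le_rfl
      right; simp
    have e1 : iteratedDeriv m (fun t => ((m+1 : ℕ) : ℂ) * deriv g x * g t ^ m) x
        = ((m+1 : ℕ) : ℂ) * deriv g x * ((m.factorial : ℂ) * (deriv g x) ^ m) := by
      rw [itd_const_mul _ (hgm.pow m), IH hgm]
    rw [e1, e2, add_zero, Nat.factorial_succ]
    push_cast
    ring


/-- **Existence and uniqueness of the N-th order density interpolant**
(Section 2 of the paper): there exist unique coefficients `c₀,…,c_N` such that
`P(z) = Σ_{j=0}^{N} (c_j/j!)(z − z₀)^j` matches `φ̃` along the curve together with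
its first `N` derivatives at `t₀`. -/
theorem density_interpolant_exists_unique
    (N : ℕ) (t₀ : ℝ) (γ : ℝ → ℂ) (φ : ℝ → ℂ)
    (hγ : ContDiffAt ℝ N γ t₀) (hφ : ContDiffAt ℝ N φ t₀)
    (hreg : deriv γ t₀ ≠ 0) :
    ∃! c : Fin (N + 1) → ℂ,
      ∀ m : ℕ, m ≤ N →
        iteratedDeriv m
          (fun τ : ℝ => φ τ -
            ∑ j : Fin (N + 1), c j / ((j : ℕ).factorial : ℂ) * (γ τ - γ t₀) ^ (j : ℕ))
          t₀ = 0 := by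
  have hgx : (fun τ : ℝ => γ τ - γ t₀) t₀ = 0 := by simp
  have hgC : ∀ m : ℕ, m ≤ N → ContDiffAt ℝ m (fun τ : ℝ => γ τ - γ t₀) t₀ := fun m hm =>
    (hγ.of_le (by exact_mod_cast hm)).sub contDiffAt_const
  have hdg : deriv (fun τ : ℝ => γ τ - γ t₀) t₀ = deriv γ t₀ := by
    simp [deriv_sub_const]
  set A : ℕ → ℕ → ℂ := fun m j => iteratedDeriv m (fun τ => (γ τ - γ t₀) ^ j) t₀ with hA
  have hA0 : ∀ m j : ℕ, m ≤ N → m < j → A m j = 0 := by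
    intro m j hm hmj
    have := key_vanish (g := fun τ : ℝ => γ τ - γ t₀) hgx m (fun _ => 1) j
      (hgC m hm) contDiffAt_const (le_of_lt hmj) (Or.inl hmj)
    simpa using this
  have hAd : ∀ m : ℕ, m ≤ N → A m m = (m.factorial : ℂ) * (deriv γ t₀) ^ m := by
    intro m hm
    have := diag_val (g := fun τ : ℝ => γ τ - γ t₀) hgx m (hgC m hm)
    rw [hdg] at this
    simpa using this
  set M : Matrix (Fin (N+1)) (Fin (N+1)) ℂ :=
    fun m j => A m j / ((j : ℕ).factorial : ℂ) with hM
  set v : Fin (N+1) → ℂ := fun m => iteratedDeriv (m : ℕ) φ t₀ with hv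
  have hcomp : ∀ (c : Fin (N+1) → ℂ) (m : ℕ), m ≤ N →
      iteratedDeriv m
        (fun τ : ℝ => φ τ -
          ∑ j : Fin (N + 1), c j / ((j : ℕ).factorial : ℂ) * (γ τ - γ t₀) ^ (j : ℕ)) t₀
      = iteratedDeriv m φ t₀
        - ∑ j : Fin (N + 1), c j / ((j : ℕ).factorial : ℂ) * A m (j : ℕ) := by
    intro c m hm
    have hφm : ContDiffAt ℝ m φ t₀ := hφ.of_le (by exact_mod_cast hm)
    have hterm : ∀ j : Fin (N+1),
        ContDiffAt ℝ m (fun τ : ℝ => c j / ((j : ℕ).factorial : ℂ) * (γ τ - γ t₀) ^ (j : ℕ)) t₀ :=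
      fun j => contDiffAt_const.mul ((hgC m hm).pow _)
    have hsumC : ContDiffAt ℝ m
        (fun τ : ℝ => ∑ j : Fin (N + 1),
          c j / ((j : ℕ).factorial : ℂ) * (γ τ - γ t₀) ^ (j : ℕ)) t₀ :=
      ContDiffAt.sum fun j _ => hterm j
    rw [itd_sub hφm hsumC, itd_sum Finset.univ _ (fun j _ => hterm j)]
    congr 1
    apply Finset.sum_congr rfl
    intro j _
    rw [itd_const_mul _ ((hgC m hm).pow _)]
  have hsum_eq : ∀ (c : Fin (N+1) → ℂ) (m : Fin (N+1)),
      M.mulVec c m = ∑ j : Fin (N + 1), c j / ((j : ℕ).factorial : ℂ) * A (m : ℕ) (j : ℕ) := by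
    intro c m
    simp only [Matrix.mulVec, dotProduct, hM]
    apply Finset.sum_congr rfl
    intro j _
    ring
  have hiff : ∀ c : Fin (N+1) → ℂ,
      (∀ m : ℕ, m ≤ N →
        iteratedDeriv m
          (fun τ : ℝ => φ τ -
            ∑ j : Fin (N + 1), c j / ((j : ℕ).factorial : ℂ) * (γ τ - γ t₀) ^ (j : ℕ))
          t₀ = 0) ↔ M.mulVec c = v := by
    intro c
    constructor
    · intro h
      funext m
      have h1 := h (m : ℕ) (Fin.is_le m)
      rw [hcomp c (m : ℕ) (Fin.is_le m)] at h1
      rw [hsum_eq]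
      exact (sub_eq_zero.mp h1).symm
    · intro h m hm
      rw [hcomp c m hm]
      have h1 := congrFun h (⟨m, by omega⟩ : Fin (N+1))
      rw [hsum_eq] at h1
      simp only [Fin.val_mk] at h1
      rw [sub_eq_zero]
      exact h1.symm
  have htri : M.BlockTriangular OrderDual.toDual := by
    intro i j hij
    have hij2 : (i : ℕ) < (j : ℕ) := hij
    simp only [hM]
    rw [hA0 (i : ℕ) (j : ℕ) (Fin.is_le i) hij2, zero_div]
  have hdiag : ∀ i : Fin (N+1), M i i = (deriv γ t₀) ^ (i : ℕ) := by
    intro i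
    simp only [hM]
    rw [hAd (i : ℕ) (Fin.is_le i), mul_comm, mul_div_assoc,
      div_self (by exact_mod_cast (i : ℕ).factorial_ne_zero), mul_one]
  have hdet : IsUnit M.det := by
    rw [Matrix.det_of_lowerTriangular M htri]
    have : ∏ i : Fin (N+1), M i i = ∏ i : Fin (N+1), (deriv γ t₀) ^ (i : ℕ) :=
      Finset.prod_congr rfl fun i _ => hdiag i
    rw [this]
    exact IsUnit.mk0 _ (Finset.prod_ne_zero_iff.mpr fun i _ => pow_ne_zero _ hreg)
  refine ⟨M⁻¹.mulVec v, (hiff _).mpr ?_, fun c hc => ?_⟩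
  · rw [Matrix.mulVec_mulVec, Matrix.mul_nonsing_inv M hdet, Matrix.one_mulVec]
  · have h1 := (hiff c).mp hc
    calc c = (M⁻¹ * M).mulVec c := by
            rw [Matrix.nonsing_inv_mul M hdet, Matrix.one_mulVec]
      _ = M⁻¹.mulVec (M.mulVec c) := (Matrix.mulVec_mulVec _ _ _).symm
      _ = M⁻¹.mulVec v := by rw [h1]
end

section
/- Let N ≥ 0 be a natural number, let U ⊆ ℝ be an open neighborhood of t₀ ∈ ℝ, and let γ : ℝ → ℂ and φ̃ : ℝ → ℂ be N-times continuously differentiable on U with deriv γ t ≠ 0 for all t ∈ U. Define functions B_j on U recursively by B₀ = φ̃ and B_{j+1}(t) = (deriv B_j t)/(deriv γ t), and set c_j := B_j(t₀) and z₀ := γ(t₀). Then the polynomial P(z) = Σ_{j=0}^{N} (c_j/j!)·(z − z₀)^j satisfies iteratedDeriv m (fun τ => φ̃(τ) − P(γ(τ))) t₀ = 0 for all m = 0, 1, …, N; that is, the coefficients of the N-th order density interpolant at z₀ are c_j = D_γ^j φ̃ (t₀) where D_γ f := f'/γ'. (Correctness of Algorithm 1, Section 4.3 of the paper.) -/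
open Real

private lemma iterDW_of_isOpen {n : ℕ} {f : ℝ → ℂ} {s : Set ℝ} {x : ℝ}
    (hs : IsOpen s) (hx : x ∈ s) :
    iteratedDerivWithin n f s x = iteratedDeriv n f x := by
  rw [iteratedDerivWithin_eq_iteratedFDerivWithin, iteratedDeriv_eq_iteratedFDeriv,
    iteratedFDerivWithin_of_isOpen n hs hx]

private lemma aux_mul_vanish (U : Set ℝ) (hU : IsOpen U) (t₀ : ℝ) (ht₀ : t₀ ∈ U) :
    ∀ k : ℕ, ∀ f g : ℝ → ℂ, ContDiffOn ℝ k f U → ContDiffOn ℝ k g U →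
      (∀ j ≤ k, iteratedDerivWithin j g U t₀ = 0) →
      ∀ j ≤ k, iteratedDerivWithin j (fun t => f t * g t) U t₀ = 0 := by
  have hUniq : UniqueDiffOn ℝ U := hU.uniqueDiffOn
  intro k
  induction k with
  | zero =>
    intro f g hf hg hvan j hj
    interval_cases j
    have h0 := hvan 0 le_rfl
    simp [iteratedDerivWithin_zero] at h0 ⊢
    simp [h0]
  | succ k IH =>
    intro f g hf hg hvan j hj
    match j, hj with
    | 0, _ =>
      have h0 := hvan 0 (by omega)
      simp [iteratedDerivWithin_zero] at h0 ⊢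
      simp [h0]
    | (i+1), hj =>
      have hi : i ≤ k := by omega
      rw [iteratedDerivWithin_succ']
      have hone : (1 : WithTop ℕ∞) ≤ ((k + 1 : ℕ) : WithTop ℕ∞) := by
        exact_mod_cast Nat.succ_le_succ (Nat.zero_le k)
      have heq : Set.EqOn (derivWithin (fun t => f t * g t) U)
          (fun t => deriv f t * g t + f t * deriv g t) U := by
        intro t ht
        have hft : DifferentiableAt ℝ f t :=
          (hf.contDiffAt (hU.mem_nhds ht)).differentiableAt (by exact_mod_cast Nat.succ_ne_zero k)
        have hgt : DifferentiableAt ℝ g t :=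
          (hg.contDiffAt (hU.mem_nhds ht)).differentiableAt (by exact_mod_cast Nat.succ_ne_zero k)
        rw [derivWithin_of_isOpen hU ht]
        exact deriv_mul hft hgt
      rw [iteratedDerivWithin_congr heq ht₀]
      have hk1 : ((k : ℕ) : WithTop ℕ∞) + 1 ≤ ((k + 1 : ℕ) : WithTop ℕ∞) := by
        exact_mod_cast le_rfl
      have hkk1 : ((k : ℕ) : WithTop ℕ∞) ≤ ((k + 1 : ℕ) : WithTop ℕ∞) := by
        exact_mod_cast Nat.le_succ k
      have hf' : ContDiffOn ℝ k (deriv f) U := hf.deriv_of_isOpen hU hk1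
      have hg' : ContDiffOn ℝ k (deriv g) U := hg.deriv_of_isOpen hU hk1
      have hfk : ContDiffOn ℝ k f U := hf.of_le hkk1
      have hgk : ContDiffOn ℝ k g U := hg.of_le hkk1
      have hgvan : ∀ j ≤ k, iteratedDerivWithin j g U t₀ = 0 :=
        fun j hjk => hvan j (by omega)
      have hg'van : ∀ j ≤ k, iteratedDerivWithin j (deriv g) U t₀ = 0 := by
        intro j hjk
        have heq2 : Set.EqOn (deriv g) (derivWithin g U) U :=
          fun t ht => (derivWithin_of_isOpen hU ht).symm
        rw [iteratedDerivWithin_congr heq2 ht₀, ← iteratedDerivWithin_succ']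
        exact hvan (j + 1) (by omega)
      have hA := IH (deriv f) g hf' hgk hgvan i hi
      have hB := IH f (deriv g) hfk hg' hg'van i hi
      have hadd := iteratedDerivWithin_add (n := i) (x := t₀) ht₀ hUniq
        (((hf'.mul hgk).of_le (by exact_mod_cast hi)).contDiffWithinAt ht₀)
        (((hfk.mul hg').of_le (by exact_mod_cast hi)).contDiffWithinAt ht₀)
      have : iteratedDerivWithin i
          (fun t => deriv f t * g t + f t * deriv g t) U t₀ =
          iteratedDerivWithin i (fun t => deriv f t * g t) U t₀ +
          iteratedDerivWithin i (fun t => f t * deriv g t) U t₀ := hadd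
      rw [this, hA, hB, add_zero]

/-- **Correctness of Algorithm 1** (Section 4.3 of the paper): the coefficients of the
`N`-th order density interpolant at `z₀ = γ(t₀)` are `c_j = D_γ^j φ̃ (t₀)` where
`D_γ f := f'/γ'`, computed by the recursion `B₀ = φ̃`, `B_{j+1} = B_j' / γ'`. -/
theorem density_interpolant_coefficients_recursive
    (N : ℕ) (U : Set ℝ) (hU : IsOpen U) (t₀ : ℝ) (ht₀ : t₀ ∈ U)
    (γ : ℝ → ℂ) (φ : ℝ → ℂ)
    (hγ : ContDiffOn ℝ N γ U) (hφ : ContDiffOn ℝ N φ U)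
    (hreg : ∀ t ∈ U, deriv γ t ≠ 0)
    (B : ℕ → ℝ → ℂ)
    (hB0 : ∀ t ∈ U, B 0 t = φ t)
    (hBrec : ∀ j : ℕ, ∀ t ∈ U, B (j + 1) t = deriv (B j) t / deriv γ t) :
    ∀ m : ℕ, m ≤ N →
      iteratedDeriv m
        (fun τ : ℝ => φ τ -
          ∑ j ∈ Finset.range (N + 1),
            B j t₀ / (j.factorial : ℂ) * (γ τ - γ t₀) ^ j)
        t₀ = 0 := by
  have hUniq : UniqueDiffOn ℝ U := hU.uniqueDiffOn
  -- abbreviation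
  set R : ℕ → ℝ → ℂ :=
    fun m τ => ∑ j ∈ Finset.range (N + 1 - m),
      B (j + m) t₀ / (j.factorial : ℂ) * (γ τ - γ t₀) ^ j with hRdef
  -- regularity of R
  have hRreg : ∀ m, ContDiffOn ℝ N (R m) U := by
    intro m
    apply ContDiffOn.sum
    intro j _
    exact contDiffOn_const.mul ((hγ.sub contDiffOn_const).pow j)
  -- regularity of B
  have hBreg : ∀ m, m ≤ N → ContDiffOn ℝ ((N - m : ℕ)) (B m) U := by
    intro m
    induction m with
    | zero =>
      intro _
      simpa using hφ.congr fun t ht => hB0 t ht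
    | succ m ih =>
      intro hm
      have hm' : m ≤ N := by omega
      have h1 : ContDiffOn ℝ ((N - (m + 1) : ℕ)) (deriv (B m)) U := by
        refine (ih hm').deriv_of_isOpen hU ?_
        exact_mod_cast (by omega : N - (m + 1) + 1 ≤ N - m)
      have h2 : ContDiffOn ℝ ((N - (m + 1) : ℕ)) (deriv γ) U := by
        refine hγ.deriv_of_isOpen hU ?_
        exact_mod_cast (by omega : N - (m + 1) + 1 ≤ N)
      refine (h1.mul (h2.inv fun t ht => hreg t ht)).congr fun t ht => ?_
      rw [hBrec m t ht, div_eq_mul_inv, Pi.inv_apply]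
  -- γ has a derivative
  have hγH : 1 ≤ N → ∀ t ∈ U, HasDerivAt γ (deriv γ t) t := by
    intro hN t ht
    exact (((hγ.contDiffAt (hU.mem_nhds ht)).differentiableAt
      (by exact_mod_cast (by omega : N ≠ 0))).hasDerivAt)
  -- derivative of R
  have hRderiv : ∀ m, m + 1 ≤ N → ∀ t ∈ U,
      HasDerivAt (R m) (deriv γ t * R (m + 1) t) t := by
    intro m hm t ht
    have hγt := hγH (by omega) t ht
    have hterm : ∀ j ∈ Finset.range (N + 1 - m),
        HasDerivAt (fun τ => B (j + m) t₀ / (j.factorial : ℂ) * (γ τ - γ t₀) ^ j)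
          (B (j + m) t₀ / (j.factorial : ℂ) *
            ((j : ℂ) * (γ t - γ t₀) ^ (j - 1) * deriv γ t)) t := by
      intro j _
      have hw : HasDerivAt (fun τ => γ τ - γ t₀) (deriv γ t) t := hγt.sub_const (γ t₀)
      have hp : HasDerivAt (fun z : ℂ => z ^ j) ((j : ℂ) * (γ t - γ t₀) ^ (j - 1))
          (γ t - γ t₀) := hasDerivAt_pow j _
      have hcomp := HasDerivAt.comp t hp hw
      exact (hcomp.const_mul _)
    have hsum := HasDerivAt.fun_sum hterm
    have key : ∑ j ∈ Finset.range (N + 1 - m),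
        B (j + m) t₀ / (j.factorial : ℂ) *
          ((j : ℂ) * (γ t - γ t₀) ^ (j - 1) * deriv γ t)
        = deriv γ t * R (m + 1) t := by
      rw [show N + 1 - m = (N - m) + 1 from by omega, Finset.sum_range_succ']
      simp only [hRdef]
      rw [show N + 1 - (m + 1) = N - m from by omega, Finset.mul_sum]
      simp only [Nat.cast_zero, zero_mul, mul_zero, add_zero]
      apply Finset.sum_congr rfl
      intro i _
      rw [show i + 1 + m = i + (m + 1) from by omega]
      have hfac : ((i + 1).factorial : ℂ) = ((i : ℂ) + 1) * (i.factorial : ℂ) := by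
        rw [Nat.factorial_succ]; push_cast; ring
      have h1 : ((i.factorial : ℂ)) ≠ 0 := by
        exact_mod_cast Nat.factorial_ne_zero i
      have h2 : ((i : ℂ) + 1) ≠ 0 := by
        exact Nat.cast_add_one_ne_zero i
      rw [hfac]
      simp only [Nat.add_sub_cancel]
      push_cast
      field_simp
    rwa [key] at hsum
  -- value of R at t₀
  have hR0 : ∀ m, m ≤ N → R m t₀ = B m t₀ := by
    intro m hm
    simp only [hRdef]
    rw [show N + 1 - m = (N - m) + 1 from by omega, Finset.sum_range_succ']
    simp [pow_succ]
  -- derivative of B m - R m on U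
  have hsubderiv : ∀ m, m + 1 ≤ N → ∀ t ∈ U,
      derivWithin (fun τ => B m τ - R m τ) U t
        = deriv γ t * (B (m + 1) t - R (m + 1) t) := by
    intro m hm t ht
    have hBd : DifferentiableAt ℝ (B m) t := by
      refine ((hBreg m (by omega)).contDiffAt (hU.mem_nhds ht)).differentiableAt ?_
      exact_mod_cast (by omega : N - m ≠ 0)
    have hBder : deriv (B m) t = deriv γ t * B (m + 1) t := by
      rw [hBrec m t ht, mul_div_cancel₀ _ (hreg t ht)]
    have hB' : HasDerivAt (B m) (deriv γ t * B (m + 1) t) t := by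
      rw [← hBder]; exact hBd.hasDerivAt
    have h := hB'.fun_sub (hRderiv m hm t ht)
    rw [h.hasDerivWithinAt.derivWithin (hUniq t ht)]
    ring
  -- main claim
  have claim : ∀ k, ∀ m, m + k ≤ N →
      iteratedDerivWithin k (fun τ => B m τ - R m τ) U t₀ = 0 := by
    intro k
    induction k using Nat.strong_induction_on with
    | _ k IH =>
    match k with
    | 0 =>
      intro m hm
      simp only [iteratedDerivWithin_zero]
      rw [hR0 m (by omega), sub_self]
    | (k + 1) =>
      intro m hm
      rw [iteratedDerivWithin_succ']
      have heq : Set.EqOn (derivWithin (fun τ => B m τ - R m τ) U)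
          (fun t => deriv γ t * (B (m + 1) t - R (m + 1) t)) U :=
        fun t ht => hsubderiv m (by omega) t ht
      rw [iteratedDerivWithin_congr heq ht₀]
      have hcast : ((k : ℕ) : WithTop ℕ∞) + 1 ≤ (N : ℕ∞) := by
        exact_mod_cast (by omega : k + 1 ≤ N)
      have hγ' : ContDiffOn ℝ k (deriv γ) U := hγ.deriv_of_isOpen hU hcast
      have hgreg : ContDiffOn ℝ k (fun t => B (m + 1) t - R (m + 1) t) U := by
        refine ContDiffOn.sub ?_ ?_
        · exact (hBreg (m + 1) (by omega)).of_le
            (by exact_mod_cast (by omega : k ≤ N - (m + 1)))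
        · exact (hRreg (m + 1)).of_le (by exact_mod_cast (by omega : k ≤ N))
      have hvan : ∀ j ≤ k, iteratedDerivWithin j
          (fun t => B (m + 1) t - R (m + 1) t) U t₀ = 0 := by
        intro j hj
        exact IH j (by omega) (m + 1) (by omega)
      exact aux_mul_vanish U hU t₀ ht₀ k (deriv γ) _ hγ' hgreg hvan k le_rfl
  intro m hm
  have hEq : Set.EqOn
      (fun τ : ℝ => φ τ -
        ∑ j ∈ Finset.range (N + 1),
          B j t₀ / (j.factorial : ℂ) * (γ τ - γ t₀) ^ j)
      (fun τ => B 0 τ - R 0 τ) U := by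
    intro t ht
    simp only [hRdef, Nat.sub_zero, Nat.add_zero]
    rw [hB0 t ht]
  rw [← iterDW_of_isOpen hU ht₀, iteratedDerivWithin_congr hEq ht₀]
  exact claim m 0 (by omega)
end

section
/- Let γ : ℝ → ℂ be a 2π-periodic, continuously differentiable function with deriv γ t ≠ 0 for all t and γ injective on [0, 2π), let ν(t) := −i·γ'(t)/|γ'(t)| denote the exterior unit normal (in complex form) for the counterclockwise orientation, let φ̃ : ℝ → ℝ be continuous and 2π-periodic, let z ∈ ℂ with z ∉ γ(ℝ), let N ≥ 0, t₀ ∈ ℝ, z₀ = γ(t₀), and let P be an N-th order density interpolant of φ̃ at z₀ (in particular γ and φ̃ are N-times differentiable at t₀). Then the double-layer potential satisfies (1/(2π)) ∫₀^{2π} [Re(ν(t)·conj(z − γ(t)))/|z − γ(t)|²]·φ̃(t)·|γ'(t)| dt = −Re[ (1/(2πi)) ∫₀^{2π} (φ̃(t) − P(γ(t)))·γ'(t)/(γ(t) − z) dt + w(z)·P(z) ], where w(z) := (1/(2πi)) ∫₀^{2π} γ'(t)/(γ(t) − z) dt is the winding factor (which equals 1 for z inside and 0 for z outside a positively oriented Jordan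 curve). (Theorem 3.1, first part: regularized representation (3.6) of the Laplace double-layer potential.) -/
open intervalIntegral Real

/-- The integral of `Q(γ(t))·γ'(t)` over a full period of a closed `C¹` curve vanishes. -/
lemma poly_loop_integral_zero (γ : ℝ → ℂ) (hper : Function.Periodic γ (2 * π))
    (hγ : ContDiff ℝ 1 γ) (Q : Polynomial ℂ) :
    ∫ t in (0:ℝ)..(2 * π), Q.eval (γ t) * deriv γ t = 0 := by
  have hγc : Continuous γ := hγ.continuous
  have hgc : Continuous (deriv γ) := hγ.continuous_deriv le_rfl
  induction Q using Polynomial.induction_on' with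
  | add p q hp hq =>
      have h1 : IntervalIntegrable (fun t => p.eval (γ t) * deriv γ t)
          MeasureTheory.volume 0 (2 * π) :=
        (((p.continuous_aeval).comp hγc).mul hgc).intervalIntegrable _ _
      have h2 : IntervalIntegrable (fun t => q.eval (γ t) * deriv γ t)
          MeasureTheory.volume 0 (2 * π) :=
        (((q.continuous_aeval).comp hγc).mul hgc).intervalIntegrable _ _
      simp only [Polynomial.eval_add, add_mul]
      rw [intervalIntegral.integral_add h1 h2, hp, hq, add_zero]
  | monomial n a =>
      have hderiv : ∀ t ∈ Set.uIcc (0:ℝ) (2 * π),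
          HasDerivAt (fun t => a / ((n:ℂ) + 1) * γ t ^ (n + 1))
            ((Polynomial.monomial n a).eval (γ t) * deriv γ t) t := by
        intro t _
        have hγt : HasDerivAt γ (deriv γ t) t :=
          ((hγ.differentiable one_ne_zero) t).hasDerivAt
        have := ((hasDerivAt_pow (n + 1) (γ t)).comp t hγt).const_mul (a / ((n:ℂ) + 1))
        refine this.congr_deriv ?_
        have hn : ((n:ℂ) + 1) ≠ 0 := by
          exact_mod_cast (Nat.cast_add_one_ne_zero n : ((n:ℂ) + 1) ≠ 0)
        simp only [Polynomial.eval_monomial]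
        push_cast
        field_simp
      have hint : IntervalIntegrable (fun t => (Polynomial.monomial n a).eval (γ t) * deriv γ t)
          MeasureTheory.volume 0 (2 * π) :=
        ((((Polynomial.monomial n a).continuous_aeval).comp hγc).mul hgc).intervalIntegrable _ _
      rw [intervalIntegral.integral_eq_sub_of_hasDerivAt hderiv hint]
      have h20 : γ (2 * π) = γ 0 := by
        have := hper 0
        simpa using this
      rw [h20]
      ring

/-- **Regularized representation of the Laplace double-layer potential**
(Theorem 3.1, equation (3.6) of the paper): the double-layer potential equals the
negative real part of the regularized Cauchy operator, with the winding factor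
`w z = (1/(2πi)) ∫₀^{2π} γ'(t)/(γ(t) − z) dt` replacing the indicator `1_Ω(z)`. -/
theorem double_layer_regularized
    (γ : ℝ → ℂ) (hper : Function.Periodic γ (2 * π))
    (hγ : ContDiff ℝ 1 γ) (hreg : ∀ t : ℝ, deriv γ t ≠ 0)
    (hinj : Set.InjOn γ (Set.Ico 0 (2 * π)))
    (ν : ℝ → ℂ) (hν : ∀ t : ℝ, ν t = -Complex.I * deriv γ t / (‖deriv γ t‖ : ℂ))
    (φ : ℝ → ℝ) (hφc : Continuous φ) (hφper : Function.Periodic φ (2 * π))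
    (z : ℂ) (hz : z ∉ Set.range γ)
    (N : ℕ) (t₀ : ℝ) (hγN : ContDiffAt ℝ N γ t₀)
    (hφN : ContDiffAt ℝ N (fun τ : ℝ => (φ τ : ℂ)) t₀)
    (P : Polynomial ℂ)
    (hPdeg : P.natDegree ≤ N)
    (hinterp : ∀ m : ℕ, m ≤ N →
      iteratedDeriv m (fun τ : ℝ => (φ τ : ℂ) - P.eval (γ τ)) t₀ = 0) :
    (1 / (2 * π)) *
        ∫ t in (0:ℝ)..(2 * π),
          (ν t * (starRingEnd ℂ) (z - γ t)).re / ‖z - γ t‖ ^ 2 *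
            φ t * ‖deriv γ t‖
      = -((1 / (2 * (π : ℂ) * Complex.I)) *
            (∫ t in (0:ℝ)..(2 * π), ((φ t : ℂ) - P.eval (γ t)) * deriv γ t / (γ t - z))
          + ((1 / (2 * (π : ℂ) * Complex.I)) *
              ∫ t in (0:ℝ)..(2 * π), deriv γ t / (γ t - z)) * P.eval z).re := by
  have hγc : Continuous γ := hγ.continuous
  have hgc : Continuous (deriv γ) := hγ.continuous_deriv le_rfl
  have hwz : ∀ t : ℝ, γ t - z ≠ 0 := by
    intro t h
    exact hz ⟨t, by linear_combination h⟩
  -- continuity of the various integrands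
  have hden : Continuous (fun t => γ t - z) := hγc.sub continuous_const
  have hφC : Continuous (fun t : ℝ => (φ t : ℂ)) := Complex.continuous_ofReal.comp hφc
  have hF1 : Continuous (fun t : ℝ => (φ t : ℂ) * deriv γ t / (γ t - z)) :=
    (hφC.mul hgc).div hden hwz
  have hF2 : Continuous (fun t : ℝ => deriv γ t / (γ t - z)) := hgc.div hden hwz
  have hF3 : Continuous (fun t : ℝ => P.eval (γ t)) := P.continuous_aeval.comp hγc
  -- the quotient polynomial
  obtain ⟨Q, hQ⟩ : ∃ Q, P - Polynomial.C (P.eval z) = (Polynomial.X - Polynomial.C z) * Q :=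
    Polynomial.X_sub_C_dvd_sub_C_eval
  have hQeval : ∀ t : ℝ, P.eval (γ t) = P.eval z + (γ t - z) * Q.eval (γ t) := by
    intro t
    have := congrArg (Polynomial.eval (γ t)) hQ
    simp only [Polynomial.eval_sub, Polynomial.eval_C, Polynomial.eval_mul,
      Polynomial.eval_X] at this
    linear_combination this
  have hQc : Continuous (fun t : ℝ => Q.eval (γ t)) := Q.continuous_aeval.comp hγc
  -- decompose the regularized integrand
  have hdecomp : ∀ t : ℝ,
      ((φ t : ℂ) - P.eval (γ t)) * deriv γ t / (γ t - z)
        = (φ t : ℂ) * deriv γ t / (γ t - z) - P.eval z * (deriv γ t / (γ t - z))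
          - Q.eval (γ t) * deriv γ t := by
    intro t
    rw [hQeval t]
    field_simp [hwz t]
    ring
  have hA : (∫ t in (0:ℝ)..(2 * π), ((φ t : ℂ) - P.eval (γ t)) * deriv γ t / (γ t - z))
      = (∫ t in (0:ℝ)..(2 * π), (φ t : ℂ) * deriv γ t / (γ t - z))
        - P.eval z * (∫ t in (0:ℝ)..(2 * π), deriv γ t / (γ t - z)) := by
    rw [intervalIntegral.integral_congr (g := fun t =>
        (φ t : ℂ) * deriv γ t / (γ t - z) - P.eval z * (deriv γ t / (γ t - z))
          - Q.eval (γ t) * deriv γ t) (fun t _ => hdecomp t)]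
    rw [intervalIntegral.integral_sub
        (f := fun t => (φ t : ℂ) * deriv γ t / (γ t - z) - P.eval z * (deriv γ t / (γ t - z)))
        (g := fun t => Q.eval (γ t) * deriv γ t)
        ((hF1.sub (continuous_const.mul hF2)).intervalIntegrable _ _)
        ((hQc.mul hgc).intervalIntegrable _ _),
      intervalIntegral.integral_sub (f := fun t => (φ t : ℂ) * deriv γ t / (γ t - z))
        (g := fun t => P.eval z * (deriv γ t / (γ t - z))) (hF1.intervalIntegrable _ _)
        ((continuous_const.mul hF2).intervalIntegrable _ _),
      intervalIntegral.integral_const_mul, poly_loop_integral_zero γ hper hγ Q, sub_zero]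
  -- reduce RHS
  set X : ℂ := ∫ t in (0:ℝ)..(2 * π), (φ t : ℂ) * deriv γ t / (γ t - z) with hX
  have hRHS : ((1 / (2 * (π : ℂ) * Complex.I)) *
            (∫ t in (0:ℝ)..(2 * π), ((φ t : ℂ) - P.eval (γ t)) * deriv γ t / (γ t - z))
          + ((1 / (2 * (π : ℂ) * Complex.I)) *
              ∫ t in (0:ℝ)..(2 * π), deriv γ t / (γ t - z)) * P.eval z)
      = (1 / (2 * (π : ℂ) * Complex.I)) * X := by
    rw [hA]; ring
  rw [hRHS]
  -- pointwise identity for the double-layer integrand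
  have hpt : ∀ t : ℝ,
      (ν t * (starRingEnd ℂ) (z - γ t)).re / ‖z - γ t‖ ^ 2 *
          φ t * ‖deriv γ t‖
        = (Complex.I * ((φ t : ℂ) * deriv γ t / (γ t - z))).re := by
    intro t
    rw [hν t]
    have hw : z - γ t ≠ 0 := by
      intro h
      exact hwz t (by linear_combination -h)
    have hwc : (starRingEnd ℂ) (z - γ t) ≠ 0 := star_ne_zero.mpr hw
    have hr : (‖deriv γ t‖ : ℂ) ≠ 0 := by
      simpa using norm_ne_zero_iff.mpr (hreg t)
    have habs : ((‖z - γ t‖ : ℝ) : ℂ) ^ 2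
        = (z - γ t) * (starRingEnd ℂ) (z - γ t) := by
      rw [← Complex.ofReal_pow, Complex.sq_norm, Complex.mul_conj]
    have fold : ∀ (u : ℂ) (s x y : ℝ),
        u.re / s * x * y = (u / (s : ℂ) * (x : ℂ) * (y : ℂ)).re := by
      intro u s x y
      simp [Complex.div_ofReal_re]
    rw [fold]
    congr 1
    push_cast
    rw [habs]
    set c : ℂ := (starRingEnd ℂ) (z - γ t) with hc
    field_simp [hw, hwc, hr, hwz t]
    ring
  rw [intervalIntegral.integral_congr (g := fun t =>
      (Complex.I * ((φ t : ℂ) * deriv γ t / (γ t - z))).re) (fun t _ => hpt t)]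
  have hIF : IntervalIntegrable (fun t : ℝ => Complex.I * ((φ t : ℂ) * deriv γ t / (γ t - z)))
      MeasureTheory.volume 0 (2 * π) := (continuous_const.mul hF1).intervalIntegrable _ _
  have hre : (∫ t in (0:ℝ)..(2 * π),
        (Complex.I * ((φ t : ℂ) * deriv γ t / (γ t - z))).re)
      = (Complex.I * X).re := by
    have := ContinuousLinearMap.intervalIntegral_comp_comm Complex.reCLM hIF
    simpa [intervalIntegral.integral_const_mul, hX] using this
  rw [hre]
  -- final scalar identity
  have hkey : (1 / (2 * (π : ℂ) * Complex.I)) * X = ((-(1 / (2 * π)) : ℝ) : ℂ) * (Complex.I * X) := by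
    have hπ : (π : ℂ) ≠ 0 := by exact_mod_cast Real.pi_ne_zero
    have hI : Complex.I ≠ 0 := Complex.I_ne_zero
    push_cast
    field_simp
    linear_combination X * Complex.I_sq
  rw [hkey, Complex.re_ofReal_mul]
  ring
end

section
/- Let N ≥ 2, let γ : ℝ → ℂ be 2π-periodic, N-times continuously differentiable, with deriv γ t ≠ 0 for all t and γ injective on [0, 2π), and let φ̃ : ℝ → ℝ be 2π-periodic and N-times continuously differentiable. Fix t ∈ ℝ, set z = γ(t) and ν := −i·γ'(t)/|γ'(t)| (the exterior unit normal), and let P be the N-th order density interpolant of φ̃ at z. Assume that for all sufficiently small ε > 0 the exterior point z_ε := z + ε·ν satisfies z_ε ∉ γ(ℝ) and (1/(2πi)) ∫₀^{2π} γ'(τ)/(γ(τ) − z_ε) dτ = 0. Define g : ℝ → ℂ by g(τ) = (φ̃(τ) − P(γ(τ)))·γ'(τ)/(γ(τ) − z)² for τ ∉ t + 2πℤ and g(τ) = 0 for τ ∈ t + 2πℤ. Then g is integrable on [0, 2π] and lim_{ε→0⁺} −Re[ ν·(1/(2πi)) ∫₀^{2π} φ̃(τ)·γ'(τ)/(γ(τ)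 − z_ε)² dτ ] = −Re[ (ν/(2πi)) ∫₀^{2π} g(τ) dτ ]; i.e., the exterior normal-derivative limit of the derivative of the Cauchy operator of φ equals the regularized smooth contour integral. (Theorem 3.1, second part: regularized representation (3.7) of the Laplace hypersingular operator, the left-hand side being −Re{ν·(Cφ)'(z+εν)} whose limit defines (Tφ)(x).) -/
open intervalIntegral Real Filter Topology

lemma contDiff_poly_eval (p : Polynomial ℂ) {n : ℕ∞} : ContDiff ℂ n (fun x : ℂ => p.eval x) := by
  have : (fun x : ℂ => p.eval x) =
      fun x : ℂ => ∑ i ∈ Finset.range (p.natDegree + 1), p.coeff i * x ^ i := by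
    funext x; exact Polynomial.eval_eq_sum_range (p := p) x
  rw [this]
  exact ContDiff.sum fun i _ => contDiff_const.mul (contDiff_id.pow i)

lemma periodic_deriv' {f : ℝ → ℂ} {c : ℝ} (hf : Function.Periodic f c) :
    Function.Periodic (deriv f) c := by
  intro x
  have : (fun y : ℝ => f (y + c)) = f := funext fun y => hf y
  calc deriv f (x + c) = deriv (fun y => f (y + c)) x := (deriv_comp_add_const ..).symm
    _ = deriv f x := by rw [this]

lemma poly_antideriv (Q : Polynomial ℂ) : ∃ S : Polynomial ℂ, S.derivative = Q := by
  induction Q using Polynomial.induction_on' with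
  | add p q hp hq =>
      obtain ⟨S, hS⟩ := hp; obtain ⟨T, hT⟩ := hq
      exact ⟨S + T, by rw [Polynomial.derivative_add, hS, hT]⟩
  | monomial n a =>
      refine ⟨Polynomial.C (a / (n + 1)) * Polynomial.X ^ (n + 1), ?_⟩
      rw [Polynomial.derivative_C_mul, Polynomial.derivative_X_pow]
      rw [← Polynomial.C_mul_X_pow_eq_monomial]
      push_cast
      rw [← mul_assoc, ← Polynomial.C_mul]
      rw [div_mul_cancel₀]
      exact Nat.cast_add_one_ne_zero n

lemma closed_integral_eq_zero {f F : ℝ → ℂ} (hF : ∀ x, HasDerivAt F (f x) x)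
    (hf : Continuous f) (hFper : F (2 * π) = F 0) :
    (∫ τ in (0:ℝ)..(2 * π), f τ) = 0 := by
  rw [intervalIntegral.integral_eq_sub_of_hasDerivAt (fun x _ => hF x)
    (hf.intervalIntegrable _ _), hFper, sub_self]

lemma poly_contour_zero {γ : ℝ → ℂ} (hper : Function.Periodic γ (2 * π))
    (hdiff : Differentiable ℝ γ) (hd : Continuous (deriv γ))
    {w : ℂ} (hw : w ∉ Set.range γ) (P : Polynomial ℂ)
    (hwind : (∫ τ in (0:ℝ)..(2 * π), deriv γ τ / (γ τ - w)) = 0) :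
    (∫ τ in (0:ℝ)..(2 * π), P.eval (γ τ) * deriv γ τ / (γ τ - w) ^ 2) = 0 := by
  have hc : Continuous γ := hdiff.continuous
  have hγw : ∀ τ, γ τ - w ≠ 0 := fun τ => sub_ne_zero.mpr (fun h => hw ⟨τ, h⟩)
  -- decompose P
  set R : Polynomial ℂ := P - Polynomial.C (P.eval w)
      - Polynomial.C (P.derivative.eval w) * (Polynomial.X - Polynomial.C w) with hR
  have hRroot : R.IsRoot w := by simp [hR, Polynomial.IsRoot]
  obtain ⟨R₁, hR₁⟩ := (Polynomial.dvd_iff_isRoot.mpr hRroot)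
  have hRderiv : R.derivative = P.derivative - Polynomial.C (P.derivative.eval w) := by
    simp [hR]
  have hR₁root : R₁.IsRoot w := by
    have h1 : R.derivative = R₁ + (Polynomial.X - Polynomial.C w) * R₁.derivative := by
      rw [hR₁, Polynomial.derivative_mul]; simp
    have h2 : R.derivative.eval w = 0 := by rw [hRderiv]; simp
    have := congrArg (Polynomial.eval w) h1
    simpa [h2, Polynomial.IsRoot] using this.symm
  obtain ⟨Q, hQ⟩ := (Polynomial.dvd_iff_isRoot.mpr hR₁root)
  have hPQ : ∀ x : ℂ, P.eval x = (x - w) ^ 2 * Q.eval x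
      + P.derivative.eval w * (x - w) + P.eval w := by
    intro x
    have : R.eval x = (x - w) * ((x - w) * Q.eval x) := by
      rw [hR₁, hQ]; simp
    simp only [hR, Polynomial.eval_sub, Polynomial.eval_mul, Polynomial.eval_C,
      Polynomial.eval_X] at this
    ring_nf at this ⊢
    linear_combination this
  -- pointwise splitting of the integrand
  have hsplit : ∀ τ : ℝ, P.eval (γ τ) * deriv γ τ / (γ τ - w) ^ 2 =
      Q.eval (γ τ) * deriv γ τ
      + P.derivative.eval w * (deriv γ τ / (γ τ - w))
      + P.eval w * (deriv γ τ / (γ τ - w) ^ 2) := by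
    intro τ
    rw [hPQ (γ τ)]
    field_simp [hγw τ]
  -- integrable pieces
  have hQcont : Continuous fun τ => Q.eval (γ τ) * deriv γ τ :=
    ((contDiff_poly_eval Q (n := 0)).continuous.comp hc).mul hd
  have h1cont : Continuous fun τ => deriv γ τ / (γ τ - w) :=
    hd.div ((hc.sub continuous_const)) hγw
  have h2cont : Continuous fun τ => deriv γ τ / (γ τ - w) ^ 2 :=
    hd.div (((hc.sub continuous_const)).pow 2) (fun τ => pow_ne_zero 2 (hγw τ))
  have hint1 : (∫ τ in (0:ℝ)..(2 * π), Q.eval (γ τ) * deriv γ τ) = 0 := by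
    obtain ⟨S, hS⟩ := poly_antideriv Q
    refine closed_integral_eq_zero (F := fun τ => S.eval (γ τ)) (fun x => ?_) hQcont ?_
    · have h1 : HasDerivAt (fun y : ℂ => S.eval y) (S.derivative.eval (γ x)) (γ x) :=
        S.hasDerivAt (γ x)
      have h2 : HasDerivAt γ (deriv γ x) x := (hdiff x).hasDerivAt
      have := (h1.hasFDerivAt.restrictScalars ℝ).comp_hasDerivAt x h2
      simpa [hS, mul_comm, Function.comp_def] using this
    · have h0 : γ (2 * π) = γ 0 := by simpa using hper 0
      simp only [h0]
  have hint2 : (∫ τ in (0:ℝ)..(2 * π), deriv γ τ / (γ τ - w) ^ 2) = 0 := by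
    refine closed_integral_eq_zero (F := fun τ => -(γ τ - w)⁻¹) (fun x => ?_) h2cont ?_
    · have h2 : HasDerivAt (fun τ => γ τ - w) (deriv γ x) x :=
        ((hdiff x).hasDerivAt).sub_const w
      have h3 := ((((hasDerivAt_inv (hγw x)).hasFDerivAt.restrictScalars
        ℝ).comp_hasDerivAt x h2)).neg
      simpa [Function.comp_def, Pi.neg_def, div_eq_mul_inv, mul_comm] using h3
    · have h0 : γ (2 * π) = γ 0 := by simpa using hper 0
      simp only [h0]
  rw [intervalIntegral.integral_congr (g := fun τ => Q.eval (γ τ) * deriv γ τ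
      + P.derivative.eval w * (deriv γ τ / (γ τ - w))
      + P.eval w * (deriv γ τ / (γ τ - w) ^ 2)) (fun τ _ => hsplit τ)]
  rw [intervalIntegral.integral_add (((hQcont.intervalIntegrable _ _).add
      ((h1cont.intervalIntegrable _ _).const_mul _)))
      ((h2cont.intervalIntegrable _ _).const_mul _),
    intervalIntegral.integral_add (hQcont.intervalIntegrable _ _)
      ((h1cont.intervalIntegrable _ _).const_mul _),
    intervalIntegral.integral_const_mul, intervalIntegral.integral_const_mul,
    hint1, hint2, hwind]
  simp

lemma periodic_inj_eq {γ : ℝ → ℂ} (hper : Function.Periodic γ (2 * π))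
    (hinj : Set.InjOn γ (Set.Ico 0 (2 * π))) {a b : ℝ} (h : γ a = γ b) :
    ∃ k : ℤ, a = b + 2 * π * k := by
  have hpos : (0:ℝ) < 2 * π := by positivity
  set ka := ⌊a / (2 * π)⌋ with hka
  set kb := ⌊b / (2 * π)⌋ with hkb
  have ha1 : 0 ≤ a - ka * (2 * π) := Int.sub_floor_div_mul_nonneg a hpos
  have ha2 : a - ka * (2 * π) < 2 * π := Int.sub_floor_div_mul_lt a hpos
  have hb1 : 0 ≤ b - kb * (2 * π) := Int.sub_floor_div_mul_nonneg b hpos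
  have hb2 : b - kb * (2 * π) < 2 * π := Int.sub_floor_div_mul_lt b hpos
  have hga : γ (a - ka * (2 * π)) = γ a := hper.sub_int_mul_eq ka
  have hgb : γ (b - kb * (2 * π)) = γ b := hper.sub_int_mul_eq kb
  have := hinj ⟨ha1, ha2⟩ ⟨hb1, hb2⟩ (by rw [hga, hgb, h])
  exact ⟨ka - kb, by push_cast; linarith⟩

lemma reduce_exists (t τ : ℝ) : ∃ (s : ℝ) (k : ℤ), τ = t + s + 2 * π * k ∧ |s| ≤ π := by
  have hpos : (0:ℝ) < 2 * π := by positivity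
  set k := round ((τ - t) / (2 * π)) with hk
  refine ⟨τ - t - 2 * π * k, k, by push_cast; ring, ?_⟩
  have h := abs_sub_round ((τ - t) / (2 * π))
  have heq : τ - t - 2 * π * k = 2 * π * ((τ - t) / (2 * π) - k) := by
    field_simp
  rw [heq, abs_mul, abs_of_pos hpos]
  nlinarith [abs_nonneg ((τ - t) / (2 * π) - (k:ℝ))]


set_option maxHeartbeats 2000000 in
/-- **Regularized representation of the Laplace hypersingular operator**
(Theorem 3.1, equation (3.7) of the paper): the exterior normal-derivative limit of the
derivative of the Cauchy operator of `φ` equals the regularized smooth contour integral. -/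
theorem hypersingular_regularized
    (N : ℕ) (hN : 2 ≤ N)
    (γ : ℝ → ℂ) (hper : Function.Periodic γ (2 * π))
    (hγ : ContDiff ℝ N γ) (hreg : ∀ τ : ℝ, deriv γ τ ≠ 0)
    (hinj : Set.InjOn γ (Set.Ico 0 (2 * π)))
    (φ : ℝ → ℝ) (hφper : Function.Periodic φ (2 * π))
    (hφ : ContDiff ℝ N (fun τ : ℝ => (φ τ : ℂ)))
    (t : ℝ) (z : ℂ) (hz : z = γ t)
    (ν : ℂ) (hν : ν = -Complex.I * deriv γ t / ((‖deriv γ t‖ : ℝ) : ℂ))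
    (P : Polynomial ℂ) (hPdeg : P.natDegree ≤ N)
    (hinterp : ∀ m : ℕ, m ≤ N →
      iteratedDeriv m (fun τ : ℝ => (φ τ : ℂ) - P.eval (γ τ)) t = 0)
    (hext : ∀ᶠ ε : ℝ in 𝓝[>] 0,
      z + (ε : ℂ) * ν ∉ Set.range γ ∧
      (1 / (2 * (π : ℂ) * Complex.I)) *
          ∫ τ in (0:ℝ)..(2 * π), deriv γ τ / (γ τ - (z + (ε : ℂ) * ν)) = 0)
    (g : ℝ → ℂ)
    (hg : ∀ τ : ℝ, (¬ ∃ k : ℤ, τ = t + 2 * π * k) →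
      g τ = ((φ τ : ℂ) - P.eval (γ τ)) * deriv γ τ / (γ τ - z) ^ 2)
    (hg0 : ∀ τ : ℝ, (∃ k : ℤ, τ = t + 2 * π * k) → g τ = 0) :
    IntervalIntegrable g MeasureTheory.volume 0 (2 * π) ∧
    Tendsto
      (fun ε : ℝ =>
        -(ν * ((1 / (2 * (π : ℂ) * Complex.I)) *
            ∫ τ in (0:ℝ)..(2 * π),
              (φ τ : ℂ) * deriv γ τ / (γ τ - (z + (ε : ℂ) * ν)) ^ 2)).re)
      (𝓝[>] 0)
      (𝓝 (-((ν / (2 * (π : ℂ) * Complex.I)) * ∫ τ in (0:ℝ)..(2 * π), g τ).re)) := by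
  have hπ : (0:ℝ) < π := Real.pi_pos
  set ψ : ℝ → ℂ := fun τ : ℝ => (φ τ : ℂ) - P.eval (γ τ) with hψdef
  -- basic smoothness
  have hN2 : ((2:ℕ) : WithTop ℕ∞) ≤ (N : WithTop ℕ∞) := by exact_mod_cast hN
  have hγ2 : ContDiff ℝ 2 γ := hγ.of_le (by exact_mod_cast hN2)
  have hφ2 : ContDiff ℝ 2 (fun τ : ℝ => (φ τ : ℂ)) := hφ.of_le (by exact_mod_cast hN2)
  have hPγ : ContDiff ℝ 2 (fun τ : ℝ => P.eval (γ τ)) :=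
    ((contDiff_poly_eval P).restrict_scalars ℝ).comp hγ2
  have hψ2 : ContDiff ℝ 2 ψ := hφ2.sub hPγ
  have h21 : (2 : WithTop ℕ∞) = 1 + 1 := by norm_num
  have hγdiff : Differentiable ℝ γ := hγ2.differentiable (by norm_num)
  have hγ'1 : ContDiff ℝ 1 (deriv γ) := by
    rw [h21, contDiff_succ_iff_deriv] at hγ2
    exact hγ2.2.2
  have hγ'cont : Continuous (deriv γ) := hγ'1.continuous
  have hγ'diff : Differentiable ℝ (deriv γ) := hγ'1.differentiable (by norm_num)
  have hγ''cont : Continuous (deriv (deriv γ)) :=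
    (contDiff_one_iff_deriv.mp hγ'1).2
  have hψdiff : Differentiable ℝ ψ := hψ2.differentiable (by norm_num)
  have hψcont : Continuous ψ := hψ2.continuous
  have hψ'1 : ContDiff ℝ 1 (deriv ψ) := by
    rw [h21, contDiff_succ_iff_deriv] at hψ2
    exact hψ2.2.2
  have hψ'cont : Continuous (deriv ψ) := hψ'1.continuous
  have hψ'diff : Differentiable ℝ (deriv ψ) := hψ'1.differentiable (by norm_num)
  have hψ''cont : Continuous (deriv (deriv ψ)) := (contDiff_one_iff_deriv.mp hψ'1).2
  -- periodicity
  have hψper : Function.Periodic ψ (2 * π) := by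
    intro x
    simp only [hψdef, hφper x, hper x]
  have hγ'per : Function.Periodic (deriv γ) (2 * π) := periodic_deriv' hper
  -- interpolation conditions
  have hψt : ψ t = 0 := by simpa using hinterp 0 (by omega)
  have hψ't : deriv ψ t = 0 := by
    have := hinterp 1 (by omega)
    rwa [iteratedDeriv_one] at this
  -- bounds on the compact interval
  obtain ⟨K0, hK0⟩ := (isCompact_Icc (a := t - π) (b := t + π)).exists_bound_of_continuousOn
    hψ''cont.continuousOn
  set K := max K0 0 with hKdef
  have hKnn : 0 ≤ K := le_max_right _ _
  obtain ⟨M0, hM0⟩ := (isCompact_Icc (a := t - π) (b := t + π)).exists_bound_of_continuousOn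
    hγ'cont.continuousOn
  set M := max M0 0 with hMdef
  have hMnn : 0 ≤ M := le_max_right _ _
  obtain ⟨K30, hK30⟩ := (isCompact_Icc (a := t - π) (b := t + π)).exists_bound_of_continuousOn
    hγ''cont.continuousOn
  set K3 := max K30 0 with hK3def
  have hK3nn : 0 ≤ K3 := le_max_right _ _
  have htmem : t ∈ Set.Icc (t - π) (t + π) := by constructor <;> linarith
  -- first-order MVT bounds
  have hψlin : ∀ v ∈ Set.Icc (t - π) (t + π), ‖deriv ψ v‖ ≤ K * |v - t| := by
    intro v hv
    have := Convex.norm_image_sub_le_of_norm_deriv_le (f := deriv ψ) (C := K)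
      (fun x _ => hψ'diff x) (fun x hx => le_trans (hK0 x hx) (le_max_left _ _))
      (convex_Icc _ _) htmem hv
    simpa [hψ't, Real.norm_eq_abs] using this
  have hγlin : ∀ v ∈ Set.Icc (t - π) (t + π), ‖deriv γ v - deriv γ t‖ ≤ K3 * |v - t| := by
    intro v hv
    have := Convex.norm_image_sub_le_of_norm_deriv_le (f := deriv γ) (C := K3)
      (fun x _ => hγ'diff x) (fun x hx => le_trans (hK30 x hx) (le_max_left _ _))
      (convex_Icc _ _) htmem hv
    simpa [Real.norm_eq_abs] using this
  -- membership helper for uIcc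
  have habs_mem : ∀ v : ℝ, ∀ x ∈ Set.uIcc t v, |x - t| ≤ |v - t| := by
    intro v x hx
    rw [Set.mem_uIcc] at hx
    rcases hx with ⟨h1, h2⟩ | ⟨h1, h2⟩ <;>
      exact abs_le.mpr ⟨by nlinarith [neg_abs_le (v - t), abs_nonneg (v - t)],
        by nlinarith [le_abs_self (v - t), abs_nonneg (v - t)]⟩
  -- second-order bounds
  have hψquad : ∀ v ∈ Set.Icc (t - π) (t + π), ‖ψ v‖ ≤ K * (v - t) ^ 2 := by
    intro v hv
    have hsub : Set.uIcc t v ⊆ Set.Icc (t - π) (t + π) :=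
      Set.ordConnected_Icc.uIcc_subset htmem hv
    have h := Convex.norm_image_sub_le_of_norm_deriv_le (f := ψ) (C := K * |v - t|)
      (fun x _ => hψdiff x)
      (fun x hx => le_trans (hψlin x (hsub hx))
        (mul_le_mul_of_nonneg_left (habs_mem v x hx) hKnn))
      (convex_uIcc _ _) Set.left_mem_uIcc Set.right_mem_uIcc
    rw [hψt, sub_zero] at h
    calc ‖ψ v‖ ≤ K * |v - t| * ‖v - t‖ := h
      _ = K * (v - t) ^ 2 := by rw [Real.norm_eq_abs]; rw [mul_assoc, ← sq_abs]; ring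
  have hρ : ∀ v : ℝ, HasDerivAt (fun τ : ℝ => γ τ - (τ : ℂ) * deriv γ t)
      (deriv γ v - deriv γ t) v := by
    intro v
    have h1 : HasDerivAt (fun τ : ℝ => (τ : ℂ) * deriv γ t) (deriv γ t) v := by
      simpa using ((hasDerivAt_id v).ofReal_comp).mul_const (deriv γ t)
    exact ((hγdiff v).hasDerivAt).sub h1
  have hγquad : ∀ v ∈ Set.Icc (t - π) (t + π),
      ‖γ v - z - ((v : ℂ) - (t : ℂ)) * deriv γ t‖ ≤ K3 * (v - t) ^ 2 := by
    intro v hv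
    have hsub : Set.uIcc t v ⊆ Set.Icc (t - π) (t + π) :=
      Set.ordConnected_Icc.uIcc_subset htmem hv
    have h := Convex.norm_image_sub_le_of_norm_hasDerivWithin_le (C := K3 * |v - t|)
      (f := fun τ : ℝ => γ τ - (τ : ℂ) * deriv γ t)
      (f' := fun τ : ℝ => deriv γ τ - deriv γ t)
      (fun x _ => (hρ x).hasDerivWithinAt)
      (fun x hx => le_trans (hγlin x (hsub hx))
        (mul_le_mul_of_nonneg_left (habs_mem v x hx) hK3nn))
      (convex_uIcc _ _) Set.left_mem_uIcc Set.right_mem_uIcc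
    have heq : (γ v - (v : ℂ) * deriv γ t) - (γ t - (t : ℂ) * deriv γ t)
        = γ v - z - ((v : ℂ) - (t : ℂ)) * deriv γ t := by rw [hz]; ring
    rw [heq] at h
    calc ‖γ v - z - ((v : ℂ) - (t : ℂ)) * deriv γ t‖ ≤ K3 * |v - t| * ‖v - t‖ := h
      _ = K3 * (v - t) ^ 2 := by rw [Real.norm_eq_abs]; rw [mul_assoc, ← sq_abs]; ring
  -- orthogonality estimate
  obtain ⟨r, hrdef⟩ : ∃ r : ℝ, r = ‖deriv γ t‖ := ⟨_, rfl⟩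
  have hrpos : 0 < r := hrdef ▸ norm_pos_iff.mpr (hreg t)
  have hperp : ∀ s ε : ℝ, r * |s| ≤ ‖(s : ℂ) * deriv γ t - (ε : ℂ) * ν‖ := by
    intro s ε
    have hform : (s : ℂ) * deriv γ t - (ε : ℂ) * ν
        = deriv γ t * ((s : ℂ) + ((ε / r : ℝ) : ℂ) * Complex.I) := by
      rw [hν, ← hrdef]
      -- now in terms of r
      have : (r : ℂ) ≠ 0 := by exact_mod_cast hrpos.ne'
      field_simp
      push_cast
      linear_combination (-(deriv γ t) * (ε:ℂ) * Complex.I) * (mul_inv_cancel₀ this)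
    rw [hform, norm_mul]
    have h1 : |s| ≤ ‖(s : ℂ) + ((ε / r : ℝ) : ℂ) * Complex.I‖ := by
      have h2 := Complex.abs_re_le_norm ((s : ℂ) + ((ε / r : ℝ) : ℂ) * Complex.I)
      simpa using h2
    calc r * |s| ≤ r * ‖(s : ℂ) + ((ε / r : ℝ) : ℂ) * Complex.I‖ :=
          mul_le_mul_of_nonneg_left h1 hrpos.le
      _ = ‖deriv γ t‖ * ‖(s : ℂ) + ((ε / r : ℝ) : ℂ) * Complex.I‖ := by
          simp only [hrdef]

  -- near-field lower bound
  set δ : ℝ := min π (r / (2 * (K3 + 1))) with hδdef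
  have hδpos : 0 < δ := lt_min hπ (by positivity)
  have hδπ : δ ≤ π := min_le_left _ _
  have hnear : ∀ s : ℝ, |s| ≤ δ → ∀ ε : ℝ, 0 ≤ ε →
      r / 2 * |s| ≤ ‖γ (t + s) - (z + (ε : ℂ) * ν)‖ := by
    intro s hs ε hε
    have hmem : t + s ∈ Set.Icc (t - π) (t + π) := by
      have := abs_le.mp (hs.trans hδπ)
      constructor <;> linarith [this.1, this.2]
    have h1 := hγquad (t + s) hmem
    have hcast : ((↑(t + s) : ℂ) - (t : ℂ)) = (s : ℂ) := by push_cast; ring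
    rw [hcast] at h1
    have h1' : ‖γ (t + s) - z - (s : ℂ) * deriv γ t‖ ≤ K3 * s ^ 2 := by
      simpa using h1
    have h2 := hperp s ε
    have htri : ‖(s:ℂ) * deriv γ t - (ε:ℂ) * ν‖ - ‖γ (t + s) - z - (s:ℂ) * deriv γ t‖
        ≤ ‖γ (t + s) - (z + (ε : ℂ) * ν)‖ := by
      have heq2 : γ (t + s) - (z + (ε : ℂ) * ν)
          = (γ (t + s) - z - (s:ℂ) * deriv γ t) + ((s:ℂ) * deriv γ t - (ε:ℂ) * ν) := by ring
      rw [heq2]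
      have h4 : ‖((γ (t + s) - z - (s:ℂ) * deriv γ t) + ((s:ℂ) * deriv γ t - (ε:ℂ) * ν))
            - (γ (t + s) - z - (s:ℂ) * deriv γ t)‖
          ≤ ‖(γ (t + s) - z - (s:ℂ) * deriv γ t) + ((s:ℂ) * deriv γ t - (ε:ℂ) * ν)‖
            + ‖γ (t + s) - z - (s:ℂ) * deriv γ t‖ := norm_sub_le _ _
      rw [add_sub_cancel_left] at h4
      linarith
    have hK3s : K3 * s ^ 2 ≤ r / 2 * |s| := by
      have hsR : |s| ≤ r / (2 * (K3 + 1)) := hs.trans (min_le_right _ _)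
      have hRK : K3 * (r / (2 * (K3 + 1))) ≤ r / 2 := by
        rw [mul_div_assoc', div_le_div_iff₀ (by positivity) (by norm_num)]
        nlinarith
      have h5 : K3 * s ^ 2 ≤ K3 * (|s| * (r / (2 * (K3 + 1)))) := by
        rw [← sq_abs s]
        have := mul_le_mul_of_nonneg_left hsR (abs_nonneg s)
        nlinarith [abs_nonneg s]
      calc K3 * s ^ 2 ≤ K3 * (|s| * (r / (2 * (K3 + 1)))) := h5
        _ = (K3 * (r / (2 * (K3 + 1)))) * |s| := by ring
        _ ≤ r / 2 * |s| := mul_le_mul_of_nonneg_right hRK (abs_nonneg s)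
    nlinarith [h1', h2, htri]
  -- far-field positive lower bound
  have hAcomp : IsCompact {s : ℝ | s ∈ Set.Icc (-π) π ∧ δ ≤ |s|} := by
    have hset : {s : ℝ | s ∈ Set.Icc (-π) π ∧ δ ≤ |s|}
        = Set.Icc (-π) π ∩ {s : ℝ | δ ≤ |s|} := rfl
    rw [hset]
    exact isCompact_Icc.inter_right (isClosed_le continuous_const continuous_abs)
  have hAne : {s : ℝ | s ∈ Set.Icc (-π) π ∧ δ ≤ |s|}.Nonempty :=
    ⟨π, ⟨⟨by linarith, le_refl _⟩, by rwa [abs_of_pos hπ]⟩⟩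
  have hfc : Continuous fun s : ℝ => ‖γ (t + s) - z‖ :=
    ((hγdiff.continuous.comp (continuous_const.add continuous_id)).sub continuous_const).norm
  obtain ⟨s₀, hs₀A, hs₀min⟩ := hAcomp.exists_isMinOn hAne hfc.continuousOn
  set m : ℝ := ‖γ (t + s₀) - z‖ with hmdef
  have hmpos : 0 < m := by
    rcases (norm_nonneg (γ (t + s₀) - z)).lt_or_eq with h | h
    · exact h
    · exfalso
      have hz0 : γ (t + s₀) = z := by
        have := sub_eq_zero.mp (norm_eq_zero.mp h.symm)
        exact this
      obtain ⟨k, hk⟩ := periodic_inj_eq hper hinj (a := t + s₀) (b := t) (by rw [hz0, hz])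
      have hs₀ : s₀ = 2 * π * k := by linarith
      rcases eq_or_ne k 0 with hk0 | hk0
      · rw [hk0] at hs₀
        simp at hs₀
        rw [hs₀] at hs₀A
        have := hs₀A.2
        simp at this
        linarith [hδpos]
      · have h1 : (1 : ℝ) ≤ |(k : ℝ)| := by
          have := Int.one_le_abs (by exact_mod_cast hk0 : k ≠ 0)
          exact_mod_cast this
        have h2 : |s₀| = 2 * π * |(k : ℝ)| := by
          rw [hs₀, abs_mul, abs_of_pos (by positivity : (0:ℝ) < 2 * π)]
        have h3 : |s₀| ≤ π := abs_le.mpr ⟨hs₀A.1.1, hs₀A.1.2⟩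
        nlinarith
  have hmaway : ∀ s : ℝ, s ∈ Set.Icc (-π) π → δ ≤ |s| → m ≤ ‖γ (t + s) - z‖ :=
    fun s h1 h2 => hs₀min ⟨h1, h2⟩
  -- norm of ν
  have hν1 : ‖ν‖ = 1 := by
    rw [hν]
    rw [norm_div, norm_mul, norm_neg, Complex.norm_I, one_mul]
    rw [Complex.norm_real, Real.norm_eq_abs, abs_of_nonneg (norm_nonneg _)]
    exact div_self (norm_ne_zero_iff.mpr (hreg t))
  -- global constants
  obtain ⟨c, hcdef⟩ : ∃ c : ℝ, c = min (r / 2) (m / (2 * π)) := ⟨_, rfl⟩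
  have hcpos : 0 < c := by rw [hcdef]; exact lt_min (by positivity) (by positivity)
  obtain ⟨ε₀, hε₀def⟩ : ∃ e : ℝ, e = m / 2 := ⟨_, rfl⟩
  have hε₀pos : 0 < ε₀ := by rw [hε₀def]; positivity
  have hlow : ∀ s : ℝ, s ∈ Set.Icc (-π) π → ∀ ε : ℝ, 0 ≤ ε → ε ≤ ε₀ →
      c * |s| ≤ ‖γ (t + s) - (z + (ε : ℂ) * ν)‖ := by
    intro s hsmem ε hε hεε₀
    rcases le_or_gt |s| δ with hsδ | hsδ
    · calc c * |s| ≤ r / 2 * |s| :=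
            mul_le_mul_of_nonneg_right (hcdef ▸ min_le_left _ _) (abs_nonneg s)
        _ ≤ _ := hnear s hsδ ε hε
    · have h1 : m ≤ ‖γ (t + s) - z‖ := hmaway s hsmem hsδ.le
      have h2 : ‖(ε : ℂ) * ν‖ = ε := by
        rw [norm_mul, hν1, mul_one, Complex.norm_real, Real.norm_eq_abs, abs_of_nonneg hε]
      have h3 : ‖γ (t + s) - z‖ - ε ≤ ‖γ (t + s) - (z + (ε:ℂ) * ν)‖ := by
        have h5 := norm_sub_norm_le (γ (t + s) - z) ((ε:ℂ) * ν)
        rw [h2] at h5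
        have heq3 : γ (t + s) - z - (ε:ℂ) * ν = γ (t + s) - (z + (ε:ℂ) * ν) := by ring
        rwa [heq3] at h5
      have h6 : c * |s| ≤ m / 2 := by
        have h7 : |s| ≤ π := abs_le.mpr ⟨hsmem.1, hsmem.2⟩
        calc c * |s| ≤ m / (2 * π) * |s| :=
              mul_le_mul_of_nonneg_right (hcdef ▸ min_le_right _ _) (abs_nonneg s)
          _ ≤ m / (2 * π) * π := mul_le_mul_of_nonneg_left h7 (by positivity)
          _ = m / 2 := by field_simp
      have hεm : ε ≤ m / 2 := hε₀def ▸ hεε₀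
      linarith
  -- reduction of an arbitrary real to the fundamental window
  have hred : ∀ τ : ℝ, ∃ s : ℝ, |s| ≤ π ∧ γ τ = γ (t + s) ∧ deriv γ τ = deriv γ (t + s)
      ∧ ψ τ = ψ (t + s) := by
    intro τ
    obtain ⟨s, k, hτ, hsπ⟩ := reduce_exists t τ
    have hτ' : τ = (t + s) - (-k : ℤ) * (2 * π) := by push_cast; linarith
    refine ⟨s, hsπ, ?_, ?_, ?_⟩
    · rw [hτ']; exact hper.sub_int_mul_eq (-k)
    · rw [hτ']; exact hγ'per.sub_int_mul_eq (-k)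
    · rw [hτ']; exact hψper.sub_int_mul_eq (-k)
  -- the uniform bound
  obtain ⟨C, hCdef⟩ : ∃ C : ℝ, C = K * M / c ^ 2 := ⟨_, rfl⟩
  have hCnn : 0 ≤ C := by rw [hCdef]; positivity
  have hBB : ∀ ε : ℝ, 0 ≤ ε → ε ≤ ε₀ → ∀ τ : ℝ,
      ‖ψ τ * deriv γ τ / (γ τ - (z + (ε:ℂ) * ν)) ^ 2‖ ≤ C := by
    intro ε hε hεε₀ τ
    obtain ⟨s, hsπ, hγτ, hγ'τ, hψτ⟩ := hred τ
    have hsmem : s ∈ Set.Icc (-π) π := by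
      have := abs_le.mp hsπ; exact ⟨this.1, this.2⟩
    have hmem : t + s ∈ Set.Icc (t - π) (t + π) := by
      have := abs_le.mp hsπ; constructor <;> linarith [this.1, this.2]
    rcases eq_or_ne s 0 with hs0 | hs0
    · rw [hψτ, hs0, add_zero, hψt]
      simpa using hCnn
    · have h1 : ‖ψ (t + s)‖ ≤ K * s ^ 2 := by
        have := hψquad (t + s) hmem
        rwa [add_sub_cancel_left] at this
      have h2 : ‖deriv γ (t + s)‖ ≤ M := le_trans (hM0 (t + s) hmem) (le_max_left _ _)
      have h3 : c * |s| ≤ ‖γ (t + s) - (z + (ε:ℂ) * ν)‖ := hlow s hsmem ε hε hεε₀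
      rw [hψτ, hγτ, hγ'τ, norm_div, norm_mul, norm_pow]
      have hd : (c * |s|) ^ 2 ≤ ‖γ (t + s) - (z + (ε:ℂ) * ν)‖ ^ 2 :=
        pow_le_pow_left₀ (by positivity) h3 2
      have hnum : ‖ψ (t + s)‖ * ‖deriv γ (t + s)‖ ≤ K * s ^ 2 * M :=
        mul_le_mul h1 h2 (norm_nonneg _) (by positivity)
      have hdpos : (0:ℝ) < (c * |s|) ^ 2 := by positivity
      have hcs : (c * |s|) ^ 2 = c ^ 2 * s ^ 2 := by rw [mul_pow, sq_abs]
      calc ‖ψ (t + s)‖ * ‖deriv γ (t + s)‖ / ‖γ (t + s) - (z + (ε:ℂ)*ν)‖ ^ 2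
          ≤ K * s ^ 2 * M / (c * |s|) ^ 2 := div_le_div₀ (by positivity) hnum hdpos hd
        _ = K * M / c ^ 2 := by
            rw [hcs]; field_simp
        _ = C := hCdef.symm
  -- the exceptional set
  have hbadsub : {τ : ℝ | γ τ = z} ⊆ Set.range (fun k : ℤ => t + 2 * π * k) := by
    intro τ hτ
    obtain ⟨k, hk⟩ := periodic_inj_eq hper hinj (a := τ) (b := t) (by rw [Set.mem_setOf_eq.mp hτ, hz])
    exact ⟨k, hk.symm⟩
  have hbad0 : MeasureTheory.volume {τ : ℝ | γ τ = z} = 0 :=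
    ((Set.countable_range _).mono hbadsub).measure_zero _
  -- formula for g
  have hgeq : g = fun τ => ψ τ * deriv γ τ / (γ τ - z) ^ 2 := by
    funext τ
    by_cases h : ∃ k : ℤ, τ = t + 2 * π * k
    · rw [hg0 τ h]
      obtain ⟨k, hk⟩ := h
      have hγz : γ τ = z := by
        rw [hz, hk, show t + 2*π*(k:ℝ) = t - (-k:ℤ) * (2*π) by push_cast; ring]
        exact hper.sub_int_mul_eq (-k)
      rw [hγz, sub_self]
      norm_num
    · rw [hg τ h, hψdef]
  -- integrability of g
  have hmeasg : MeasureTheory.AEStronglyMeasurable (fun τ => ψ τ * deriv γ τ / (γ τ - z) ^ 2)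
      MeasureTheory.volume := by
    apply Measurable.aestronglyMeasurable
    exact ((hψcont.mul hγ'cont).measurable).div
      (((hγdiff.continuous.sub continuous_const).pow 2).measurable)
  have hgint : IntervalIntegrable g MeasureTheory.volume 0 (2 * π) := by
    rw [hgeq, intervalIntegrable_iff]
    have hbint : MeasureTheory.IntegrableOn (fun _ : ℝ => C) (Set.uIoc 0 (2*π)) := by
      rw [Set.uIoc]
      exact MeasureTheory.integrableOn_const measure_Ioc_lt_top.ne
    apply MeasureTheory.Integrable.mono' hbint hmeasg.restrict
    apply MeasureTheory.ae_of_all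
    intro τ
    have := hBB 0 le_rfl hε₀pos.le τ
    simpa using this
  refine ⟨hgint, ?_⟩
  -- eventual equality of the integrals
  have h2πi : (1 : ℂ) / (2 * (π:ℂ) * Complex.I) ≠ 0 := by
    simp [Real.pi_ne_zero, Complex.I_ne_zero]
  have heqI : ∀ᶠ ε : ℝ in 𝓝[>] 0,
      (∫ τ in (0:ℝ)..(2*π), (φ τ : ℂ) * deriv γ τ / (γ τ - (z + (ε:ℂ)*ν)) ^ 2)
      = ∫ τ in (0:ℝ)..(2*π), ψ τ * deriv γ τ / (γ τ - (z + (ε:ℂ)*ν)) ^ 2 := by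
    filter_upwards [hext] with ε hε
    obtain ⟨hnotin, hwind0⟩ := hε
    have hD : ∀ τ : ℝ, γ τ - (z + (ε:ℂ)*ν) ≠ 0 :=
      fun τ => sub_ne_zero.mpr (fun h => hnotin ⟨τ, h⟩)
    have hwind : (∫ τ in (0:ℝ)..(2*π), deriv γ τ / (γ τ - (z + (ε:ℂ)*ν))) = 0 :=
      (mul_eq_zero.mp hwind0).resolve_left h2πi
    have hsplit : ∀ τ : ℝ, (φ τ : ℂ) * deriv γ τ / (γ τ - (z + (ε:ℂ)*ν)) ^ 2
        = ψ τ * deriv γ τ / (γ τ - (z + (ε:ℂ)*ν)) ^ 2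
          + P.eval (γ τ) * deriv γ τ / (γ τ - (z + (ε:ℂ)*ν)) ^ 2 := by
      intro τ
      rw [← add_div]
      congr 1
      simp only [hψdef]
      ring
    rw [intervalIntegral.integral_congr (fun τ _ => hsplit τ)]
    have hcψ : Continuous fun τ => ψ τ * deriv γ τ / (γ τ - (z + (ε:ℂ)*ν)) ^ 2 :=
      (hψcont.mul hγ'cont).div ((hγdiff.continuous.sub continuous_const).pow 2)
        (fun τ => pow_ne_zero 2 (hD τ))
    have hcP : Continuous fun τ => P.eval (γ τ) * deriv γ τ / (γ τ - (z + (ε:ℂ)*ν)) ^ 2 :=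
      (((contDiff_poly_eval P (n := 0)).continuous.comp hγdiff.continuous).mul hγ'cont).div
        ((hγdiff.continuous.sub continuous_const).pow 2) (fun τ => pow_ne_zero 2 (hD τ))
    rw [intervalIntegral.integral_add (hcψ.intervalIntegrable _ _) (hcP.intervalIntegrable _ _)]
    rw [poly_contour_zero hper hγdiff hγ'cont hnotin P hwind, add_zero]
  -- dominated convergence
  have hL : Tendsto (fun ε : ℝ =>
        ∫ τ in (0:ℝ)..(2*π), ψ τ * deriv γ τ / (γ τ - (z + (ε:ℂ)*ν)) ^ 2)
      (𝓝[>] 0) (𝓝 (∫ τ in (0:ℝ)..(2*π), g τ)) := by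
    rw [hgeq]
    apply intervalIntegral.tendsto_integral_filter_of_dominated_convergence (bound := fun _ => C)
    · filter_upwards [hext] with ε hε
      have hD : ∀ τ : ℝ, γ τ - (z + (ε:ℂ)*ν) ≠ 0 :=
        fun τ => sub_ne_zero.mpr (fun h => hε.1 ⟨τ, h⟩)
      exact ((hψcont.mul hγ'cont).div ((hγdiff.continuous.sub continuous_const).pow 2)
        (fun τ => pow_ne_zero 2 (hD τ))).aestronglyMeasurable.restrict
    · filter_upwards [Ioo_mem_nhdsGT_of_mem (Set.left_mem_Ico.mpr hε₀pos)] with ε hε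
      exact MeasureTheory.ae_of_all _ fun τ _ => hBB ε hε.1.le hε.2.le τ
    · exact intervalIntegrable_const
    · have hae : ∀ᵐ τ : ℝ ∂MeasureTheory.volume, γ τ ≠ z := by
        rw [MeasureTheory.ae_iff]
        simpa [not_not] using hbad0
      refine hae.mono fun τ hτ _ => ?_
      have hne : (γ τ - z) ^ 2 ≠ 0 := pow_ne_zero 2 (sub_ne_zero.mpr hτ)
      have hden : Tendsto (fun ε : ℝ => (γ τ - (z + (ε:ℂ)*ν)) ^ 2) (𝓝[>] 0)
          (𝓝 ((γ τ - z) ^ 2)) := by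
        have hcont2 : Continuous fun ε : ℝ => (γ τ - (z + (ε:ℂ)*ν)) ^ 2 :=
          ((continuous_const.sub (continuous_const.add
            ((Complex.continuous_ofReal.mul continuous_const)))).pow 2)
        have h0 := hcont2.tendsto 0
        simp only [Complex.ofReal_zero, zero_mul, add_zero] at h0
        exact h0.mono_left nhdsWithin_le_nhds
      exact tendsto_const_nhds.div hden hne
  -- assemble
  have hΦcont : Continuous fun w : ℂ => -(ν * (1 / (2 * (π:ℂ) * Complex.I) * w)).re :=
    (Complex.continuous_re.comp (continuous_const.mul (continuous_const.mul continuous_id))).neg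
  have hfin := (hΦcont.tendsto _).comp hL
  have hfin2 : Tendsto (fun ε : ℝ => -(ν * (1 / (2 * (π:ℂ) * Complex.I) *
      ∫ τ in (0:ℝ)..(2*π), (φ τ:ℂ) * deriv γ τ / (γ τ - (z + (ε:ℂ)*ν)) ^ 2)).re) (𝓝[>] 0)
      (𝓝 (-(ν * (1 / (2 * (π:ℂ) * Complex.I) * ∫ τ in (0:ℝ)..(2*π), g τ)).re)) := by
    apply Tendsto.congr' _ hfin
    filter_upwards [heqI] with ε h
    simp only [Function.comp]
    rw [h]
  have hvaleq : -(ν * (1 / (2 * (π:ℂ) * Complex.I) * ∫ τ in (0:ℝ)..(2*π), g τ)).re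
      = -((ν / (2 * (π:ℂ) * Complex.I)) * ∫ τ in (0:ℝ)..(2*π), g τ).re := by
    congr 2
    ring
  rw [← hvaleq]
  exact hfin2
end

section
/- Let γ : ℝ → ℂ be 2π-periodic and continuously differentiable with deriv γ t ≠ 0 for all t and γ injective on [0, 2π), let φ̃ : ℝ → ℝ be continuous and 2π-periodic, set z₀ := γ(0) and ψ(τ) := φ̃(τ)·|γ'(τ)|/γ'(τ). Let ℓ : (0, 2π) → ℂ be differentiable with deriv ℓ τ = γ'(τ)/(γ(τ) − z₀) and exp(ℓ(τ)) = γ(τ) − z₀ for all τ ∈ (0, 2π) (a continuous logarithm of γ − z₀ along the punctured curve). Let Q be any polynomial with complex coefficients. Then the function τ ↦ ℓ(τ)·(ψ(τ) − Q(γ(τ)))·γ'(τ) is integrable on (0, 2π), the function τ ↦ log|γ(τ) − z₀| · φ̃(τ) · |γ'(τ)| is integrable on (0, 2π), and −(1/(2π)) ∫₀^{2π} log|γ(τ) − z₀| · φ̃(τ) · |γ'(τ)| dτ = Im[ (1/(2πi)) ∫₀^{2π} ℓ(τ)·(ψ(τ) − Q(γ(τ)))·γ'(τ) dτ ]. (Theorem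 3.2, equation (3.10): regularized representation of the weakly singular Laplace single-layer boundary operator at the on-curve point z₀.) -/
open intervalIntegral Real MeasureTheory Set Filter Topology
noncomputable def pAnti (p : Polynomial ℂ) : Polynomial ℂ :=
  p.sum fun n a => Polynomial.C (a / (n+1)) * Polynomial.X ^ (n+1)

lemma pAnti_derivative (p : Polynomial ℂ) : (pAnti p).derivative = p := by
  open Polynomial in
  conv_rhs => rw [← Polynomial.sum_C_mul_X_pow_eq p]
  rw [pAnti, Polynomial.sum_def, Polynomial.sum_def, map_sum]
  refine Finset.sum_congr rfl fun n _ => ?_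
  rw [Polynomial.derivative_C_mul, Polynomial.derivative_X_pow, ← mul_assoc, ← Polynomial.C_mul]
  norm_num
  rw [show ((n : Polynomial ℂ) + 1) = Polynomial.C ((n : ℂ) + 1) by simp, ← Polynomial.C_mul,
    div_mul_cancel₀ _ (Nat.cast_add_one_ne_zero n)]


lemma bounded_log_aux {s : Set ℝ} (hs : s.OrdConnected) {τ₀ : ℝ} (hτ₀ : τ₀ ∈ s)
    {ℓ : ℝ → ℂ} (hℓ : ContinuousOn ℓ s)
    {u : ℝ → ℝ} (hu : ContinuousOn u s) (hupos : ∀ τ ∈ s, 0 < u τ)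
    {g : ℝ → ℂ} (hgc : ContinuousOn g s) {c : ℂ} (hc : c ≠ 0)
    (hg1 : ∀ τ ∈ s, ‖g τ / c - 1‖ ≤ 1/2)
    (hexp : ∀ τ ∈ s, Complex.exp (ℓ τ) = u τ * g τ) :
    ∃ C, ∀ τ ∈ s, ‖ℓ τ - (Real.log (u τ) : ℂ)‖ ≤ C := by
  have hre : ∀ τ ∈ s, 0 < (g τ / c).re := by
    intro τ hτ
    have h1 : |(g τ / c - 1).re| ≤ 1/2 := (Complex.abs_re_le_norm _).trans (hg1 τ hτ)
    have : (g τ / c - 1).re = (g τ / c).re - 1 := by simp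
    rw [this, abs_le] at h1
    linarith [h1.1]
  have hne : ∀ τ ∈ s, g τ / c ≠ 0 := fun τ hτ h => by
    simpa [h] using hre τ hτ
  have hgne : ∀ τ ∈ s, g τ ≠ 0 := by
    intro τ hτ h
    exact hne τ hτ (by simp [h])
  set w : ℝ → ℂ := fun τ => Complex.log (g τ / c) with hw
  have hwcont : ContinuousOn w s := by
    intro τ hτ
    exact ((hgc τ hτ).div_const c).clog (Or.inl (hre τ hτ))
  have habs_ub : ∀ τ ∈ s, ‖g τ / c‖ ≤ 3/2 := by
    intro τ hτ
    calc ‖g τ / c‖ = ‖(g τ / c - 1) + 1‖ := by ring_nf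
      _ ≤ ‖g τ / c - 1‖ + 1 := by
          simpa using norm_add_le (g τ / c - 1) 1
      _ ≤ 3/2 := by linarith [hg1 τ hτ]
  have habs_lb : ∀ τ ∈ s, (1:ℝ)/2 ≤ ‖g τ / c‖ := by
    intro τ hτ
    have h0 := norm_sub_norm_le (1:ℂ) (g τ / c)
    simp only [norm_one] at h0
    have h2 : ‖1 - g τ / c‖ ≤ 1/2 := by
      rw [← norm_neg]; simpa [neg_sub] using hg1 τ hτ
    linarith
  have hwbound : ∀ τ ∈ s, ‖w τ‖ ≤ Real.log 2 + π := by
    intro τ hτ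
    have h1 : ‖w τ‖ ≤ |(w τ).re| + |(w τ).im| :=
      Complex.norm_le_abs_re_add_abs_im _
    have hre' : (w τ).re = Real.log (‖g τ / c‖) := Complex.log_re _
    have him : (w τ).im = Complex.arg (g τ / c) := Complex.log_im _
    have h2 : |(w τ).re| ≤ Real.log 2 := by
      rw [hre', abs_le]
      constructor
      · have := Real.log_le_log (by norm_num) (habs_lb τ hτ)
        rw [show (1:ℝ)/2 = 2⁻¹ by norm_num, Real.log_inv] at this
        linarith
      · calc Real.log (‖g τ / c‖) ≤ Real.log (3/2) :=
              Real.log_le_log (lt_of_lt_of_le (by norm_num) (habs_lb τ hτ)) (habs_ub τ hτ)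
          _ ≤ Real.log 2 := Real.log_le_log (by norm_num) (by norm_num)
    have h3 : |(w τ).im| ≤ π := by rw [him]; exact Complex.abs_arg_le_pi _
    linarith
  set D : ℝ → ℂ := fun τ => ℓ τ - w τ - (Real.log (u τ) : ℂ) with hD
  have hDexp : ∀ τ ∈ s, Complex.exp (D τ) = c := by
    intro τ hτ
    have h1 : Complex.exp (ℓ τ) = u τ * g τ := hexp τ hτ
    have h2 : Complex.exp (w τ) = g τ / c := Complex.exp_log (hne τ hτ)
    have h3 : Complex.exp ((Real.log (u τ) : ℂ)) = (u τ : ℂ) := by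
      rw [← Complex.ofReal_exp, Real.exp_log (hupos τ hτ)]
    have hu0 : (u τ : ℂ) ≠ 0 := by
      exact_mod_cast (hupos τ hτ).ne'
    rw [hD]
    simp only [Complex.exp_sub, h1, h2, h3]
    field_simp [hu0, hgne τ hτ]
  have hDcont : ContinuousOn D s := by
    apply (hℓ.sub hwcont).sub
    exact Complex.continuous_ofReal.comp_continuousOn
      (hu.log (fun τ hτ => (hupos τ hτ).ne'))
  have hDconst : ∀ τ ∈ s, D τ = D τ₀ := by
    intro τ hτ
    have he : Complex.exp (D τ) = Complex.exp (D τ₀) := by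
      rw [hDexp τ hτ, hDexp τ₀ hτ₀]
    obtain ⟨n, hn⟩ := Complex.exp_eq_exp_iff_exists_int.mp he
    rcases eq_or_ne n 0 with h0 | h0
    · simpa [h0] using hn
    · exfalso
      have hsub : uIcc τ τ₀ ⊆ s := hs.uIcc_subset hτ hτ₀
      have hfc : ContinuousOn (fun x => (D x).im) (uIcc τ τ₀) :=
        (Complex.continuous_im.comp_continuousOn (hDcont.mono hsub))
      have him : (D τ).im = (D τ₀).im + 2 * π * n := by
        rw [hn]; simp [Complex.add_im, Complex.mul_im]; push_cast; ring
      -- the midpoint-ish value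
      set v : ℝ := (D τ₀).im + π * (if 0 < n then 1 else -1) with hv
      have hvmem : v ∈ uIcc ((D τ).im) ((D τ₀).im) := by
        rcases lt_or_ge 0 n with hn0 | hn0
        · have : (2:ℝ) * π * n ≥ 2 * π := by
            have : (1:ℝ) ≤ (n:ℝ) := by exact_mod_cast hn0
            nlinarith [Real.pi_pos]
          simp only [hv, if_pos hn0]
          rw [Set.mem_uIcc]
          right
          constructor <;> [linarith [Real.pi_pos]; (rw [him]; linarith [Real.pi_pos])]
        · have hn1 : (n:ℝ) ≤ -1 := by exact_mod_cast (by omega : n ≤ -1)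
          have : (2:ℝ) * π * n ≤ -(2*π) := by nlinarith [Real.pi_pos]
          simp only [hv, if_neg (not_lt.mpr hn0)]
          rw [Set.mem_uIcc]
          left
          constructor <;> [(rw [him]; linarith [Real.pi_pos]); linarith [Real.pi_pos]]
      obtain ⟨σ, hσI, hσv⟩ := intermediate_value_uIcc hfc hvmem
      have hσs : σ ∈ s := hsub hσI
      have he2 : Complex.exp (D σ) = Complex.exp (D τ₀) := by
        rw [hDexp σ hσs, hDexp τ₀ hτ₀]
      obtain ⟨m, hm⟩ := Complex.exp_eq_exp_iff_exists_int.mp he2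
      have him2 : (D σ).im = (D τ₀).im + 2 * π * m := by
        rw [hm]; simp [Complex.add_im, Complex.mul_im]; push_cast; ring
      have hσv' : (D σ).im = v := hσv
      rw [hσv', hv] at him2
      have hπ : π ≠ 0 := Real.pi_ne_zero
      rcases lt_or_ge 0 n with hn0 | hn0
      · rw [if_pos hn0] at him2
        have h1 : π * 1 = π * (2 * m) := by linarith
        have h2 : (1:ℝ) = 2 * m := mul_left_cancel₀ hπ h1
        have : (1:ℤ) = 2 * m := by exact_mod_cast h2
        omega
      · rw [if_neg (not_lt.mpr hn0)] at him2
        have h1 : π * (-1) = π * (2 * m) := by linarith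
        have h2 : (-1:ℝ) = 2 * m := mul_left_cancel₀ hπ h1
        have : (-1:ℤ) = 2 * m := by exact_mod_cast h2
        omega
  refine ⟨Real.log 2 + π + ‖D τ₀‖, fun τ hτ => ?_⟩
  have : ℓ τ - (Real.log (u τ) : ℂ) = w τ + D τ := by rw [hD]; ring
  rw [this, hDconst τ hτ]
  calc ‖w τ + D τ₀‖ ≤ ‖w τ‖ + ‖D τ₀‖ :=
        norm_add_le _ _
    _ ≤ Real.log 2 + π + ‖D τ₀‖ := by linarith [hwbound τ hτ]


lemma negLog_integrableOn_Ioc01 :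
    IntegrableOn (fun x : ℝ => -Real.log x) (Set.Ioc (0:ℝ) 1) volume := by
  have hcont : ContinuousOn (fun x : ℝ => x - x * Real.log x) (Set.Icc 0 1) :=
    (continuous_id.sub Real.continuous_mul_log).continuousOn
  have hderiv : ∀ x ∈ Set.Ioo (0:ℝ) 1,
      HasDerivAt (fun x : ℝ => x - x * Real.log x) (-Real.log x) x := by
    intro x hx
    have h := (hasDerivAt_id x).sub ((hasDerivAt_id x).mul (Real.hasDerivAt_log hx.1.ne'))
    refine h.congr_deriv ?_
    show (1:ℝ) - (1 * Real.log x + x * x⁻¹) = -Real.log x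
    linear_combination -(mul_inv_cancel₀ hx.1.ne')
  have hpos : ∀ x ∈ Set.Ioo (0:ℝ) 1, 0 ≤ -Real.log x := fun x hx => by
    simpa using Real.log_nonpos hx.1.le hx.2.le
  exact integrableOn_deriv_of_nonneg hcont hderiv hpos

lemma absLog_intervalIntegrable : IntervalIntegrable (fun x : ℝ => |Real.log x|)
    volume 0 (2 * π) := by
  have h1 : IntervalIntegrable (fun x : ℝ => |Real.log x|) volume 0 1 := by
    rw [intervalIntegrable_iff_integrableOn_Ioc_of_le (by norm_num)]
    apply negLog_integrableOn_Ioc01.congr_fun ?_ measurableSet_Ioc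
    intro x hx
    exact (abs_of_nonpos (Real.log_nonpos hx.1.le hx.2)).symm
  have h2 : IntervalIntegrable (fun x : ℝ => |Real.log x|) volume 1 (2 * π) := by
    apply ContinuousOn.intervalIntegrable
    apply (Real.continuousOn_log.mono ?_).abs
    intro x hx
    have h1' : (1:ℝ) ≤ 2 * π := by nlinarith [Real.pi_gt_three]
    rw [Set.uIcc_of_le h1'] at hx
    exact fun h => by rw [h] at hx; exact absurd hx.1 (by norm_num)
  exact h1.trans h2
/-- **Regularized representation of the weakly singular Laplace single-layer boundary
operator** at the on-curve point `z₀ = γ(0)` (Theorem 3.2, equation (3.10) of the paper),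
where `ℓ` is a continuous logarithm of `γ − z₀` along the punctured curve and `Q` is any
polynomial. -/
theorem single_layer_operator_regularized
    (γ : ℝ → ℂ) (hper : Function.Periodic γ (2 * π))
    (hγ : ContDiff ℝ 1 γ) (hreg : ∀ t : ℝ, deriv γ t ≠ 0)
    (hinj : Set.InjOn γ (Set.Ico 0 (2 * π)))
    (φ : ℝ → ℝ) (hφc : Continuous φ) (hφper : Function.Periodic φ (2 * π))
    (ψ : ℝ → ℂ)
    (hψ : ∀ τ : ℝ, ψ τ = (φ τ : ℂ) * (‖deriv γ τ‖ : ℂ) / deriv γ τ)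
    (ℓ : ℝ → ℂ)
    (hℓd : ∀ τ ∈ Set.Ioo (0:ℝ) (2 * π), HasDerivAt ℓ (deriv γ τ / (γ τ - γ 0)) τ)
    (hℓexp : ∀ τ ∈ Set.Ioo (0:ℝ) (2 * π), Complex.exp (ℓ τ) = γ τ - γ 0)
    (Q : Polynomial ℂ) :
    IntervalIntegrable (fun τ : ℝ => ℓ τ * (ψ τ - Q.eval (γ τ)) * deriv γ τ)
        volume 0 (2 * π) ∧
    IntervalIntegrable
        (fun τ : ℝ => Real.log ‖γ τ - γ 0‖ * φ τ * ‖deriv γ τ‖)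
        volume 0 (2 * π) ∧
    -(1 / (2 * π)) *
        ∫ τ in (0:ℝ)..(2 * π),
          Real.log ‖γ τ - γ 0‖ * φ τ * ‖deriv γ τ‖
      = ((1 / (2 * (π : ℂ) * Complex.I)) *
          ∫ τ in (0:ℝ)..(2 * π), ℓ τ * (ψ τ - Q.eval (γ τ)) * deriv γ τ).im := by
  have hπ2 : (0:ℝ) < 2 * π := by positivity
  have hγdiff : Differentiable ℝ γ := hγ.differentiable one_ne_zero
  have hγd : ∀ t, HasDerivAt γ (deriv γ t) t := fun t => (hγdiff t).hasDerivAt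
  have hγc : Continuous γ := hγ.continuous
  have hγ'c : Continuous (deriv γ) := hγ.continuous_deriv le_rfl
  have hγ2π : γ (2 * π) = γ 0 := by simpa using hper 0
  have hd2π : deriv γ (2 * π) = deriv γ 0 := by
    have h : (fun t => γ (t + 2 * π)) = γ := funext hper
    have h2 := deriv_comp_add_const γ (2 * π) 0
    rw [h] at h2
    simpa using h2.symm
  have hne : ∀ τ ∈ Set.Ioo (0:ℝ) (2 * π), γ τ - γ 0 ≠ 0 := by
    intro τ hτ h
    have heq : γ τ = γ 0 := sub_eq_zero.mp h
    exact hτ.1.ne' (hinj ⟨hτ.1.le, hτ.2⟩ ⟨le_rfl, hπ2⟩ heq)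
  have hℓc : ContinuousOn ℓ (Set.Ioo 0 (2 * π)) := fun τ hτ =>
    (hℓd τ hτ).continuousAt.continuousWithinAt
  have hc0 : deriv γ 0 ≠ 0 := hreg 0
  -- slope limits
  have hslope0 : Tendsto (fun τ : ℝ => (γ τ - γ 0) / (τ : ℂ)) (𝓝[>] 0) (𝓝 (deriv γ 0)) := by
    have h := hasDerivAt_iff_tendsto_slope.mp (hγd 0)
    have h2 := h.mono_left (nhdsWithin_mono 0 (fun x (hx : x ∈ Set.Ioi 0) => ne_of_gt hx))
    apply h2.congr'
    filter_upwards [self_mem_nhdsWithin] with τ (hτ : τ ∈ Set.Ioi (0:ℝ))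
    rw [slope_def_module, sub_zero, Complex.real_smul]
    push_cast
    rw [div_eq_inv_mul]
  have hslope2 : Tendsto (fun τ : ℝ => (γ τ - γ 0) / ((2 * π - τ : ℝ) : ℂ)) (𝓝[<] (2 * π))
      (𝓝 (-deriv γ 0)) := by
    have h := hasDerivAt_iff_tendsto_slope.mp (hγd (2 * π))
    rw [hd2π] at h
    have h2 := (h.mono_left (nhdsWithin_mono _ (fun x (hx : x ∈ Set.Iio (2 * π)) =>
      ne_of_lt hx))).neg
    apply h2.congr'
    filter_upwards [self_mem_nhdsWithin] with τ (hτ : τ ∈ Set.Iio (2 * π))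
    have hA : ((τ:ℂ) - 2*(π:ℂ)) ≠ 0 := by
      rw [sub_ne_zero]
      intro hh
      exact (ne_of_lt hτ) (by exact_mod_cast hh)
    have hB' : (2*(π:ℂ) - (τ:ℂ)) ≠ 0 := fun hh => hA (by
      rw [← neg_sub] at hh; simpa using neg_eq_zero.mp hh)
    rw [slope_def_module, hγ2π, Complex.real_smul]
    push_cast
    field_simp
    ring
  -- the two boundary neighbourhoods
  have hev0 : ∀ᶠ τ in 𝓝[>] (0:ℝ),
      ‖(γ τ - γ 0) / (τ : ℂ) / deriv γ 0 - 1‖ < 1/2 := by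
    have ht := ((hslope0.div_const (deriv γ 0)).sub_const 1)
    rw [div_self hc0, sub_self] at ht
    have ht2 : Tendsto (fun τ : ℝ => ‖(γ τ - γ 0) / (τ:ℂ) / deriv γ 0 - 1‖)
        (𝓝[>] 0) (𝓝 0) := by
      simpa [Function.comp_def] using (continuous_norm.tendsto 0).comp ht
    exact ht2.eventually_lt_const (by norm_num)
  obtain ⟨d₁, hd₁mem, hd₁sub⟩ := mem_nhdsGT_iff_exists_Ioo_subset.mp hev0
  have hev2 : ∀ᶠ τ in 𝓝[<] (2 * π),
      ‖(γ τ - γ 0) / ((2 * π - τ : ℝ) : ℂ) / (-deriv γ 0) - 1‖ < 1/2 := by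
    have ht := ((hslope2.div_const (-deriv γ 0)).sub_const 1)
    rw [div_self (neg_ne_zero.mpr hc0), sub_self] at ht
    have ht2 : Tendsto (fun τ : ℝ =>
        ‖(γ τ - γ 0) / ((2 * π - τ : ℝ) : ℂ) / (-deriv γ 0) - 1‖)
        (𝓝[<] (2 * π)) (𝓝 0) := by
      simpa [Function.comp_def] using (continuous_norm.tendsto 0).comp ht
    exact ht2.eventually_lt_const (by norm_num)
  obtain ⟨d₂, hd₂mem, hd₂sub⟩ := mem_nhdsLT_iff_exists_Ioo_subset.mp hev2
  set δ₁ : ℝ := min d₁ π with hδ₁def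
  have hδ₁pos : 0 < δ₁ := lt_min hd₁mem Real.pi_pos
  have hδ₁le : δ₁ ≤ π := min_le_right _ _
  set δ₂ : ℝ := max d₂ π with hδ₂def
  have hδ₂lt : δ₂ < 2 * π := max_lt hd₂mem (by linarith [Real.pi_pos])
  have hδ₂ge : π ≤ δ₂ := le_max_right _ _
  have hsub1 : Set.Ioo (0:ℝ) δ₁ ⊆ Set.Ioo 0 (2 * π) := fun x hx =>
    ⟨hx.1, lt_of_lt_of_le hx.2 (by linarith [Real.pi_pos])⟩
  have hsub2 : Set.Ioo δ₂ (2 * π) ⊆ Set.Ioo 0 (2 * π) := fun x hx =>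
    ⟨lt_of_le_of_lt (by linarith [Real.pi_pos] : (0:ℝ) ≤ δ₂) hx.1, hx.2⟩
  -- bound near 0
  have hbd1 : ∃ C, ∀ τ ∈ Set.Ioo (0:ℝ) δ₁, ‖ℓ τ - (Real.log τ : ℂ)‖ ≤ C := by
    apply bounded_log_aux (τ₀ := δ₁ / 2) Set.ordConnected_Ioo
      (⟨by linarith, by linarith⟩ : δ₁/2 ∈ Set.Ioo (0:ℝ) δ₁)
      (hℓc.mono hsub1) continuousOn_id (fun τ hτ => hτ.1)
      (g := fun τ => (γ τ - γ 0) / (τ : ℂ)) ?_ hc0 ?_ ?_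
    · apply ContinuousOn.div ((hγc.sub continuous_const).continuousOn)
        (Complex.continuous_ofReal.continuousOn)
      exact fun τ hτ => Complex.ofReal_ne_zero.mpr hτ.1.ne'
    · intro τ hτ
      exact (hd₁sub ⟨hτ.1, lt_of_lt_of_le hτ.2 (min_le_left _ _)⟩).le
    · intro τ hτ
      rw [hℓexp τ (hsub1 hτ)]
      have : ((τ:ℝ):ℂ) ≠ 0 := Complex.ofReal_ne_zero.mpr hτ.1.ne'
      field_simp
      rfl
  -- bound near 2π
  have hbd2 : ∃ C, ∀ τ ∈ Set.Ioo δ₂ (2 * π),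
      ‖ℓ τ - (Real.log (2 * π - τ) : ℂ)‖ ≤ C := by
    apply bounded_log_aux (τ₀ := (δ₂ + 2 * π) / 2) Set.ordConnected_Ioo
      (⟨by linarith, by linarith⟩ : (δ₂ + 2*π)/2 ∈ Set.Ioo δ₂ (2 * π))
      (hℓc.mono hsub2) (u := fun τ => 2 * π - τ)
      (continuous_const.sub continuous_id).continuousOn (fun τ hτ => by simp; linarith [hτ.2])
      (g := fun τ => (γ τ - γ 0) / ((2 * π - τ : ℝ) : ℂ)) ?_ (neg_ne_zero.mpr hc0) ?_ ?_
    · apply ContinuousOn.div ((hγc.sub continuous_const).continuousOn)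
      · exact (Complex.continuous_ofReal.comp (continuous_const.sub continuous_id)).continuousOn
      · intro τ hτ
        exact Complex.ofReal_ne_zero.mpr (sub_ne_zero.mpr (ne_of_gt hτ.2))
    · intro τ hτ
      exact (hd₂sub ⟨lt_of_le_of_lt (le_max_left _ _) hτ.1, hτ.2⟩).le
    · intro τ hτ
      rw [hℓexp τ (hsub2 hτ)]
      have h' : ((2 * π - τ : ℝ):ℂ) ≠ 0 :=
        Complex.ofReal_ne_zero.mpr (sub_ne_zero.mpr (ne_of_gt hτ.2))
      push_cast at h' ⊢
      rw [mul_comm]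
      exact (div_mul_cancel₀ _ h').symm
  obtain ⟨C₁, hC₁⟩ := hbd1
  obtain ⟨C₂, hC₂⟩ := hbd2
  -- middle bound
  have hKsub : Set.Icc (δ₁/2) (2*π - (2*π - δ₂)/2) ⊆ Set.Ioo 0 (2*π) := fun x hx =>
    ⟨lt_of_lt_of_le (by linarith) hx.1, lt_of_le_of_lt hx.2 (by linarith)⟩
  obtain ⟨C₀, hC₀⟩ := isCompact_Icc.exists_bound_of_continuousOn (hℓc.mono hKsub)
  set CC : ℝ := max C₀ 0 + (max C₁ 0 + max C₂ 0) with hCCdef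
  have hCC0 : 0 ≤ CC := by positivity
  set B : ℝ → ℝ := fun τ => CC + |Real.log τ| + |Real.log (2 * π - τ)| with hBdef
  have hBnn : ∀ τ, 0 ≤ B τ := fun τ => by
    have := abs_nonneg (Real.log τ); have := abs_nonneg (Real.log (2*π - τ)); simp [hBdef]; linarith
  have hB : ∀ τ ∈ Set.Ioo (0:ℝ) (2 * π), ‖ℓ τ‖ ≤ B τ := by
    intro τ hτ
    have hl1 := abs_nonneg (Real.log τ)
    have hl2 := abs_nonneg (Real.log (2 * π - τ))
    rcases lt_or_ge τ (δ₁/2) with h1 | h1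
    · have hmem : τ ∈ Set.Ioo (0:ℝ) δ₁ := ⟨hτ.1, by linarith⟩
      have h := hC₁ τ hmem
      have h2 : ‖ℓ τ‖ ≤ ‖ℓ τ - (Real.log τ : ℂ)‖ + |Real.log τ| := by
        have := norm_add_le (ℓ τ - (Real.log τ : ℂ)) ((Real.log τ : ℂ))
        simpa [Complex.norm_real] using this
      have : C₁ ≤ CC := by
        have h₁ := le_max_left C₁ (0:ℝ)
        have h₂ := le_max_right C₀ (0:ℝ)
        have h₃ := le_max_right C₂ (0:ℝ)
        simp only [hCCdef]; linarith
      simp only [hBdef]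
      linarith
    rcases lt_or_ge (2*π - (2*π - δ₂)/2) τ with h2 | h2
    · have hmem : τ ∈ Set.Ioo δ₂ (2 * π) := ⟨by linarith, hτ.2⟩
      have h := hC₂ τ hmem
      have h2' : ‖ℓ τ‖ ≤ ‖ℓ τ - (Real.log (2*π - τ) : ℂ)‖
          + |Real.log (2*π - τ)| := by
        have := norm_add_le (ℓ τ - (Real.log (2*π-τ) : ℂ)) ((Real.log (2*π-τ) : ℂ))
        simpa [Complex.norm_real] using this
      have : C₂ ≤ CC := by
        have h₁ := le_max_left C₂ (0:ℝ)
        have h₂ := le_max_right C₀ (0:ℝ)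
        have h₃ := le_max_right C₁ (0:ℝ)
        simp only [hCCdef]; linarith
      simp only [hBdef]
      linarith
    · have h := hC₀ τ ⟨h1, h2⟩
      have : C₀ ≤ CC := by
        have h₁ := le_max_left C₀ (0:ℝ)
        have h₂ := le_max_right C₁ (0:ℝ)
        have h₃ := le_max_right C₂ (0:ℝ)
        simp only [hCCdef]; linarith
      simp only [hBdef]
      linarith
  -- B is integrable
  have hBint : IntervalIntegrable B volume 0 (2 * π) := by
    have h1 : IntervalIntegrable (fun _ : ℝ => CC) volume 0 (2 * π) :=
      intervalIntegrable_const
    have h2 := absLog_intervalIntegrable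
    have h3 : IntervalIntegrable (fun τ : ℝ => |Real.log (2 * π - τ)|) volume 0 (2 * π) := by
      have := absLog_intervalIntegrable.comp_sub_left (2 * π)
      simpa using this.symm
    exact (h1.add h2).add h3
  have hBint' : IntegrableOn B (Set.Ioo 0 (2 * π)) volume := by
    rw [← integrableOn_Ioc_iff_integrableOn_Ioo]
    exact (intervalIntegrable_iff_integrableOn_Ioc_of_le hπ2.le).mp hBint
  -- master integrability of ℓ times continuous
  have key : ∀ b : ℝ → ℂ, Continuous b →
      IntervalIntegrable (fun τ => ℓ τ * b τ) volume 0 (2 * π) := by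
    intro b hb
    obtain ⟨M, hM⟩ := (isCompact_Icc (a := (0:ℝ)) (b := 2 * π)).exists_bound_of_continuousOn
      hb.continuousOn
    rw [intervalIntegrable_iff_integrableOn_Ioc_of_le hπ2.le,
      integrableOn_Ioc_iff_integrableOn_Ioo]
    apply Integrable.mono' (g := fun τ => B τ * max M 0) (hBint'.mul_const _)
      ((hℓc.mul hb.continuousOn).aestronglyMeasurable measurableSet_Ioo)
    rw [ae_restrict_iff' measurableSet_Ioo]
    refine Filter.Eventually.of_forall fun τ hτ => ?_
    rw [Pi.mul_apply, norm_mul]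
    have h1 : ‖ℓ τ‖ ≤ B τ := by exact hB τ hτ
    have h2 : ‖b τ‖ ≤ max M 0 := (hM τ ⟨hτ.1.le, hτ.2.le⟩).trans (le_max_left _ _)
    exact mul_le_mul h1 h2 (norm_nonneg _) (hBnn τ)
  -- continuity of ψ
  have hψc : Continuous ψ := by
    have h : Continuous fun τ => (φ τ : ℂ) * ((‖deriv γ τ‖ : ℝ) : ℂ) / deriv γ τ :=
      ((Complex.continuous_ofReal.comp hφc).mul
        (Complex.continuous_ofReal.comp (continuous_norm.comp hγ'c))).div hγ'c hreg
    exact (funext hψ : ψ = _) ▸ h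
  have hQγc : Continuous fun τ => Q.eval (γ τ) := Q.continuous.comp hγc
  -- claim 1
  have hint1 : IntervalIntegrable (fun τ => ℓ τ * (ψ τ - Q.eval (γ τ)) * deriv γ τ)
      volume 0 (2 * π) := by
    have := key _ ((hψc.sub hQγc).mul hγ'c)
    simpa [mul_assoc] using this
  have hψint : IntervalIntegrable (fun τ => ℓ τ * ψ τ * deriv γ τ) volume 0 (2 * π) := by
    have := key _ (hψc.mul hγ'c)
    simpa [mul_assoc] using this
  have hQbint : IntervalIntegrable (fun τ => ℓ τ * Q.eval (γ τ) * deriv γ τ)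
      volume 0 (2 * π) := by
    have := key _ (hQγc.mul hγ'c)
    simpa [mul_assoc] using this
  -- claim 2
  have hlog_cont : ContinuousOn (fun τ => Real.log (‖γ τ - γ 0‖))
      (Set.Ioo (0:ℝ) (2 * π)) := by
    apply ContinuousOn.log ((continuous_norm.comp (hγc.sub continuous_const)).continuousOn)
    exact fun τ hτ => norm_ne_zero_iff.mpr (hne τ hτ)
  have hRe : ∀ τ ∈ Set.Ioo (0:ℝ) (2 * π),
      (ℓ τ).re = Real.log (‖γ τ - γ 0‖) := by
    intro τ hτ
    have h := congrArg (‖·‖) (hℓexp τ hτ)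
    rw [Complex.norm_exp] at h
    rw [← h, Real.log_exp]
  have hint2 : IntervalIntegrable
      (fun τ => Real.log (‖γ τ - γ 0‖) * φ τ * ‖deriv γ τ‖)
      volume 0 (2 * π) := by
    rw [intervalIntegrable_iff_integrableOn_Ioc_of_le hπ2.le,
      integrableOn_Ioc_iff_integrableOn_Ioo]
    obtain ⟨M, hM⟩ := (isCompact_Icc (a := (0:ℝ)) (b := 2 * π)).exists_bound_of_continuousOn
      ((hφc.mul (continuous_norm.comp hγ'c)).continuousOn)
    apply Integrable.mono' (g := fun τ => B τ * max M 0) (hBint'.mul_const _)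
      (((hlog_cont.mul hφc.continuousOn).mul
        ((continuous_norm.comp hγ'c).continuousOn)).aestronglyMeasurable measurableSet_Ioo)
    rw [ae_restrict_iff' measurableSet_Ioo]
    refine Filter.Eventually.of_forall fun τ hτ => ?_
    have h1 : |Real.log (‖γ τ - γ 0‖)| ≤ B τ := by
      rw [← hRe τ hτ]
      exact (Complex.abs_re_le_norm _).trans (hB τ hτ)
    have h2 : ‖φ τ * ‖deriv γ τ‖‖ ≤ max M 0 :=
      (hM τ ⟨hτ.1.le, hτ.2.le⟩).trans (le_max_left _ _)
    have heq : Real.log (‖γ τ - γ 0‖) * φ τ * ‖deriv γ τ‖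
        = Real.log (‖γ τ - γ 0‖) * (φ τ * ‖deriv γ τ‖) := by ring
    simp only [Pi.mul_apply, Function.comp_apply]
    rw [Real.norm_eq_abs, heq, abs_mul]
    exact mul_le_mul h1 (by rwa [Real.norm_eq_abs] at h2) (abs_nonneg _) (hBnn τ)
  -- polynomial antiderivatives
  obtain ⟨R, hR⟩ := Polynomial.X_sub_C_dvd_sub_C_eval (a := γ 0) (p := pAnti Q)
  have hP₀eval : ∀ z : ℂ, (pAnti Q).eval z - (pAnti Q).eval (γ 0) = (z - γ 0) * R.eval z := by
    intro z
    have := congrArg (Polynomial.eval z) hR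
    simpa using this
  set F : ℝ → ℂ :=
    fun τ => ℓ τ * ((pAnti Q).eval (γ τ) - (pAnti Q).eval (γ 0)) - (pAnti R).eval (γ τ) with hFdef
  have hFderiv : ∀ τ ∈ Set.Ioo (0:ℝ) (2 * π),
      HasDerivAt F (ℓ τ * Q.eval (γ τ) * deriv γ τ) τ := by
    intro τ hτ
    have hPγ : HasDerivAt (fun t => (pAnti Q).eval (γ t) - (pAnti Q).eval (γ 0))
        (Q.eval (γ τ) * deriv γ τ) τ := by
      have h := (Polynomial.hasDerivAt (pAnti Q) (γ τ)).comp τ (hγd τ)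
      rw [pAnti_derivative] at h
      exact h.sub_const _
    have hSγ : HasDerivAt (fun t => (pAnti R).eval (γ t)) (R.eval (γ τ) * deriv γ τ) τ := by
      have h := (Polynomial.hasDerivAt (pAnti R) (γ τ)).comp τ (hγd τ)
      rwa [pAnti_derivative] at h
    have h := ((hℓd τ hτ).mul hPγ).sub hSγ
    refine h.congr_deriv ?_
    rw [hP₀eval (γ τ)]
    field_simp [hne τ hτ]
    ring
  -- boundary limits of ℓ τ * (γ τ - γ 0)
  have hlog1τ : Tendsto (fun τ : ℝ => |Real.log τ| * τ) (𝓝[>] (0:ℝ)) (𝓝 0) := by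
    have h := (tendsto_log_mul_rpow_nhdsGT_zero one_pos).neg
    rw [neg_zero] at h
    apply h.congr'
    filter_upwards [Ioo_mem_nhdsGT_of_mem (⟨le_rfl, one_pos⟩ : (0:ℝ) ∈ Set.Ico 0 1)] with τ hτ
    rw [Real.rpow_one, abs_of_nonpos (Real.log_nonpos hτ.1.le hτ.2.le)]
    ring
  have hBτ0 : Tendsto (fun τ : ℝ => B τ * τ) (𝓝[>] (0:ℝ)) (𝓝 0) := by
    have hc1 : Tendsto (fun τ : ℝ => (CC + |Real.log (2 * π - τ)|) * τ) (𝓝[>] 0) (𝓝 0) := by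
      have hcont : ContinuousAt (fun τ : ℝ => (CC + |Real.log (2 * π - τ)|) * τ) 0 := by
        have hl : ContinuousAt (fun τ : ℝ => Real.log (2 * π - τ)) 0 :=
          (Real.continuousAt_log (by simpa using hπ2.ne')).comp
            ((continuous_const.sub continuous_id).continuousAt)
        exact (continuousAt_const.add hl.abs).mul continuousAt_id
      have := hcont.tendsto.mono_left (nhdsWithin_le_nhds (s := Set.Ioi (0:ℝ)))
      simpa using this
    have hsum := hc1.add hlog1τ
    rw [add_zero] at hsum
    apply hsum.congr'
    filter_upwards [self_mem_nhdsWithin] with τ _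
    simp only [hBdef]
    ring
  have hBτ2 : Tendsto (fun τ : ℝ => B τ * (2 * π - τ)) (𝓝[<] (2 * π)) (𝓝 0) := by
    have hmap : Tendsto (fun τ : ℝ => 2 * π - τ) (𝓝[<] (2 * π)) (𝓝[>] (0:ℝ)) := by
      apply tendsto_nhdsWithin_of_tendsto_nhds_of_eventually_within
      · have : Tendsto (fun τ : ℝ => 2 * π - τ) (𝓝 (2 * π)) (𝓝 (2 * π - 2 * π)) :=
          (continuous_const.sub continuous_id).tendsto _
        rw [sub_self] at this
        exact this.mono_left nhdsWithin_le_nhds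
      · filter_upwards [self_mem_nhdsWithin] with τ (hτ : τ < 2 * π)
        simpa using hτ
    have hc1 : Tendsto (fun τ : ℝ => (CC + |Real.log τ|) * (2 * π - τ)) (𝓝[<] (2 * π)) (𝓝 0) := by
      have hcont : ContinuousAt (fun τ : ℝ => (CC + |Real.log τ|) * (2 * π - τ)) (2 * π) := by
        have hl : ContinuousAt (fun τ : ℝ => Real.log τ) (2 * π) :=
          Real.continuousAt_log hπ2.ne'
        exact (continuousAt_const.add hl.abs).mul ((continuous_const.sub continuous_id).continuousAt)
      have := hcont.tendsto.mono_left (nhdsWithin_le_nhds (s := Set.Iio (2 * π)))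
      simpa using this
    have hc2 : Tendsto (fun τ : ℝ => |Real.log (2 * π - τ)| * (2 * π - τ)) (𝓝[<] (2 * π)) (𝓝 0) :=
      hlog1τ.comp hmap
    have hsum := hc1.add hc2
    rw [add_zero] at hsum
    apply hsum.congr'
    filter_upwards [self_mem_nhdsWithin] with τ _
    simp only [hBdef]
    ring
  have T1 : Tendsto (fun τ => ℓ τ * (γ τ - γ 0)) (𝓝[>] (0:ℝ)) (𝓝 0) := by
    have hgt := hBτ0.mul ((continuous_norm.tendsto _).comp hslope0)
    rw [zero_mul] at hgt
    apply squeeze_zero_norm' ?_ hgt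
    filter_upwards [Ioo_mem_nhdsGT_of_mem (⟨le_rfl, hπ2⟩ : (0:ℝ) ∈ Set.Ico 0 (2 * π))] with τ hτ
    simp only [Function.comp_apply]
    rw [norm_mul]
    have habs : ‖γ τ - γ 0‖ = τ * ‖(γ τ - γ 0) / (τ:ℂ)‖ := by
      rw [norm_div, Complex.norm_real, Real.norm_eq_abs, abs_of_pos hτ.1,
        mul_div_cancel₀ _ hτ.1.ne']
    rw [habs, ← mul_assoc]
    exact mul_le_mul_of_nonneg_right
      (mul_le_mul_of_nonneg_right (hB τ hτ) hτ.1.le) (norm_nonneg _)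
  have T2 : Tendsto (fun τ => ℓ τ * (γ τ - γ 0)) (𝓝[<] (2 * π)) (𝓝 0) := by
    have hgt := hBτ2.mul ((continuous_norm.tendsto _).comp hslope2)
    rw [zero_mul] at hgt
    apply squeeze_zero_norm' ?_ hgt
    filter_upwards [Ioo_mem_nhdsLT_of_mem (⟨hπ2, le_rfl⟩ : 2 * π ∈ Set.Ioc (0:ℝ) (2 * π))]
      with τ hτ
    simp only [Function.comp_apply]
    rw [norm_mul]
    have hpos : (0:ℝ) < 2 * π - τ := by linarith [hτ.2]
    have habs : ‖γ τ - γ 0‖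
        = (2 * π - τ) * ‖(γ τ - γ 0) / ((2 * π - τ : ℝ):ℂ)‖ := by
      rw [norm_div, Complex.norm_real, Real.norm_eq_abs, abs_of_pos hpos,
        mul_div_cancel₀ _ hpos.ne']
    rw [habs, ← mul_assoc]
    exact mul_le_mul_of_nonneg_right
      (mul_le_mul_of_nonneg_right (hB τ hτ) hpos.le) (norm_nonneg _)
  -- limits of F
  have hγtend0 : Tendsto γ (𝓝[>] (0:ℝ)) (𝓝 (γ 0)) := (hγc.tendsto 0).mono_left nhdsWithin_le_nhds
  have hγtend2 : Tendsto γ (𝓝[<] (2 * π)) (𝓝 (γ 0)) := by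
    have := (hγc.tendsto (2 * π)).mono_left (nhdsWithin_le_nhds (s := Set.Iio (2 * π)))
    rwa [hγ2π] at this
  have hFa : Tendsto F (𝓝[>] (0:ℝ)) (𝓝 (0 * R.eval (γ 0) - (pAnti R).eval (γ 0))) := by
    have hRγ : Tendsto (fun τ => R.eval (γ τ)) (𝓝[>] (0:ℝ)) (𝓝 (R.eval (γ 0))) :=
      (R.continuous.tendsto _).comp hγtend0
    have hSγ : Tendsto (fun τ => (pAnti R).eval (γ τ)) (𝓝[>] (0:ℝ))
        (𝓝 ((pAnti R).eval (γ 0))) := ((pAnti R).continuous.tendsto _).comp hγtend0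
    have h := (T1.mul hRγ).sub hSγ
    apply h.congr
    intro τ
    simp only [hFdef]
    rw [hP₀eval (γ τ)]
    ring
  have hFb : Tendsto F (𝓝[<] (2 * π)) (𝓝 (0 * R.eval (γ 0) - (pAnti R).eval (γ 0))) := by
    have hRγ : Tendsto (fun τ => R.eval (γ τ)) (𝓝[<] (2 * π)) (𝓝 (R.eval (γ 0))) :=
      (R.continuous.tendsto _).comp hγtend2
    have hSγ : Tendsto (fun τ => (pAnti R).eval (γ τ)) (𝓝[<] (2 * π))
        (𝓝 ((pAnti R).eval (γ 0))) := ((pAnti R).continuous.tendsto _).comp hγtend2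
    have h := (T2.mul hRγ).sub hSγ
    apply h.congr
    intro τ
    simp only [hFdef]
    rw [hP₀eval (γ τ)]
    ring
  have hzero : ∫ τ in (0:ℝ)..(2 * π), ℓ τ * Q.eval (γ τ) * deriv γ τ = 0 := by
    rw [intervalIntegral.integral_eq_sub_of_hasDerivAt_of_tendsto hπ2 hFderiv hQbint hFa hFb]
    ring
  refine ⟨hint1, hint2, ?_⟩
  have hsplit : (fun τ : ℝ => ℓ τ * (ψ τ - Q.eval (γ τ)) * deriv γ τ)
      = fun τ => ℓ τ * ψ τ * deriv γ τ - ℓ τ * Q.eval (γ τ) * deriv γ τ := by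
    funext τ; ring
  have hAeq : (∫ τ in (0:ℝ)..(2 * π), ℓ τ * (ψ τ - Q.eval (γ τ)) * deriv γ τ)
      = ∫ τ in (0:ℝ)..(2 * π), ℓ τ * ψ τ * deriv γ τ := by
    rw [hsplit, intervalIntegral.integral_sub hψint hQbint, hzero, sub_zero]
  have hψγ' : ∀ τ, ψ τ * deriv γ τ = ((φ τ * ‖deriv γ τ‖ : ℝ) : ℂ) := by
    intro τ
    rw [hψ τ, div_mul_cancel₀ _ (hreg τ)]
    push_cast
    ring
  have hre_congr : (∫ τ in (0:ℝ)..(2 * π),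
      Real.log (‖γ τ - γ 0‖) * φ τ * ‖deriv γ τ‖)
      = ∫ τ in (0:ℝ)..(2 * π), (ℓ τ * ψ τ * deriv γ τ).re := by
    apply intervalIntegral.integral_congr_ae
    have h2πne : ∀ᵐ x : ℝ, x ≠ 2 * π := by
      have h0 : volume ({2 * π} : Set ℝ) = 0 := measure_singleton _
      rw [ae_iff]
      convert h0 using 2
      ext x
      simp
    filter_upwards [h2πne] with x hx hxI
    rw [Set.uIoc_of_le hπ2.le] at hxI
    have hxo : x ∈ Set.Ioo (0:ℝ) (2 * π) := ⟨hxI.1, lt_of_le_of_ne hxI.2 hx⟩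
    have hmul : ℓ x * ψ x * deriv γ x
        = ℓ x * ((φ x * ‖deriv γ x‖ : ℝ) : ℂ) := by
      rw [mul_assoc, hψγ' x]
    rw [hmul, Complex.mul_re, Complex.ofReal_re, Complex.ofReal_im, mul_zero, sub_zero,
      hRe x hxo]
    ring
  have hre_int : (∫ τ in (0:ℝ)..(2 * π), ℓ τ * ψ τ * deriv γ τ).re
      = ∫ τ in (0:ℝ)..(2 * π), (ℓ τ * ψ τ * deriv γ τ).re := by
    have := Complex.reCLM.intervalIntegral_comp_comm hψint
    simpa using this.symm
  rw [hAeq, hre_congr, ← hre_int]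
  set A := ∫ τ in (0:ℝ)..(2 * π), ℓ τ * ψ τ * deriv γ τ with hAdef
  have h2πI : (2 * (π:ℂ) * Complex.I) ≠ 0 := by
    apply mul_ne_zero (mul_ne_zero two_ne_zero ?_) Complex.I_ne_zero
    exact_mod_cast Real.pi_ne_zero
  have hz : (1 / (2 * (π:ℂ) * Complex.I)) = -(((2 * π:ℝ))⁻¹ : ℂ) * Complex.I := by
    rw [div_eq_iff h2πI]
    push_cast
    have hπc : ((π:ℝ):ℂ) ≠ 0 := by exact_mod_cast Real.pi_ne_zero
    field_simp
    linear_combination Complex.I_mul_I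
  rw [hz]
  have him : ((-(((2 * π:ℝ))⁻¹ : ℂ) * Complex.I) * A).im = -((2 * π:ℝ))⁻¹ * A.re := by
    simp [Complex.mul_im, Complex.mul_re]
  rw [him]
  rw [neg_mul, neg_mul, neg_inj, one_div]
end

section
/- Let γ : ℝ → ℂ be 2π-periodic and continuously differentiable with deriv γ t ≠ 0 for all t and γ injective on [0, 2π), set z₀ := γ(0), and let ℓ : (0, 2π) → ℂ be differentiable with deriv ℓ τ = γ'(τ)/(γ(τ) − z₀) and exp(ℓ(τ)) = γ(τ) − z₀ for all τ ∈ (0, 2π) (a continuous logarithm of γ − z₀ along the punctured curve). Then for every natural number j ≥ 0, the function τ ↦ ℓ(τ)·(γ(τ) − z₀)^j·γ'(τ) is integrable on (0, 2π) and ∫₀^{2π} ℓ(τ)·(γ(τ) − z₀)^j·γ'(τ) dτ = 0. (The identity I_j = 0 proved in Theorem 3.2: the contour integral of log(ζ − z₀)·(ζ − z₀)^j over the closed curve vanishes for every j = 0, 1, 2, ….) -/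
open intervalIntegral Real MeasureTheory Set Filter Topology



/-- MVT-based logarithmic growth bound: if `‖ψ' s‖ ≤ K / s` on `(0, δ]` then
`‖ψ τ‖ ≤ ‖ψ δ‖ + K * (log δ - log τ)`. -/
lemma aux_log_growth_bound (ψ ψ' : ℝ → ℂ) (δ K : ℝ) (hδ : 0 < δ) (hK : 0 ≤ K)
    (hd : ∀ s ∈ Set.Ioc (0:ℝ) δ, HasDerivAt ψ (ψ' s) s)
    (hb : ∀ s ∈ Set.Ioc (0:ℝ) δ, ‖ψ' s‖ ≤ K / s) :
    ∀ τ ∈ Set.Ioc (0:ℝ) δ, ‖ψ τ‖ ≤ ‖ψ δ‖ + K * (Real.log δ - Real.log τ) := by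
  intro τ hτ
  set T : ℝ := Real.log δ - Real.log τ with hT
  have hT0 : 0 ≤ T := sub_nonneg.2 (Real.log_le_log hτ.1 hτ.2)
  set h : ℝ → ℝ := fun t => δ * Real.exp (-t) with hh
  have hmem : ∀ t ∈ Set.Icc (0:ℝ) T, h t ∈ Set.Ioc (0:ℝ) δ := by
    intro t ht
    have h2 : h t = δ * Real.exp (-t) := rfl
    constructor
    · rw [h2]; positivity
    · have h1 : Real.exp (-t) ≤ 1 := Real.exp_le_one_iff.mpr (neg_nonpos.2 ht.1)
      rw [h2]
      nlinarith [hδ.le, Real.exp_pos (-t)]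
  have hgd : ∀ t ∈ Set.Icc (0:ℝ) T,
      HasDerivWithinAt (ψ ∘ h) ((-(δ * Real.exp (-t))) • ψ' (h t)) (Set.Icc 0 T) t := by
    intro t ht
    have hht : HasDerivAt h (-(δ * Real.exp (-t))) t := by
      have := ((Real.hasDerivAt_exp (-t)).comp t (hasDerivAt_neg t)).const_mul δ
      simpa [hh, mul_comm] using this
    exact ((hd (h t) (hmem t ht)).scomp t hht).hasDerivWithinAt
  have hbound : ∀ t ∈ Set.Icc (0:ℝ) T, ‖(-(δ * Real.exp (-t))) • ψ' (h t)‖ ≤ K := by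
    intro t ht
    have h1 := hb (h t) (hmem t ht)
    have hpos : 0 < δ * Real.exp (-t) := by positivity
    rw [norm_smul]
    have : ‖(-(δ * Real.exp (-t)))‖ = δ * Real.exp (-t) := by
      rw [norm_neg, Real.norm_eq_abs, abs_of_pos hpos]
    rw [this]
    calc δ * Real.exp (-t) * ‖ψ' (h t)‖ ≤ δ * Real.exp (-t) * (K / (h t)) := by
          gcongr
      _ = K := by
          rw [hh]; field_simp
  have hmvt := (convex_Icc (0:ℝ) T).norm_image_sub_le_of_norm_hasDerivWithin_le
    hgd hbound (Set.left_mem_Icc.2 hT0) (Set.right_mem_Icc.2 hT0)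
  have hh0 : h 0 = δ := by simp [hh]
  have hhT : h T = τ := by
    show δ * Real.exp (-(Real.log δ - Real.log τ)) = τ
    rw [neg_sub, Real.exp_sub, Real.exp_log hτ.1, Real.exp_log (lt_of_lt_of_le hτ.1 hτ.2)]
    field_simp
  have : ‖ψ τ - ψ δ‖ ≤ K * T := by
    have := hmvt
    rw [Function.comp, Function.comp, hh0, hhT, sub_zero, Real.norm_eq_abs,
      abs_of_nonneg hT0] at this
    exact this
  calc ‖ψ τ‖ = ‖ψ δ + (ψ τ - ψ δ)‖ := by ring_nf
    _ ≤ ‖ψ δ‖ + ‖ψ τ - ψ δ‖ := norm_add_le _ _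
    _ ≤ ‖ψ δ‖ + K * T := by linarith



/-- Near a regular point, `‖γ s - γ a‖ ≥ (‖γ'(a)‖/2)·|s - a|`. -/
lemma aux_lower_bound (γ : ℝ → ℂ) (hγ : ContDiff ℝ 1 γ) (a : ℝ) (ha : deriv γ a ≠ 0) :
    ∃ δ > 0, ∀ s : ℝ, |s - a| ≤ δ → ‖deriv γ a‖ / 2 * |s - a| ≤ ‖γ s - γ a‖ := by
  have hc : Continuous (deriv γ) := hγ.continuous_deriv le_rfl
  have hεpos : 0 < ‖deriv γ a‖ / 2 := by
    have := norm_pos_iff.mpr ha; linarith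
  obtain ⟨δ', hδ', hball⟩ := Metric.continuousAt_iff.1 hc.continuousAt _ hεpos
  refine ⟨δ' / 2, by positivity, fun s hs => ?_⟩
  set d := deriv γ a with hd
  have hderiv : ∀ t ∈ Set.Icc (a - δ'/2) (a + δ'/2),
      HasDerivWithinAt (fun t => γ t - t • d) (deriv γ t - d)
        (Set.Icc (a - δ'/2) (a + δ'/2)) t := by
    intro t _
    have h1 : HasDerivAt (fun t : ℝ => γ t - t • d) (deriv γ t - (1:ℝ) • d) t :=
      ((hγ.differentiable one_ne_zero t).hasDerivAt).sub ((hasDerivAt_id t).smul_const d)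
    simpa using h1.hasDerivWithinAt
  have hbound : ∀ t ∈ Set.Icc (a - δ'/2) (a + δ'/2), ‖deriv γ t - d‖ ≤ ‖d‖ / 2 := by
    intro t ht
    have : dist t a < δ' := by
      rw [Real.dist_eq]
      rw [Set.mem_Icc] at ht
      rw [abs_lt]
      constructor <;> [linarith [ht.1]; linarith [ht.2]]
    have := hball this
    rw [dist_eq_norm] at this
    exact this.le
  have hmem_s : s ∈ Set.Icc (a - δ'/2) (a + δ'/2) := by
    rw [abs_le] at hs
    constructor <;> [linarith [hs.1]; linarith [hs.2]]
  have hmem_a : a ∈ Set.Icc (a - δ'/2) (a + δ'/2) := by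
    constructor <;> linarith
  have hmvt := (convex_Icc (a - δ'/2) (a + δ'/2)).norm_image_sub_le_of_norm_hasDerivWithin_le
    hderiv hbound hmem_a hmem_s
  have heq : (γ s - s • d) - (γ a - a • d) = (γ s - γ a) - (s - a) • d := by
    rw [sub_smul]; ring_nf
  rw [heq, Real.norm_eq_abs] at hmvt
  have h2 : ‖(s - a) • d‖ - ‖γ s - γ a‖ ≤ ‖(s - a) • d - (γ s - γ a)‖ :=
    norm_sub_norm_le _ _
  rw [← norm_neg ((s - a) • d - (γ s - γ a)), neg_sub] at h2
  rw [norm_smul, Real.norm_eq_abs] at h2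
  nlinarith [abs_nonneg (s - a)]

/-- `σ^n (A + B(-log σ)) → 0` as `σ → 0⁺` for `n ≥ 1`. -/
lemma aux_tendsto_zero (A B : ℝ) (n : ℕ) (hn : 0 < n) :
    Tendsto (fun σ : ℝ => σ ^ n * (A + B * (-Real.log σ))) (𝓝[>] (0:ℝ)) (𝓝 0) := by
  have h1 : Tendsto (fun σ : ℝ => σ ^ n) (𝓝[>] (0:ℝ)) (𝓝 0) := by
    simpa [zero_pow hn.ne'] using
      ((continuous_pow n).tendsto (0:ℝ)).mono_left
        (nhdsWithin_le_nhds (s := Set.Ioi (0:ℝ)))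
  have h2 : Tendsto (fun σ : ℝ => Real.log σ * σ ^ n) (𝓝[>] (0:ℝ)) (𝓝 0) := by
    have hr : (0:ℝ) < n := by exact_mod_cast hn
    have := tendsto_log_mul_rpow_nhdsGT_zero hr
    refine this.congr' ?_
    filter_upwards [self_mem_nhdsWithin] with σ (hσ : σ ∈ Set.Ioi (0:ℝ))
    rw [Real.rpow_natCast]
  have : Tendsto (fun σ : ℝ => σ ^ n * A + B * (-(Real.log σ * σ ^ n)))
      (𝓝[>] (0:ℝ)) (𝓝 (0 * A + B * (-0))) :=
    ((h1.mul_const A).add ((h2.neg).const_mul B))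
  simp only [zero_mul, neg_zero, mul_zero, add_zero] at this
  refine this.congr fun σ => by ring

lemma aux_neg_log_le (τ : ℝ) (hτ : 0 < τ) : -Real.log τ ≤ 2 * τ ^ (-(2:ℝ)⁻¹) := by
  have h1 : Real.log (τ ^ (-(2:ℝ)⁻¹)) = (-(2:ℝ)⁻¹) * Real.log τ := Real.log_rpow hτ _
  have h2 : Real.log (τ ^ (-(2:ℝ)⁻¹)) ≤ τ ^ (-(2:ℝ)⁻¹) - 1 :=
    Real.log_le_sub_one_of_pos (Real.rpow_pos_of_pos hτ _)
  have h3 : 0 < τ ^ (-(2:ℝ)⁻¹) := Real.rpow_pos_of_pos hτ _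
  nlinarith

set_option maxHeartbeats 2000000 in
/-- **The identity `I_j = 0` from the proof of Theorem 3.2**: the contour integral of
`log(ζ − z₀)·(ζ − z₀)^j` over the closed curve vanishes for every `j`, where `ℓ` is a
continuous logarithm of `γ − z₀` along the punctured curve. -/
theorem log_moment_integrals_vanish
    (γ : ℝ → ℂ) (hper : Function.Periodic γ (2 * π))
    (hγ : ContDiff ℝ 1 γ) (hreg : ∀ t : ℝ, deriv γ t ≠ 0)
    (hinj : Set.InjOn γ (Set.Ico 0 (2 * π)))
    (ℓ : ℝ → ℂ)
    (hℓd : ∀ τ ∈ Set.Ioo (0:ℝ) (2 * π), HasDerivAt ℓ (deriv γ τ / (γ τ - γ 0)) τ)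
    (hℓexp : ∀ τ ∈ Set.Ioo (0:ℝ) (2 * π), Complex.exp (ℓ τ) = γ τ - γ 0)
    (j : ℕ) :
    IntervalIntegrable (fun τ : ℝ => ℓ τ * (γ τ - γ 0) ^ j * deriv γ τ)
        volume 0 (2 * π) ∧
    ∫ τ in (0:ℝ)..(2 * π), ℓ τ * (γ τ - γ 0) ^ j * deriv γ τ = 0 := by
  have hπ : 0 < π := Real.pi_pos
  have h2π : (0:ℝ) < 2 * π := by linarith
  have hγ2π : γ (2 * π) = γ 0 := by simpa using hper 0
  have hdiff : Differentiable ℝ γ := hγ.differentiable one_ne_zero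
  have hcd : Continuous (deriv γ) := hγ.continuous_deriv le_rfl
  -- nonvanishing of γ τ - γ 0 inside
  have hne : ∀ τ ∈ Set.Ioo (0:ℝ) (2*π), γ τ - γ 0 ≠ 0 := by
    intro τ hτ h
    have h1 : γ τ = γ 0 := by rwa [sub_eq_zero] at h
    exact hτ.1.ne' (hinj ⟨hτ.1.le, hτ.2⟩ ⟨le_rfl, h2π⟩ h1)
  -- global bound on deriv γ
  obtain ⟨M₀, hM₀⟩ := (isCompact_Icc (a := (0:ℝ)) (b := 2*π)).exists_bound_of_continuousOn
    hcd.continuousOn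
  set M : ℝ := max M₀ 0 with hM
  have hMnn : 0 ≤ M := le_max_right _ _
  have hMb : ∀ t ∈ Set.Icc (0:ℝ) (2*π), ‖deriv γ t‖ ≤ M :=
    fun t ht => le_trans (hM₀ t ht) (le_max_left _ _)
  -- Lipschitz bound on γ over [0, 2π]
  have hlip : ∀ u ∈ Set.Icc (0:ℝ) (2*π), ∀ v ∈ Set.Icc (0:ℝ) (2*π),
      ‖γ v - γ u‖ ≤ M * |v - u| := by
    intro u hu v hv
    have := (convex_Icc (0:ℝ) (2*π)).norm_image_sub_le_of_norm_hasDerivWithin_le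
      (fun t _ => (hdiff t).hasDerivAt.hasDerivWithinAt) hMb hu hv
    simpa [Real.norm_eq_abs] using this
  -- lower bounds near the endpoints
  obtain ⟨δa, hδa, hlowa⟩ := aux_lower_bound γ hγ 0 (hreg 0)
  obtain ⟨δb, hδb, hlowb⟩ := aux_lower_bound γ hγ (2*π) (hreg (2*π))
  set ca : ℝ := ‖deriv γ 0‖ / 2 with hca
  set cb : ℝ := ‖deriv γ (2*π)‖ / 2 with hcb
  have hcapos : 0 < ca := by
    have := norm_pos_iff.mpr (hreg 0); rw [hca]; linarith
  have hcbpos : 0 < cb := by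
    have := norm_pos_iff.mpr (hreg (2*π)); rw [hcb]; linarith
  set δ₁ : ℝ := min δa (min 1 (π/2)) with hδ₁def
  set δ₂ : ℝ := min δb (min 1 (π/2)) with hδ₂def
  have hδ₁pos : 0 < δ₁ := lt_min hδa (lt_min one_pos (by linarith))
  have hδ₂pos : 0 < δ₂ := lt_min hδb (lt_min one_pos (by linarith))
  have hδ₁le1 : δ₁ ≤ 1 := le_trans (min_le_right _ _) (min_le_left _ _)
  have hδ₂le1 : δ₂ ≤ 1 := le_trans (min_le_right _ _) (min_le_left _ _)
  have hδ₁leπ : δ₁ ≤ π/2 := le_trans (min_le_right _ _) (min_le_right _ _)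
  have hδ₂leπ : δ₂ ≤ π/2 := le_trans (min_le_right _ _) (min_le_right _ _)
  have hδ₁lea : δ₁ ≤ δa := min_le_left _ _
  have hδ₂leb : δ₂ ≤ δb := min_le_left _ _
  -- lower bounds restated
  have hlow1 : ∀ s ∈ Set.Ioc (0:ℝ) δ₁, ca * s ≤ ‖γ s - γ 0‖ := by
    intro s hs
    have := hlowa s (by rw [sub_zero, abs_of_pos hs.1]; exact hs.2.trans hδ₁lea)
    rwa [sub_zero, abs_of_pos hs.1] at this
  have hlow2 : ∀ s ∈ Set.Ioc (0:ℝ) δ₂, cb * s ≤ ‖γ (2*π - s) - γ 0‖ := by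
    intro s hs
    have habs : |2*π - s - 2*π| = s := by rw [abs_of_nonpos (by linarith [hs.1])]; ring
    have := hlowb (2*π - s) (by rw [habs]; exact hs.2.trans hδ₂leb)
    rwa [habs, hγ2π] at this
  -- membership helpers
  have hsub1 : ∀ s ∈ Set.Ioc (0:ℝ) δ₁, s ∈ Set.Ioo (0:ℝ) (2*π) := by
    intro s hs; exact ⟨hs.1, by linarith [hs.2, hδ₁leπ, hπ]⟩
  have hsub2 : ∀ s ∈ Set.Ioc (0:ℝ) δ₂, (2*π - s) ∈ Set.Ioo (0:ℝ) (2*π) := by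
    intro s hs
    constructor
    · linarith [hs.2, hδ₂leπ, hπ]
    · linarith [hs.1]
  -- log growth bounds for ℓ near the endpoints
  set K₁ : ℝ := M / ca with hK₁
  set K₂ : ℝ := M / cb with hK₂
  have hK₁nn : 0 ≤ K₁ := div_nonneg hMnn hcapos.le
  have hK₂nn : 0 ≤ K₂ := div_nonneg hMnn hcbpos.le
  have B₁ : ∀ τ ∈ Set.Ioc (0:ℝ) δ₁, ‖ℓ τ‖ ≤ ‖ℓ δ₁‖ + K₁ * (-Real.log τ) := by
    have hmain := aux_log_growth_bound ℓ (fun s => deriv γ s / (γ s - γ 0)) δ₁ K₁ hδ₁pos hK₁nn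
      (fun s hs => hℓd s (hsub1 s hs))
      (fun s hs => by
        rw [norm_div, hK₁, div_div]
        exact div_le_div₀ hMnn
          (hMb s ⟨hs.1.le, by linarith [hs.2, hδ₁leπ, hπ]⟩)
          (mul_pos hcapos hs.1) (hlow1 s hs))
    intro τ hτ
    have hlog : Real.log δ₁ ≤ 0 := Real.log_nonpos hδ₁pos.le hδ₁le1
    have h1 := hmain τ hτ
    have h2 : K₁ * (Real.log δ₁ - Real.log τ) = K₁ * Real.log δ₁ + K₁ * (-Real.log τ) := by ring
    have h3 : K₁ * Real.log δ₁ ≤ 0 := mul_nonpos_iff.2 (Or.inl ⟨hK₁nn, hlog⟩)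
    linarith
  have B₂ : ∀ σ ∈ Set.Ioc (0:ℝ) δ₂, ‖ℓ (2*π - σ)‖ ≤ ‖ℓ (2*π - δ₂)‖ + K₂ * (-Real.log σ) := by
    have hmain := aux_log_growth_bound (fun σ => ℓ (2*π - σ))
      (fun σ => (-1 : ℝ) • (deriv γ (2*π - σ) / (γ (2*π - σ) - γ 0))) δ₂ K₂ hδ₂pos hK₂nn
      (fun σ hσ => (hℓd (2*π - σ) (hsub2 σ hσ)).scomp σ ((hasDerivAt_id σ).const_sub (2*π)))
      (fun σ hσ => by
        rw [norm_smul, norm_neg, norm_one, one_mul, norm_div, hK₂, div_div]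
        exact div_le_div₀ hMnn
          (hMb (2*π - σ) ⟨by linarith [hσ.2, hδ₂leπ, hπ], by linarith [hσ.1]⟩)
          (mul_pos hcbpos hσ.1) (hlow2 σ hσ))
    intro σ hσ
    have hlog : Real.log δ₂ ≤ 0 := Real.log_nonpos hδ₂pos.le hδ₂le1
    have h1 := hmain σ hσ
    have h2 : K₂ * (Real.log δ₂ - Real.log σ) = K₂ * Real.log δ₂ + K₂ * (-Real.log σ) := by ring
    have h3 : K₂ * Real.log δ₂ ≤ 0 := mul_nonpos_iff.2 (Or.inl ⟨hK₂nn, hlog⟩)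
    linarith
  -- middle bound
  have hSsub : Set.Icc δ₁ (2*π - δ₂) ⊆ Set.Ioo (0:ℝ) (2*π) := by
    intro t ht
    exact ⟨lt_of_lt_of_le hδ₁pos ht.1, lt_of_le_of_lt ht.2 (by linarith)⟩
  obtain ⟨C₀, hC₀⟩ := (isCompact_Icc (a := δ₁) (b := 2*π - δ₂)).exists_bound_of_continuousOn
    (fun t ht => ((hℓd t (hSsub ht)).continuousAt).continuousWithinAt)
  -- global bound on ℓ via an integrable dominating function
  set A : ℝ := max C₀ (max (‖ℓ δ₁‖ + 2) (‖ℓ (2*π - δ₂)‖ + 2)) with hA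
  set B : ℝ := max K₁ K₂ with hB
  have hBnn : 0 ≤ B := le_trans hK₁nn (le_max_left _ _)
  set G : ℝ → ℝ := fun τ => A + B * (2 * τ ^ (-(2:ℝ)⁻¹) + 2 * (2*π - τ) ^ (-(2:ℝ)⁻¹)) with hG
  have hGbd : ∀ τ ∈ Set.Ioo (0:ℝ) (2*π), ‖ℓ τ‖ ≤ G τ := by
    intro τ hτ
    have hrp1 : 0 < τ ^ (-(2:ℝ)⁻¹) := Real.rpow_pos_of_pos hτ.1 _
    have hrp2 : 0 < (2*π - τ) ^ (-(2:ℝ)⁻¹) := Real.rpow_pos_of_pos (by linarith [hτ.2]) _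
    rcases le_or_gt τ δ₁ with hcase1 | hcase1
    · have h1 := B₁ τ ⟨hτ.1, hcase1⟩
      have h2 := aux_neg_log_le τ hτ.1
      have h3 : K₁ * (-Real.log τ) ≤ B * (2 * τ ^ (-(2:ℝ)⁻¹)) := by
        calc K₁ * (-Real.log τ) ≤ K₁ * (2 * τ ^ (-(2:ℝ)⁻¹)) := by
              exact mul_le_mul_of_nonneg_left h2 hK₁nn
          _ ≤ B * (2 * τ ^ (-(2:ℝ)⁻¹)) := by
              apply mul_le_mul_of_nonneg_right (le_max_left _ _); positivity
      have h4 : ‖ℓ δ₁‖ ≤ A := le_trans (by linarith) (le_trans (le_max_left _ _) (le_max_right _ _))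
      have h5 : 0 ≤ B * (2 * (2*π - τ) ^ (-(2:ℝ)⁻¹)) := by positivity
      have hsplit : B * (2 * τ ^ (-(2:ℝ)⁻¹) + 2 * (2*π - τ) ^ (-(2:ℝ)⁻¹))
          = B * (2 * τ ^ (-(2:ℝ)⁻¹)) + B * (2 * (2*π - τ) ^ (-(2:ℝ)⁻¹)) := by ring
      simp only [hG]
      linarith
    rcases le_or_gt (2*π - δ₂) τ with hcase2 | hcase2
    · have hmem : (2*π - τ) ∈ Set.Ioc (0:ℝ) δ₂ := ⟨by linarith [hτ.2], by linarith⟩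
      have h1 := B₂ (2*π - τ) hmem
      rw [show 2*π - (2*π - τ) = τ by ring] at h1
      have h2 := aux_neg_log_le (2*π - τ) (by linarith [hτ.2])
      have h3 : K₂ * (-Real.log (2*π - τ)) ≤ B * (2 * (2*π - τ) ^ (-(2:ℝ)⁻¹)) := by
        calc K₂ * (-Real.log (2*π - τ)) ≤ K₂ * (2 * (2*π - τ) ^ (-(2:ℝ)⁻¹)) :=
              mul_le_mul_of_nonneg_left h2 hK₂nn
          _ ≤ B * (2 * (2*π - τ) ^ (-(2:ℝ)⁻¹)) := by
              apply mul_le_mul_of_nonneg_right (le_max_right _ _); positivity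
      have h4 : ‖ℓ (2*π - δ₂)‖ ≤ A :=
        le_trans (by linarith) (le_trans (le_max_right _ _) (le_max_right _ _))
      have h5 : 0 ≤ B * (2 * τ ^ (-(2:ℝ)⁻¹)) := by positivity
      have hsplit : B * (2 * τ ^ (-(2:ℝ)⁻¹) + 2 * (2*π - τ) ^ (-(2:ℝ)⁻¹))
          = B * (2 * τ ^ (-(2:ℝ)⁻¹)) + B * (2 * (2*π - τ) ^ (-(2:ℝ)⁻¹)) := by ring
      simp only [hG]
      linarith
    · have h1 := hC₀ τ ⟨hcase1.le, hcase2.le⟩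
      have h4 : C₀ ≤ A := le_max_left _ _
      have h5 : 0 ≤ B * (2 * τ ^ (-(2:ℝ)⁻¹) + 2 * (2*π - τ) ^ (-(2:ℝ)⁻¹)) := by positivity
      simp only [hG]
      linarith
  -- bound for the polynomial part
  have hgcont : Continuous (fun τ => (γ τ - γ 0) ^ j * deriv γ τ) :=
    ((hγ.continuous.sub continuous_const).pow j).mul hcd
  obtain ⟨Mg₀, hMg₀⟩ := (isCompact_Icc (a := (0:ℝ)) (b := 2*π)).exists_bound_of_continuousOn
    hgcont.continuousOn
  set Mg : ℝ := max Mg₀ 0 with hMg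
  have hMgnn : 0 ≤ Mg := le_max_right _ _
  have hMgb : ∀ t ∈ Set.Icc (0:ℝ) (2*π), ‖(γ t - γ 0) ^ j * deriv γ t‖ ≤ Mg :=
    fun t ht => le_trans (hMg₀ t ht) (le_max_left _ _)
  -- integrability of the dominating function
  have i1 : IntervalIntegrable (fun τ : ℝ => τ ^ (-(2:ℝ)⁻¹)) volume 0 (2*π) :=
    intervalIntegrable_rpow' (by norm_num)
  have i2 : IntervalIntegrable (fun τ : ℝ => (2*π - τ) ^ (-(2:ℝ)⁻¹)) volume 0 (2*π) := by
    simpa using (i1.comp_sub_left (2*π)).symm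
  have iG : IntervalIntegrable (fun τ => G τ * Mg) volume 0 (2*π) := by
    apply IntervalIntegrable.mul_const
    exact intervalIntegrable_const.add (((i1.const_mul 2).add (i2.const_mul 2)).const_mul B)
  -- integrability of the integrand
  have hint : IntervalIntegrable (fun τ : ℝ => ℓ τ * (γ τ - γ 0) ^ j * deriv γ τ)
      volume 0 (2*π) := by
    rw [intervalIntegrable_iff_integrableOn_Ioo_of_le h2π.le]
    rw [intervalIntegrable_iff_integrableOn_Ioo_of_le h2π.le] at iG
    apply iG.integrable.mono'
    · apply ContinuousOn.aestronglyMeasurable _ measurableSet_Ioo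
      exact ContinuousOn.mul
        (ContinuousOn.mul (fun t ht => ((hℓd t ht).continuousAt).continuousWithinAt)
          (((hγ.continuous.sub continuous_const).pow j).continuousOn))
        hcd.continuousOn
    · filter_upwards [ae_restrict_mem measurableSet_Ioo] with τ hτ
      have h1 : ‖ℓ τ * (γ τ - γ 0) ^ j * deriv γ τ‖
          = ‖ℓ τ‖ * ‖(γ τ - γ 0) ^ j * deriv γ τ‖ := by
        rw [mul_assoc, norm_mul]
      rw [h1]
      exact mul_le_mul (hGbd τ hτ)
        (hMgb τ ⟨hτ.1.le, hτ.2.le⟩) (norm_nonneg _)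
        (le_trans (norm_nonneg _) (hGbd τ hτ))
  refine ⟨hint, ?_⟩
  -- the antiderivative
  set c : ℂ := (j : ℂ) + 1 with hcdef
  have hcne : c ≠ 0 := by
    rw [hcdef]
    have h : ((j:ℂ) + 1) = ((j+1 : ℕ) : ℂ) := by push_cast; ring
    rw [h]
    exact_mod_cast Nat.succ_ne_zero j
  set e : ℂ := 1 / c with he
  set F : ℝ → ℂ := fun τ => e * (γ τ - γ 0) ^ (j+1) * (ℓ τ - e) with hF
  have hFd : ∀ τ ∈ Set.Ioo (0:ℝ) (2*π),
      HasDerivAt F (ℓ τ * (γ τ - γ 0) ^ j * deriv γ τ) τ := by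
    intro τ hτ
    have hX := hne τ hτ
    have hpow : HasDerivAt (fun τ => (γ τ - γ 0) ^ (j+1))
        (deriv γ τ • (((j+1 : ℕ) : ℂ) * (γ τ - γ 0) ^ j)) τ := by
      have := (hasDerivAt_pow (j+1) (γ τ - γ 0)).scomp τ
        ((hdiff τ).hasDerivAt.sub_const (γ 0))
      simpa [Function.comp_def] using this
    have hprod := ((hpow.const_mul e).mul ((hℓd τ hτ).sub_const e))
    have hkey : e * (deriv γ τ • (((j+1 : ℕ) : ℂ) * (γ τ - γ 0) ^ j)) * (ℓ τ - e)
        + (e * (γ τ - γ 0) ^ (j+1)) * (deriv γ τ / (γ τ - γ 0))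
        = ℓ τ * (γ τ - γ 0) ^ j * deriv γ τ := by
      have hc' : ((j+1 : ℕ) : ℂ) = c := by rw [hcdef]; push_cast; ring
      rw [smul_eq_mul, hc', he]
      field_simp
      ring
    rw [hF]
    exact hkey ▸ hprod
  -- limit of F at 0⁺
  set A₁ : ℝ := ‖ℓ δ₁‖ + ‖e‖ with hA₁
  have htend1 : Tendsto (fun σ : ℝ => ‖e‖ * M^(j+1) * (σ^(j+1) * (A₁ + K₁ * (-Real.log σ))))
      (𝓝[>] (0:ℝ)) (𝓝 0) := by
    have := (aux_tendsto_zero A₁ K₁ (j+1) (Nat.succ_pos j)).const_mul (‖e‖ * M^(j+1))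
    simpa using this
  have hlim0 : Tendsto F (𝓝[>] (0:ℝ)) (𝓝 0) := by
    apply squeeze_zero_norm' _ htend1
    filter_upwards [Ioc_mem_nhdsGT_of_mem (Set.left_mem_Ico.2 hδ₁pos)] with τ hτ
    have hτIoo := hsub1 τ hτ
    have hτIcc : τ ∈ Set.Icc (0:ℝ) (2*π) := ⟨hτIoo.1.le, hτIoo.2.le⟩
    have h1 : ‖γ τ - γ 0‖ ≤ M * τ := by
      have := hlip 0 (Set.left_mem_Icc.2 h2π.le) τ hτIcc
      simpa [abs_of_nonneg hτ.1.le] using this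
    have h2 : ‖ℓ τ - e‖ ≤ A₁ + K₁ * (-Real.log τ) := by
      have hb := B₁ τ hτ
      have htri := norm_sub_le (ℓ τ) e
      rw [hA₁]; linarith
    have hFn : ‖F τ‖ = ‖e‖ * ‖γ τ - γ 0‖^(j+1) * ‖ℓ τ - e‖ := by
      simp only [hF]; rw [norm_mul, norm_mul, norm_pow]
    rw [hFn]
    calc ‖e‖ * ‖γ τ - γ 0‖^(j+1) * ‖ℓ τ - e‖
        ≤ ‖e‖ * (M * τ)^(j+1) * (A₁ + K₁ * (-Real.log τ)) := by
          apply mul_le_mul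
            (mul_le_mul le_rfl (pow_le_pow_left₀ (norm_nonneg _) h1 (j+1))
              (pow_nonneg (norm_nonneg _) _) (norm_nonneg _))
            h2 (norm_nonneg _)
            (mul_nonneg (norm_nonneg _) (pow_nonneg (mul_nonneg hMnn hτ.1.le) _))
      _ = ‖e‖ * M^(j+1) * (τ^(j+1) * (A₁ + K₁ * (-Real.log τ))) := by
          rw [mul_pow]; ring
  -- limit of F at (2π)⁻
  set A₂ : ℝ := ‖ℓ (2*π - δ₂)‖ + ‖e‖ with hA₂
  have hmap : Tendsto (fun τ : ℝ => 2*π - τ) (𝓝[<] (2*π)) (𝓝[>] (0:ℝ)) := by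
    rw [tendsto_nhdsWithin_iff]
    constructor
    · have h2 : Tendsto (fun τ : ℝ => 2*π - τ) (𝓝 (2*π)) (𝓝 (2*π - 2*π)) :=
        (continuous_const.sub continuous_id).tendsto (2*π)
      simpa using h2.mono_left nhdsWithin_le_nhds
    · filter_upwards [self_mem_nhdsWithin] with τ (hτ : τ ∈ Set.Iio (2*π))
      simp only [Set.mem_Ioi]
      have : τ < 2*π := hτ
      linarith
  have htend2 : Tendsto (fun τ : ℝ => ‖e‖ * M^(j+1)
      * ((2*π - τ)^(j+1) * (A₂ + K₂ * (-Real.log (2*π - τ))))) (𝓝[<] (2*π)) (𝓝 0) := by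
    have := ((aux_tendsto_zero A₂ K₂ (j+1) (Nat.succ_pos j)).const_mul
      (‖e‖ * M^(j+1))).comp hmap
    simpa [Function.comp_def] using this
  have hlim2 : Tendsto F (𝓝[<] (2*π)) (𝓝 0) := by
    apply squeeze_zero_norm' _ htend2
    filter_upwards [Ico_mem_nhdsLT_of_mem
      (Set.right_mem_Ioc.2 (by linarith : 2*π - δ₂ < 2*π))] with τ hτ
    have hσ : (2*π - τ) ∈ Set.Ioc (0:ℝ) δ₂ := ⟨by linarith [hτ.2], by linarith [hτ.1]⟩
    have hτIcc : τ ∈ Set.Icc (0:ℝ) (2*π) := ⟨by linarith [hτ.1, hδ₂leπ, hπ], hτ.2.le⟩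
    have h1 : ‖γ τ - γ 0‖ ≤ M * (2*π - τ) := by
      have := hlip (2*π) (Set.right_mem_Icc.2 h2π.le) τ hτIcc
      rw [hγ2π] at this
      rw [abs_of_nonpos (by linarith [hτ.2] : τ - 2*π ≤ 0)] at this
      calc ‖γ τ - γ 0‖ ≤ M * -(τ - 2*π) := this
        _ = M * (2*π - τ) := by ring
    have h2 : ‖ℓ τ - e‖ ≤ A₂ + K₂ * (-Real.log (2*π - τ)) := by
      have hb := B₂ (2*π - τ) hσ
      rw [show 2*π - (2*π - τ) = τ by ring] at hb
      have htri := norm_sub_le (ℓ τ) e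
      rw [hA₂]; linarith
    have hFn : ‖F τ‖ = ‖e‖ * ‖γ τ - γ 0‖^(j+1) * ‖ℓ τ - e‖ := by
      simp only [hF]; rw [norm_mul, norm_mul, norm_pow]
    rw [hFn]
    calc ‖e‖ * ‖γ τ - γ 0‖^(j+1) * ‖ℓ τ - e‖
        ≤ ‖e‖ * (M * (2*π - τ))^(j+1) * (A₂ + K₂ * (-Real.log (2*π - τ))) := by
          apply mul_le_mul
            (mul_le_mul le_rfl (pow_le_pow_left₀ (norm_nonneg _) h1 (j+1))
              (pow_nonneg (norm_nonneg _) _) (norm_nonneg _))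
            h2 (norm_nonneg _)
            (mul_nonneg (norm_nonneg _)
              (pow_nonneg (mul_nonneg hMnn (by linarith [hτ.2])) _))
      _ = ‖e‖ * M^(j+1) * ((2*π - τ)^(j+1) * (A₂ + K₂ * (-Real.log (2*π - τ)))) := by
          rw [mul_pow]; ring
  have hFTC := integral_eq_sub_of_hasDerivAt_of_tendsto h2π hFd hint hlim0 hlim2
  rw [hFTC, sub_zero]
end

section
/- Let N ≥ 1, let γ : ℝ → ℂ be 2π-periodic, N-times continuously differentiable, with deriv γ t ≠ 0 for all t and γ injective on [0, 2π), and let φ̃ : ℝ → ℂ be 2π-periodic and N-times continuously differentiable. Fix t ∈ ℝ, set z := γ(t), let P be the N-th order density interpolant of φ̃ at z, and assume the half-residue property lim_{ε→0⁺} ∫_{t+ε}^{t+2π−ε} γ'(τ)/(γ(τ) − z) dτ = πi. Define g : ℝ → ℂ by g(τ) = (φ̃(τ) − P(γ(τ)))·γ'(τ)/(γ(τ) − z) for τ ∉ t + 2πℤ and g(τ) = 0 for τ ∈ t + 2πℤ. Then g is continuous at t, integrable on [t, t+2π], and lim_{ε→0⁺} (1/(πi)) ∫_{t+ε}^{t+2π−ε}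 φ̃(τ)·γ'(τ)/(γ(τ) − z) dτ = (1/(πi)) ∫_{t}^{t+2π} g(τ) dτ + φ̃(t). (Equation (2.14) of the paper: regularized representation of the principal-value Cauchy integral Hφ.) -/
open intervalIntegral Real Filter Topology MeasureTheory

set_option maxHeartbeats 1000000 in
/-- **Regularized representation of the principal-value Cauchy integral `Hφ`**
(equation (2.14) of the paper): with `P` the `N`-th order density interpolant of `φ̃` at
`z = γ(t)` and assuming the half-residue property, the regularized integrand `g` is
continuous at `t`, integrable, and
`lim_{ε→0⁺} (1/(πi)) ∫_{t+ε}^{t+2π−ε} φ̃(τ)γ'(τ)/(γ(τ) − z) dτ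
  = (1/(πi)) ∫_t^{t+2π} g(τ) dτ + φ̃(t)`. -/
theorem principal_value_regularized
    (N : ℕ) (hN : 1 ≤ N)
    (γ : ℝ → ℂ) (hper : Function.Periodic γ (2 * π))
    (hγ : ContDiff ℝ N γ) (hreg : ∀ τ : ℝ, deriv γ τ ≠ 0)
    (hinj : Set.InjOn γ (Set.Ico 0 (2 * π)))
    (φ : ℝ → ℂ) (hφper : Function.Periodic φ (2 * π)) (hφ : ContDiff ℝ N φ)
    (t : ℝ) (z : ℂ) (hz : z = γ t)
    (P : Polynomial ℂ) (hPdeg : P.natDegree ≤ N)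
    (hinterp : ∀ m : ℕ, m ≤ N →
      iteratedDeriv m (fun τ : ℝ => φ τ - P.eval (γ τ)) t = 0)
    (hhalf : Tendsto
      (fun ε : ℝ => ∫ τ in (t + ε)..(t + 2 * π - ε), deriv γ τ / (γ τ - z))
      (𝓝[>] 0) (𝓝 ((π : ℂ) * Complex.I)))
    (g : ℝ → ℂ)
    (hg : ∀ τ : ℝ, (¬ ∃ k : ℤ, τ = t + 2 * π * k) →
      g τ = (φ τ - P.eval (γ τ)) * deriv γ τ / (γ τ - z))
    (hg0 : ∀ τ : ℝ, (∃ k : ℤ, τ = t + 2 * π * k) → g τ = 0) :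
    ContinuousAt g t ∧
    IntervalIntegrable g volume t (t + 2 * π) ∧
    Tendsto
      (fun ε : ℝ =>
        (1 / ((π : ℂ) * Complex.I)) *
          ∫ τ in (t + ε)..(t + 2 * π - ε), φ τ * deriv γ τ / (γ τ - z))
      (𝓝[>] 0)
      (𝓝 ((1 / ((π : ℂ) * Complex.I)) * (∫ τ in t..(t + 2 * π), g τ) + φ t)) := by
  have h2π : (0:ℝ) < 2 * π := Real.two_pi_pos
  have hN' : (1 : WithTop ℕ∞) ≤ (N : WithTop ℕ∞) := by exact_mod_cast hN
  set hfun : ℝ → ℂ := fun τ : ℝ => φ τ - P.eval (γ τ) with hfun_def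
  -- lattice characterization
  have hlat : ∀ τ : ℝ, γ τ = γ t ↔ ∃ k : ℤ, τ = t + 2 * π * k := by
    intro τ
    constructor
    · intro hτ
      have h1 : toIcoMod h2π 0 τ ∈ Set.Ico 0 (2*π) := toIcoMod_mem_Ico' h2π τ
      have h2 : toIcoMod h2π 0 t ∈ Set.Ico 0 (2*π) := toIcoMod_mem_Ico' h2π t
      have e1 : γ (toIcoMod h2π 0 τ) = γ τ := by
        rw [toIcoMod]; exact hper.sub_zsmul_eq _
      have e2 : γ (toIcoMod h2π 0 t) = γ t := by
        rw [toIcoMod]; exact hper.sub_zsmul_eq _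
      have heq : toIcoMod h2π 0 τ = toIcoMod h2π 0 t := hinj h1 h2 (by rw [e1, e2, hτ])
      refine ⟨toIcoDiv h2π 0 τ - toIcoDiv h2π 0 t, ?_⟩
      have d1 := self_sub_toIcoMod h2π 0 τ
      have d2 := self_sub_toIcoMod h2π 0 t
      rw [heq] at d1
      have : τ - t = (toIcoDiv h2π 0 τ - toIcoDiv h2π 0 t) • (2*π) := by
        rw [sub_zsmul]; linarith [d1, d2]
      rw [zsmul_eq_mul] at this
      push_cast at this ⊢
      linarith
    · rintro ⟨k, rfl⟩
      have := (hper.int_mul k) t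
      rw [show t + 2 * π * (k:ℝ) = t + (k:ℝ) * (2*π) by ring]
      exact this
  have hne : ∀ τ : ℝ, (¬ ∃ k : ℤ, τ = t + 2 * π * k) → γ τ - z ≠ 0 := by
    intro τ hτ
    rw [hz, sub_ne_zero]
    exact fun hc => hτ ((hlat τ).mp hc)
  have nonlat : ∀ (m : ℤ) (τ : ℝ), t + 2*π*m < τ → τ < t + 2*π*(m+1) →
      ¬ ∃ k : ℤ, τ = t + 2 * π * k := by
    rintro m τ h1 h2 ⟨k, rfl⟩
    have hk1 : (m:ℝ) < k := by nlinarith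
    have hk2 : (k:ℝ) < m + 1 := by nlinarith
    have : m < k := by exact_mod_cast hk1
    have : k < m + 1 := by exact_mod_cast hk2
    omega
  -- basic differentiability
  have hγd : ∀ x : ℝ, HasDerivAt γ (deriv γ x) x := fun x =>
    ((hγ.differentiable (by exact_mod_cast (show N ≠ 0 by omega))) x).hasDerivAt
  have hdc : Continuous (deriv γ) := hγ.continuous_deriv hN'
  have hPγd : ∀ x : ℝ, DifferentiableAt ℝ (fun τ : ℝ => P.eval (γ τ)) x := by
    intro x
    have := (P.hasDerivAt (γ x)).comp x (hγd x)
    simpa [Function.comp_def] using this.differentiableAt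
  have hfd : ∀ x : ℝ, HasDerivAt hfun (deriv hfun x) x := fun x =>
    (((hφ.differentiable (by exact_mod_cast (show N ≠ 0 by omega))) x).sub (hPγd x)).hasDerivAt
  -- periodicity of hfun and its derivative
  have hhper : Function.Periodic hfun (2*π) := fun x => by
    simp only [hfun_def, hφper x, hper x]
  have hdper : Function.Periodic (deriv hfun) (2*π) := by
    intro x
    have he : (fun y : ℝ => hfun (y + 2*π)) = hfun := funext fun y => hhper y
    rw [← deriv_comp_add_const hfun (2*π) x, he]
  have h00 : hfun t = 0 := by simpa using hinterp 0 (Nat.zero_le N)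
  have h10 : deriv hfun t = 0 := by
    have := hinterp 1 hN; rwa [iteratedDeriv_one] at this
  -- continuity at lattice points
  have hcontlat : ∀ s : ℝ, (∃ k : ℤ, s = t + 2*π*k) → ContinuousAt g s := by
    rintro s hs
    obtain ⟨k, hk⟩ := hs
    have hγs : γ s = z := by rw [hz]; exact (hlat s).mpr ⟨k, hk⟩
    have hsper : ∀ (f : ℝ → ℂ), Function.Periodic f (2*π) → f s = f t := by
      intro f hf
      rw [hk, show t + 2 * π * (k:ℝ) = t + (k:ℝ) * (2*π) by ring]
      exact (hf.int_mul k) t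
    have hs0 : hfun s = 0 := by rw [hsper hfun hhper, h00]
    have hds : deriv hfun s = 0 := by rw [hsper _ hdper, h10]
    have hslope1 : Tendsto (slope hfun s) (𝓝[≠] s) (𝓝 0) := by
      have := hasDerivAt_iff_tendsto_slope.mp (hfd s); rwa [hds] at this
    have hslope2 : Tendsto (fun τ => (slope γ s τ)⁻¹) (𝓝[≠] s) (𝓝 (deriv γ s)⁻¹) :=
      (hasDerivAt_iff_tendsto_slope.mp (hγd s)).inv₀ (hreg s)
    have hlim : Tendsto (fun τ => slope hfun s τ * (slope γ s τ)⁻¹ * deriv γ τ)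
        (𝓝[≠] s) (𝓝 (0 * (deriv γ s)⁻¹ * deriv γ s)) :=
      (hslope1.mul hslope2).mul (hdc.continuousAt.tendsto.mono_left nhdsWithin_le_nhds)
    have hev : ∀ᶠ τ in 𝓝[≠] s, g τ = slope hfun s τ * (slope γ s τ)⁻¹ * deriv γ τ := by
      have hball : Set.Ioo (s - 2*π) (s + 2*π) ∈ 𝓝[≠] s :=
        mem_nhdsWithin_of_mem_nhds (Ioo_mem_nhds (by linarith) (by linarith))
      filter_upwards [hball, self_mem_nhdsWithin] with τ hτ hτne
      have hτne' : τ ≠ s := hτne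
      have hnl : ¬ ∃ j : ℤ, τ = t + 2 * π * j := by
        rintro ⟨j, hj⟩
        have hne2 : j ≠ k := by
          intro h; apply hτne'; rw [hj, hk, h]
        have : τ - s = 2*π*((j:ℝ) - k) := by rw [hj, hk]; ring
        have h1 : -(2*π) < 2*π*((j:ℝ)-k) := by rw [← this]; linarith [hτ.1]
        have h2 : 2*π*((j:ℝ)-k) < 2*π := by rw [← this]; linarith [hτ.2]
        have hj1 : (-1:ℝ) < (j:ℝ) - k := by nlinarith
        have hj2 : ((j:ℝ) - k) < 1 := by nlinarith
        have hj1' : (-1:ℤ) < j - k := by exact_mod_cast hj1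
        have hj2' : (j - k : ℤ) < 1 := by exact_mod_cast hj2
        omega
      have hw : γ τ - z ≠ 0 := hne τ hnl
      have hr : (τ - s : ℝ) ≠ 0 := sub_ne_zero.mpr hτne'
      have hrC : ((τ - s : ℝ) : ℂ) ≠ 0 := Complex.ofReal_ne_zero.mpr hr
      rw [hg τ hnl]
      have e1 : slope hfun s τ = ((τ - s : ℝ) : ℂ)⁻¹ * (φ τ - Polynomial.eval (γ τ) P) := by
        rw [slope_def_module, hs0, sub_zero, Complex.real_smul, Complex.ofReal_inv]
      have e2 : slope γ s τ = ((τ - s : ℝ) : ℂ)⁻¹ * (γ τ - z) := by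
        rw [slope_def_module, hγs, Complex.real_smul, Complex.ofReal_inv]
      rw [e1, e2, mul_inv, inv_inv]
      have hrC2 : ((τ:ℂ) - (s:ℂ)) ≠ 0 := by
        rw [← Complex.ofReal_sub]; exact hrC
      field_simp
      try rw [eq_div_iff (mul_ne_zero hrC2 hw)]
      try ring
    have h0lim : Tendsto g (𝓝[≠] s) (𝓝 0) := by
      have := hlim.congr' (hev.mono fun τ hτ => hτ.symm)
      simpa using this
    have hgs : g s = 0 := hg0 s ⟨k, hk⟩
    have : Tendsto g (𝓝 s) (𝓝 0) := by
      rw [← nhdsNE_sup_pure s]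
      refine Filter.tendsto_sup.mpr ⟨h0lim, ?_⟩
      have := tendsto_pure_nhds g s
      rwa [hgs] at this
    rw [ContinuousAt, hgs]; exact this
  -- global continuity
  have hcontg : Continuous g := by
    rw [continuous_iff_continuousAt]
    intro s
    by_cases hs : ∃ k : ℤ, s = t + 2*π*k
    · exact hcontlat s hs
    · set m : ℤ := ⌊(s - t)/(2*π)⌋ with hm_def
      have hm1 : t + 2*π*m < s := by
        have h1 : (m:ℝ) ≤ (s - t)/(2*π) := Int.floor_le _
        have h1'' : (m:ℝ) * (2*π) ≤ s - t := (le_div_iff₀ h2π).mp h1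
        have h1' : t + 2*π*m ≤ s := by nlinarith
        rcases lt_or_eq_of_le h1' with h | h
        · exact h
        · exact absurd ⟨m, h.symm⟩ hs
      have hm2 : s < t + 2*π*(m+1) := by
        have h1 := Int.lt_floor_add_one ((s - t)/(2*π))
        have h1' : s - t < ((m:ℝ) + 1) * (2*π) := (div_lt_iff₀ h2π).mp h1
        push_cast
        nlinarith
      have hU : Set.Ioo (t+2*π*m) (t+2*π*(m+1)) ∈ 𝓝 s := Ioo_mem_nhds hm1 hm2
      have hfc : ContinuousAt (fun τ => (φ τ - P.eval (γ τ)) * deriv γ τ / (γ τ - z)) s := by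
        refine ContinuousAt.div ?_ ?_ (hne s hs)
        · exact (((hφ.continuous).sub ((P.continuous).comp hγ.continuous)).mul hdc).continuousAt
        · exact ((hγ.continuous).sub continuous_const).continuousAt
      refine hfc.congr ?_
      refine Filter.eventuallyEq_of_mem hU fun τ hτ => ?_
      exact (hg τ (by push_cast; exact nonlat m τ hτ.1 (by push_cast at hτ ⊢; exact hτ.2))).symm
  have hint : IntervalIntegrable g volume t (t + 2 * π) := hcontg.intervalIntegrable _ _
  refine ⟨hcontlat t ⟨0, by simp⟩, hint, ?_⟩
  -- the polynomial Q and its antiderivative R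
  set Q : Polynomial ℂ := (P - Polynomial.C (P.eval z)) /ₘ (Polynomial.X - Polynomial.C z)
    with hQ_def
  have hQ : ∀ w : ℂ, P.eval w - P.eval z = (w - z) * Q.eval w := by
    intro w
    have hroot : (P - Polynomial.C (P.eval z)).IsRoot z := by
      simp [Polynomial.IsRoot]
    have := (Polynomial.mul_divByMonic_eq_iff_isRoot
      (p := P - Polynomial.C (P.eval z)) (a := z)).mpr hroot
    have := congrArg (Polynomial.eval w) this
    simp only [Polynomial.eval_mul, Polynomial.eval_sub, Polynomial.eval_X,
      Polynomial.eval_C] at this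
    exact this.symm
  -- antiderivative R of Q
  set R : Polynomial ℂ := Q.sum (fun n a => Polynomial.C (a / (n+1)) * Polynomial.X^(n+1))
    with hR_def
  have hRQ : R.derivative = Q := by
    rw [hR_def, Polynomial.sum_def, map_sum]
    have hterm : ∀ n ∈ Q.support,
        Polynomial.derivative (Polynomial.C (Q.coeff n / (n+1)) * Polynomial.X^(n+1))
          = Polynomial.C (Q.coeff n) * Polynomial.X^n := by
      intro n _
      rw [Polynomial.derivative_C_mul, Polynomial.derivative_X_pow, ← mul_assoc,
        ← Polynomial.C_mul]
      have hne0 : ((n:ℂ) + 1) ≠ 0 := Nat.cast_add_one_ne_zero n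
      push_cast
      rw [div_mul_cancel₀ _ hne0]
    rw [Finset.sum_congr rfl hterm]
    have h2 := Polynomial.sum_C_mul_X_pow_eq Q
    rwa [Polynomial.sum_def] at h2
  have hRd : ∀ x : ℝ, HasDerivAt (fun τ : ℝ => Polynomial.eval (γ τ) R)
      (Polynomial.eval (γ x) Q * deriv γ x) x := by
    intro x
    have h1 := R.hasDerivAt (γ x)
    rw [hRQ] at h1
    have := h1.comp x (hγd x)
    simpa [Function.comp_def] using this
  set F : ℝ → ℂ := fun x => ∫ τ in t..x, g τ with hF_def
  have hFc : Continuous F :=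
    intervalIntegral.continuous_primitive (fun a b => hcontg.intervalIntegrable a b) t
  have key : ∀ ε ∈ Set.Ioo (0:ℝ) π,
      (∫ τ in (t+ε)..(t+2*π-ε), φ τ * deriv γ τ / (γ τ - z))
        = (F (t+2*π-ε) - F (t+ε))
          + (Polynomial.eval (γ (t+2*π-ε)) R - Polynomial.eval (γ (t+ε)) R)
          + Polynomial.eval z P * ∫ τ in (t+ε)..(t+2*π-ε), deriv γ τ / (γ τ - z) := by
    intro ε hε
    obtain ⟨hε0, hεπ⟩ := hε
    have hπ := Real.pi_pos
    have hle : t + ε ≤ t + 2*π - ε := by linarith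
    have hmem : ∀ τ ∈ Set.uIcc (t+ε) (t+2*π-ε), ¬ ∃ k : ℤ, τ = t + 2*π*k := by
      rw [Set.uIcc_of_le hle]
      intro τ hτ
      refine nonlat 0 τ ?_ ?_
      · push_cast; linarith [hτ.1]
      · push_cast; linarith [hτ.2]
    have hw : ∀ τ ∈ Set.uIcc (t+ε) (t+2*π-ε), γ τ - z ≠ 0 := fun τ hτ => hne τ (hmem τ hτ)
    have hi1 : IntervalIntegrable g volume (t+ε) (t+2*π-ε) := hcontg.intervalIntegrable _ _
    have hi2 : IntervalIntegrable (fun τ => Polynomial.eval (γ τ) Q * deriv γ τ)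
        volume (t+ε) (t+2*π-ε) :=
      ((Q.continuous.comp hγ.continuous).mul hdc).intervalIntegrable _ _
    have hi3 : IntervalIntegrable (fun τ => deriv γ τ / (γ τ - z)) volume (t+ε) (t+2*π-ε) := by
      apply ContinuousOn.intervalIntegrable
      exact ContinuousOn.div hdc.continuousOn
        ((hγ.continuous.sub continuous_const).continuousOn) hw
    have hi3' : IntervalIntegrable (fun τ => Polynomial.eval z P * (deriv γ τ / (γ τ - z)))
        volume (t+ε) (t+2*π-ε) := hi3.const_mul _
    have hptwise : Set.EqOn (fun τ => φ τ * deriv γ τ / (γ τ - z))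
        (fun τ => g τ + (Polynomial.eval (γ τ) Q * deriv γ τ
          + Polynomial.eval z P * (deriv γ τ / (γ τ - z))))
        (Set.uIcc (t+ε) (t+2*π-ε)) := by
      intro τ hτ
      have hwτ := hw τ hτ
      have hgτ := hg τ (hmem τ hτ)
      simp only
      rw [hgτ]
      have hQτ := hQ (γ τ)
      field_simp
      linear_combination (deriv γ τ) * hQτ
    have e_g : (∫ τ in (t+ε)..(t+2*π-ε), g τ) = F (t+2*π-ε) - F (t+ε) :=
      (intervalIntegral.integral_interval_sub_left
        (hcontg.intervalIntegrable t _) (hcontg.intervalIntegrable t _)).symm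
    have e_R : (∫ τ in (t+ε)..(t+2*π-ε), Polynomial.eval (γ τ) Q * deriv γ τ)
        = Polynomial.eval (γ (t+2*π-ε)) R - Polynomial.eval (γ (t+ε)) R :=
      intervalIntegral.integral_eq_sub_of_hasDerivAt (fun x _ => hRd x) hi2
    rw [intervalIntegral.integral_congr hptwise,
      intervalIntegral.integral_add hi1 (hi2.add hi3'),
      intervalIntegral.integral_add hi2 hi3',
      intervalIntegral.integral_const_mul, e_g, e_R]
    ring
  have c1 : Continuous (fun ε : ℝ => t + 2*π - ε) := continuous_const.sub continuous_id
  have c2 : Continuous (fun ε : ℝ => t + ε) := continuous_const.add continuous_id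
  have t1 : Tendsto (fun ε : ℝ => F (t+2*π-ε) - F (t+ε)) (𝓝 0) (𝓝 (F (t+2*π) - F t)) := by
    have := ((hFc.comp c1).sub (hFc.comp c2)).tendsto 0
    simpa [Function.comp_def, Pi.sub_def] using this
  have t2 : Tendsto (fun ε : ℝ => Polynomial.eval (γ (t+2*π-ε)) R - Polynomial.eval (γ (t+ε)) R)
      (𝓝 0) (𝓝 (Polynomial.eval (γ (t+2*π)) R - Polynomial.eval (γ t) R)) := by
    have := (((R.continuous.comp hγ.continuous).comp c1).sub
      ((R.continuous.comp hγ.continuous).comp c2)).tendsto 0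
    simpa [Function.comp_def, Pi.sub_def] using this
  have hcts : Tendsto (fun ε : ℝ => (F (t+2*π-ε) - F (t+ε))
      + (Polynomial.eval (γ (t+2*π-ε)) R - Polynomial.eval (γ (t+ε)) R)
      + Polynomial.eval z P * ∫ τ in (t+ε)..(t+2*π-ε), deriv γ τ / (γ τ - z)) (𝓝[>] 0)
      (𝓝 ((F (t+2*π) - F t) + (Polynomial.eval (γ (t+2*π)) R - Polynomial.eval (γ t) R)
        + Polynomial.eval z P * ((π:ℂ)*Complex.I))) :=
    ((t1.mono_left nhdsWithin_le_nhds).add (t2.mono_left nhdsWithin_le_nhds)).add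
      (hhalf.const_mul _)
  have hEq : ∀ᶠ ε in 𝓝[>] (0:ℝ),
      ((F (t+2*π-ε) - F (t+ε))
        + (Polynomial.eval (γ (t+2*π-ε)) R - Polynomial.eval (γ (t+ε)) R)
        + Polynomial.eval z P * ∫ τ in (t+ε)..(t+2*π-ε), deriv γ τ / (γ τ - z))
      = (∫ τ in (t+ε)..(t+2*π-ε), φ τ * deriv γ τ / (γ τ - z)) := by
    filter_upwards [Ioo_mem_nhdsGT_of_mem (Set.mem_Ico.mpr ⟨le_refl 0, Real.pi_pos⟩)] with ε hε
    exact (key ε hε).symm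
  have hmain := hcts.congr' hEq
  have hπi : ((π:ℂ) * Complex.I) ≠ 0 :=
    mul_ne_zero (Complex.ofReal_ne_zero.mpr Real.pi_ne_zero) Complex.I_ne_zero
  have hPz : Polynomial.eval z P = φ t := by
    rw [hz]; exact (sub_eq_zero.mp h00).symm
  have hFt : F t = 0 := intervalIntegral.integral_same
  have hγper : γ (t + 2*π) = γ t := hper t
  have hfin := hmain.const_mul (1 / ((π:ℂ)*Complex.I))
  have hval : (1 / ((π:ℂ)*Complex.I)) * ((F (t+2*π) - F t)
      + (Polynomial.eval (γ (t+2*π)) R - Polynomial.eval (γ t) R)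
      + Polynomial.eval z P * ((π:ℂ)*Complex.I))
      = (1 / ((π:ℂ)*Complex.I)) * (∫ τ in t..(t+2*π), g τ) + φ t := by
    rw [hγper, hFt, hPz]
    have hF2 : F (t+2*π) = ∫ τ in t..(t+2*π), g τ := rfl
    rw [hF2]
    field_simp
    ring
  rw [← hval]
  exact hfin
end
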